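/- arXiv:1808.02100 — 4 statements merged into one kernel-verified Lean document; each statement's English description precedes it below -/
import Mathlib

section
/- The n-th moment of the arcsine law on [-2,2] (density 1/(π√(4-t²))) equals binomial(n, n/2) for n even and 0 for n odd. -/
/-!
Substituting `t = 2 cos θ` turns the arcsine law into the uniform distribution of `θ` on
`[0, π]`, so the `n`-th moment is `2ⁿ/π · ∫₀^π cosⁿ θ dθ`. The reduction formula for these
integrals gives `0` for odd `n` and `π · C(2m, m) / 4ᵐ` for `n = 2m`.
-/

open Real MeasureTheory Set

lemma image_mul_cos_Ioo {r : ℝ} (hr : 0 < r) :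
    (fun θ => r * cos θ) '' Ioo 0 π = Ioo (-r) r := by
  ext t
  constructor
  · rintro ⟨θ, ⟨h0, hπ⟩, rfl⟩
    have hlt : cos θ < 1 := by
      simpa using cos_lt_cos_of_nonneg_of_le_pi le_rfl hπ.le h0
    have hgt : -1 < cos θ := by
      simpa using cos_lt_cos_of_nonneg_of_le_pi h0.le le_rfl hπ
    constructor <;> nlinarith
  · rintro ⟨h1, h2⟩
    have h1' : -1 < t / r := by rwa [lt_div_iff₀ hr, neg_one_mul]
    have h2' : t / r < 1 := by rwa [div_lt_one hr]
    refine ⟨arccos (t / r), ⟨arccos_pos.2 h2', arccos_lt_pi.2 h1'⟩, ?_⟩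
    simp only [cos_arccos h1'.le h2'.le]
    field_simp

-- The change of variables formula for injective maps needs no integrability of `g`.
theorem integral_div_sqrt_sq_sub_sq_eq_integral_mul_cos {r : ℝ} (hr : 0 < r) (g : ℝ → ℝ) :
    ∫ t in (-r)..r, g t / √(r ^ 2 - t ^ 2) = ∫ θ in 0..π, g (r * cos θ) := by
  have hinj : InjOn (fun θ => r * cos θ) (Ioo 0 π) :=
    (mul_right_injective₀ hr.ne').comp_injOn (injOn_cos.mono Ioo_subset_Icc_self)
  rw [intervalIntegral.integral_of_le (by linarith), integral_Ioc_eq_integral_Ioo,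
    intervalIntegral.integral_of_le pi_pos.le, integral_Ioc_eq_integral_Ioo,
    ← image_mul_cos_Ioo hr,
    integral_image_eq_integral_abs_deriv_smul measurableSet_Ioo
      (fun θ _ => ((hasDerivAt_cos θ).const_mul r).hasDerivWithinAt) hinj]
  refine setIntegral_congr_fun measurableSet_Ioo fun θ ⟨h0, hπ⟩ => ?_
  have hsin : 0 < r * sin θ := mul_pos hr (sin_pos_of_pos_of_lt_pi h0 hπ)
  have hsqrt : √(r ^ 2 - (r * cos θ) ^ 2) = r * sin θ := by
    rw [← sqrt_sq hsin.le]
    congr 1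
    linear_combination -r ^ 2 * sin_sq_add_cos_sq θ
  rw [hsqrt, mul_neg, abs_neg, abs_of_pos hsin, smul_eq_mul, mul_div_cancel₀ _ hsin.ne']

theorem integral_cos_pow_odd_zero_pi (m : ℕ) : ∫ θ in 0..π, cos θ ^ (2 * m + 1) = 0 := by
  induction m with
  | zero => simp
  | succ m ih => rw [show 2 * (m + 1) + 1 = 2 * m + 1 + 2 by ring, integral_cos_pow, ih]; simp

theorem integral_cos_pow_even_zero_pi (m : ℕ) :
    ∫ θ in 0..π, cos θ ^ (2 * m) = π * m.centralBinom / 4 ^ m := by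
  induction m with
  | zero => simp
  | succ m ih =>
    have hrec : ((m : ℝ) + 1) * (m + 1).centralBinom = 2 * (2 * m + 1) * m.centralBinom := by
      exact_mod_cast Nat.succ_mul_centralBinom_succ m
    rw [show 2 * (m + 1) = 2 * m + 2 by ring, integral_cos_pow, ih, sin_pi, sin_zero, pow_succ]
    push_cast
    field_simp
    linear_combination (-2 * π * 4 ^ m) * hrec

/-- The n-th moment of the arcsine law on [-2,2] (density 1/(π√(4-t²)))
is C(n, n/2) for n even and 0 for n odd. -/
theorem stmt_2 (n : ℕ) :
    (∫ t in (-2 : ℝ)..2, t ^ n / (Real.pi * Real.sqrt (4 - t ^ 2)))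
      = if Even n then (n.choose (n / 2) : ℝ) else 0 := by
  have hsub : ∫ t in (-2 : ℝ)..2, t ^ n / (π * √(4 - t ^ 2))
      = 2 ^ n / π * ∫ θ in 0..π, cos θ ^ n := by
    simp_rw [mul_comm π, ← div_div, intervalIntegral.integral_div]
    rw [show (4 : ℝ) = 2 ^ 2 by norm_num, integral_div_sqrt_sq_sub_sq_eq_integral_mul_cos two_pos]
    simp only [mul_pow, intervalIntegral.integral_const_mul]
    ring
  rw [hsub]
  rcases Nat.even_or_odd' n with ⟨m, rfl | rfl⟩
  · rw [if_pos (even_two_mul m), integral_cos_pow_even_zero_pi, Nat.mul_div_cancel_left m two_pos,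
      ← Nat.centralBinom_eq_two_mul_choose, pow_mul]
    norm_num
  · rw [if_neg (Nat.not_even_two_mul_add_one m), integral_cos_pow_odd_zero_pi, mul_zero]
end

section
/- For all even n, ∫_{-2}^{2} tⁿ · (1/2)·( (δ_{-2}+δ_2)/2 - arcsine density ) dt, i.e. the difference (2ⁿ - ∫_{-2}^2 tⁿ/(π√(4-t²)) dt)/2, equals the number of non-crossing half-pairings of [n], which is ∑_{k=1}^{n/2} binomial(n, n/2 - k). -/
/-- `P` is a partition of `Fin n` into nonempty blocks. -/
def IsPartition {n : ℕ} (P : Finset (Finset (Fin n))) : Prop :=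
  (∀ B ∈ P, B.Nonempty) ∧ ∀ x : Fin n, ∃! B, B ∈ P ∧ x ∈ B

/-- `P` is non-crossing: there are no `a < b < c < d` with `a, c` in one block and
`b, d` in a different block. -/
def IsNonCrossing {n : ℕ} (P : Finset (Finset (Fin n))) : Prop :=
  ∀ B₁ ∈ P, ∀ B₂ ∈ P, ∀ a ∈ B₁, ∀ b ∈ B₂, ∀ c ∈ B₁, ∀ d ∈ B₂,
    a < b → b < c → c < d → B₁ = B₂

/-- `(P, V)` is a non-crossing half-pairing of `[n]`: `P` is a non-crossing partition,
`V ∈ P` has even size, and all other blocks of `P` have exactly 2 elements. -/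
def IsHalfPairing {n : ℕ} (P : Finset (Finset (Fin n))) (V : Finset (Fin n)) : Prop :=
  IsPartition P ∧ IsNonCrossing P ∧ V ∈ P ∧ Even V.card ∧
    ∀ B ∈ P, B ≠ V → B.card = 2


open Real MeasureTheory Set intervalIntegral

lemma prod_ratio (m : ℕ) : (∏ i ∈ Finset.range m, (2 * (i:ℝ) + 1) / (2 * i + 2))
    = (Nat.centralBinom m : ℝ) / 4 ^ m := by
  induction m with
  | zero => simp [Nat.centralBinom_zero]
  | succ k ih =>
    rw [Finset.prod_range_succ, ih]
    have h := Nat.succ_mul_centralBinom_succ k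
    have h' : ((k:ℝ) + 1) * (Nat.centralBinom (k+1) : ℝ) = 2 * (2 * k + 1) * Nat.centralBinom k := by
      exact_mod_cast h
    have hk : ((k:ℝ) + 1) ≠ 0 := by positivity
    field_simp
    linear_combination (-2 * (4:ℝ)^k) * h'

lemma img : (fun θ : ℝ => 2 * Real.sin θ) '' Set.Ioo (-(π/2)) (π/2) = Set.Ioo (-2 : ℝ) 2 := by
  ext y
  constructor
  · rintro ⟨θ, hθ, rfl⟩
    have h1 : Real.sin θ < 1 := by
      have := Real.strictMonoOn_sin (Set.mem_Icc.2 ⟨hθ.1.le, hθ.2.le⟩)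
        (Set.mem_Icc.2 ⟨by linarith [Real.pi_pos], le_refl _⟩) hθ.2
      simpa using this
    have h2 : -1 < Real.sin θ := by
      have := Real.strictMonoOn_sin (Set.mem_Icc.2 ⟨le_refl _, by linarith [Real.pi_pos]⟩)
        (Set.mem_Icc.2 ⟨hθ.1.le, hθ.2.le⟩) hθ.1
      simpa using this
    exact ⟨show (-2:ℝ) < 2 * Real.sin θ by nlinarith, show 2 * Real.sin θ < 2 by nlinarith⟩
  · intro hy
    refine ⟨Real.arcsin (y / 2), ⟨?_, ?_⟩, ?_⟩
    · exact Real.neg_pi_div_two_lt_arcsin.2 (by linarith [hy.1])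
    · exact Real.arcsin_lt_pi_div_two.2 (by linarith [hy.2])
    · show 2 * Real.sin (Real.arcsin (y/2)) = y
      rw [Real.sin_arcsin (by linarith [hy.1]) (by linarith [hy.2])]; ring



lemma sin_pow_interval (m : ℕ) :
    (∫ x in (-(π/2))..(π/2), Real.sin x ^ (2*m)) = ∫ x in (0:ℝ)..π, Real.sin x ^ (2*m) := by
  have c : Continuous fun x : ℝ => Real.sin x ^ (2*m) := continuous_sin.pow _
  have L : IntervalIntegrable (fun x : ℝ => Real.sin x ^ (2*m)) volume (-(π/2)) 0 :=
    c.intervalIntegrable _ _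
  have R : IntervalIntegrable (fun x : ℝ => Real.sin x ^ (2*m)) volume 0 (π/2) :=
    c.intervalIntegrable _ _
  rw [← intervalIntegral.integral_add_adjacent_intervals L R]
  have h1 : (∫ x in (-(π/2))..(0:ℝ), Real.sin x ^ (2*m)) = ∫ x in (0:ℝ)..(π/2), Real.sin x ^ (2*m) := by
    rw [show (0:ℝ) = -0 by norm_num, ← intervalIntegral.integral_comp_neg (fun x => Real.sin x ^ (2*m))]
    rw [neg_zero]
    apply intervalIntegral.integral_congr
    intro x _
    simp only [Real.sin_neg]
    exact ((even_two_mul m).neg_pow _)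
  have h2 : (∫ x in (0:ℝ)..(π/2), Real.sin x ^ (2*m)) = ∫ x in (0:ℝ)..(π/2), Real.cos x ^ (2*m) := by
    have := intervalIntegral.integral_comp_sub_left (fun x => Real.cos x ^ (2*m)) (π/2)
      (a := 0) (b := π/2)
    simp only [sub_zero, sub_self] at this
    rw [← this]
    apply intervalIntegral.integral_congr
    intro x _
    simp [Real.cos_pi_div_two_sub]
  rw [h1, h2, EulerSine.integral_cos_pow_eq]
  ring

lemma arcsine_moment (m : ℕ) :
    (∫ t in (-2 : ℝ)..2, t ^ (2*m) / (Real.pi * Real.sqrt (4 - t ^ 2)))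
      = Nat.centralBinom m := by
  set g : ℝ → ℝ := fun t => t ^ (2*m) / (Real.pi * Real.sqrt (4 - t ^ 2)) with hg
  have pi_pos := Real.pi_pos
  have hinj : Set.InjOn (fun θ : ℝ => 2 * Real.sin θ) (Set.Ioo (-(π/2)) (π/2)) := by
    intro a ha b hb hab
    have : Real.sin a = Real.sin b := by
      have : 2 * Real.sin a = 2 * Real.sin b := hab
      linarith
    exact Real.injOn_sin (Set.mem_Icc.2 ⟨ha.1.le, ha.2.le⟩) (Set.mem_Icc.2 ⟨hb.1.le, hb.2.le⟩) this
  have step2 : (∫ t in Set.Ioo (-2:ℝ) 2, g t)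
      = ∫ θ in Set.Ioo (-(π/2)) (π/2), |2 * Real.cos θ| • g (2 * Real.sin θ) := by
    rw [← img]
    exact MeasureTheory.integral_image_eq_integral_abs_deriv_smul measurableSet_Ioo
      (fun x _ => ((Real.hasDerivAt_sin x).const_mul 2).hasDerivWithinAt) hinj g
  have step3 : (∫ θ in Set.Ioo (-(π/2)) (π/2), |2 * Real.cos θ| • g (2 * Real.sin θ))
      = ∫ θ in Set.Ioo (-(π/2)) (π/2), (2:ℝ)^(2*m) * Real.sin θ ^ (2*m) / π := by
    apply MeasureTheory.setIntegral_congr_fun measurableSet_Ioo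
    intro θ hθ
    have hc : 0 < Real.cos θ := Real.cos_pos_of_mem_Ioo hθ
    have hsq : 4 - (2 * Real.sin θ)^2 = (2 * Real.cos θ)^2 := by
      have := Real.sin_sq_add_cos_sq θ
      nlinarith
    have hsqrt : Real.sqrt (4 - (2 * Real.sin θ)^2) = 2 * Real.cos θ := by
      rw [hsq, Real.sqrt_sq (by linarith)]
    simp only [hg, smul_eq_mul]
    rw [hsqrt, abs_of_pos (by linarith)]
    have hπ : (π : ℝ) ≠ 0 := ne_of_gt pi_pos
    field_simp
    ring
  have step1 : (∫ t in (-2:ℝ)..2, g t) = ∫ t in Set.Ioo (-2:ℝ) 2, g t := by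
    rw [intervalIntegral.integral_of_le (by norm_num), MeasureTheory.integral_Ioc_eq_integral_Ioo]
  have step4 : (∫ θ in Set.Ioo (-(π/2)) (π/2), (2:ℝ)^(2*m) * Real.sin θ ^ (2*m) / π)
      = ∫ θ in (-(π/2))..(π/2), (2:ℝ)^(2*m) * Real.sin θ ^ (2*m) / π := by
    rw [intervalIntegral.integral_of_le (by linarith), MeasureTheory.integral_Ioc_eq_integral_Ioo]
  have step5 : (∫ θ in (-(π/2))..(π/2), (2:ℝ)^(2*m) * Real.sin θ ^ (2*m) / π)
      = (2:ℝ)^(2*m) / π * ∫ θ in (-(π/2))..(π/2), Real.sin θ ^ (2*m) := by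
    rw [← intervalIntegral.integral_const_mul]
    apply intervalIntegral.integral_congr
    intro x _
    ring
  rw [step1, step2, step3, step4, step5, sin_pow_interval, integral_sin_pow_even, prod_ratio]
  have hπ : (π : ℝ) ≠ 0 := ne_of_gt pi_pos
  have h4 : ((4:ℝ))^m = 2^(2*m) := by rw [pow_mul]; norm_num
  field_simp
  rw [h4]
  ring


lemma sum_choose_eq (N m : ℕ) :
    ∑ k ∈ Finset.Icc 1 m, N.choose (m - k) = ∑ j ∈ Finset.range m, N.choose j := by
  apply Finset.sum_nbij' (fun k => m - k) (fun j => m - j)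
  · intro k hk
    simp only [Finset.mem_Icc] at hk
    simp only [Finset.mem_range]
    omega
  · intro j hj
    simp only [Finset.mem_range] at hj
    simp only [Finset.mem_Icc]
    omega
  · intro k hk; simp only [Finset.mem_Icc] at hk; omega
  · intro j hj; simp only [Finset.mem_range] at hj; omega
  · intro k _; rfl

lemma two_pow_split (m : ℕ) :
    2 ^ (2*m) = Nat.centralBinom m + 2 * ∑ j ∈ Finset.range m, (2*m).choose j := by
  have h := Nat.sum_range_choose (2*m)
  have hsplit : Finset.range (2*m+1) = Finset.range m ∪ Finset.Ico m (2*m+1) := by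
    simp only [Finset.range_eq_Ico]
    rw [Finset.Ico_union_Ico_eq_Ico (by omega) (by omega)]
  have hdisj : Disjoint (Finset.range m) (Finset.Ico m (2*m+1)) := by
    simp [Finset.disjoint_left, Finset.mem_Ico, Finset.mem_range]
    omega
  have h2 : ∑ i ∈ Finset.range (2*m+1), (2*m).choose i
      = ∑ i ∈ Finset.range m, (2*m).choose i + ∑ i ∈ Finset.Ico m (2*m+1), (2*m).choose i := by
    rw [hsplit, Finset.sum_union hdisj]
  have h3 : ∑ i ∈ Finset.Ico m (2*m+1), (2*m).choose i
      = (2*m).choose m + ∑ i ∈ Finset.Ico (m+1) (2*m+1), (2*m).choose i := by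
    rw [Finset.sum_eq_sum_Ico_succ_bot (by omega)]
  have h4 : ∑ i ∈ Finset.Ico (m+1) (2*m+1), (2*m).choose i
      = ∑ j ∈ Finset.range m, (2*m).choose j := by
    apply Finset.sum_nbij' (fun i => 2*m - i) (fun j => 2*m - j)
    · intro i hi; simp only [Finset.mem_Ico] at hi; simp only [Finset.mem_range]; omega
    · intro j hj; simp only [Finset.mem_range] at hj; simp only [Finset.mem_Ico]; omega
    · intro i hi; simp only [Finset.mem_Ico] at hi; omega
    · intro j hj; simp only [Finset.mem_range] at hj; omega
    · intro i hi
      simp only [Finset.mem_Ico] at hi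
      exact (Nat.choose_symm (by omega)).symm
  rw [h2, h3, h4] at h
  rw [Nat.centralBinom]
  omega

namespace HPC

variable {n : ℕ}

def IsHP (A : Finset (Fin n)) (P : Finset (Finset (Fin n))) (V : Finset (Fin n)) : Prop :=
  (∀ B ∈ P, B.Nonempty) ∧ (∀ B ∈ P, B ⊆ A) ∧ (∀ x ∈ A, ∃! B, B ∈ P ∧ x ∈ B) ∧
  IsNonCrossing P ∧ V ∈ P ∧ Even V.card ∧ ∀ B ∈ P, B ≠ V → B.card = 2

def closerCond (V : Finset (Fin n)) (a b x : Fin n) : Prop :=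
  (x = a ∧ V ⊆ Finset.Ioo a b) ∨ (x = b ∧ ¬ V ⊆ Finset.Ioo a b)

open Classical in
noncomputable def Phi (P : Finset (Finset (Fin n))) (V : Finset (Fin n)) : Finset (Fin n) :=
  Finset.univ.filter (fun x => ∃ a b, a < b ∧ ({a, b} : Finset (Fin n)) ∈ P ∧
    ({a, b} : Finset (Fin n)) ≠ V ∧ closerCond V a b x)

lemma mem_Phi {P : Finset (Finset (Fin n))} {V : Finset (Fin n)} {x : Fin n} :
    x ∈ Phi P V ↔ ∃ a b, a < b ∧ ({a, b} : Finset (Fin n)) ∈ P ∧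
      ({a, b} : Finset (Fin n)) ≠ V ∧ closerCond V a b x := by
  classical
  simp [Phi]

lemma pair_eq_pair {a b c d : Fin n} (hab : a < b) (hcd : c < d)
    (h : ({a, b} : Finset (Fin n)) = {c, d}) : a = c ∧ b = d := by
  have ha : a ∈ ({c, d} : Finset (Fin n)) := h ▸ (Finset.mem_insert_self a {b})
  have hb : b ∈ ({c, d} : Finset (Fin n)) := h ▸ (by simp)
  simp only [Finset.mem_insert, Finset.mem_singleton] at ha hb
  rcases ha with rfl | rfl <;> rcases hb with rfl | rfl
  · exact absurd hab (lt_irrefl _)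
  · exact ⟨rfl, rfl⟩
  · exact absurd (hab.trans hcd) (lt_irrefl _)
  · exact absurd hab (lt_irrefl _)

section Structural

variable {A : Finset (Fin n)} {P : Finset (Finset (Fin n))} {V : Finset (Fin n)}

lemma IsHP.disj (hP : IsHP A P V) {B₁ B₂ : Finset (Fin n)} (h1 : B₁ ∈ P) (h2 : B₂ ∈ P)
    {x : Fin n} (hx1 : x ∈ B₁) (hx2 : x ∈ B₂) : B₁ = B₂ := by
  have hxA : x ∈ A := hP.2.1 B₁ h1 hx1
  obtain ⟨B, _, hu⟩ := hP.2.2.1 x hxA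
  rw [hu B₁ ⟨h1, hx1⟩, hu B₂ ⟨h2, hx2⟩]

lemma IsHP.pair (hP : IsHP A P V) {B : Finset (Fin n)} (hB : B ∈ P) (hBV : B ≠ V) :
    ∃ a b, a < b ∧ B = {a, b} := by
  have h2 : B.card = 2 := hP.2.2.2.2.2.2 B hB hBV
  obtain ⟨a, b, hab, rfl⟩ := Finset.card_eq_two.1 h2
  rcases lt_or_gt_of_ne hab with h | h
  · exact ⟨a, b, h, rfl⟩
  · exact ⟨b, a, h, Finset.pair_comm a b⟩

lemma IsHP.V_nonempty (hP : IsHP A P V) : V.Nonempty := hP.1 V hP.2.2.2.2.1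

lemma IsHP.V_subset (hP : IsHP A P V) : V ⊆ A := hP.2.1 V hP.2.2.2.2.1

lemma IsHP.phi_subset (hP : IsHP A P V) : Phi P V ⊆ A := by
  intro x hx
  obtain ⟨a, b, hab, hmem, hne, hcc⟩ := mem_Phi.1 hx
  rcases hcc with ⟨rfl, -⟩ | ⟨rfl, -⟩
  · exact hP.2.1 _ hmem (by simp)
  · exact hP.2.1 _ hmem (by simp)

lemma closer_unique {V : Finset (Fin n)} {a b x y : Fin n}
    (hx : closerCond V a b x) (hy : closerCond V a b y) : x = y := by
  rcases hx with ⟨rfl, h1⟩ | ⟨rfl, h1⟩ <;> rcases hy with ⟨rfl, h2⟩ | ⟨rfl, h2⟩ <;>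
    first | rfl | exact absurd h1 h2 | exact absurd h2 h1

lemma IsHP.biUnion (hP : IsHP A P V) : A = P.biUnion id := by
  ext x
  constructor
  · intro hx
    obtain ⟨B, ⟨hB, hxB⟩, -⟩ := hP.2.2.1 x hx
    exact Finset.mem_biUnion.2 ⟨B, hB, hxB⟩
  · intro hx
    obtain ⟨B, hB, hxB⟩ := Finset.mem_biUnion.1 hx
    exact hP.2.1 B hB hxB

lemma IsHP.card_A (hP : IsHP A P V) : A.card = V.card + 2 * (P.erase V).card := by
  have hVP := hP.2.2.2.2.1
  have h1 : A.card = ∑ B ∈ P, B.card := by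
    rw [hP.biUnion, Finset.card_biUnion]
    · rfl
    · intro B₁ h1 B₂ h2 hne
      simp only [Finset.disjoint_left]
      intro x hx1 hx2
      exact hne (hP.disj h1 h2 hx1 hx2)
  have h2 : P = insert V (P.erase V) := (Finset.insert_erase hVP).symm
  rw [h1]
  nth_rewrite 1 [h2]
  rw [Finset.sum_insert (Finset.notMem_erase V P)]
  have h3 : ∑ B ∈ P.erase V, B.card = ∑ B ∈ P.erase V, 2 := by
    apply Finset.sum_congr rfl
    intro B hB
    exact hP.2.2.2.2.2.2 B (Finset.mem_of_mem_erase hB) (Finset.ne_of_mem_erase hB)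
  rw [h3, Finset.sum_const, smul_eq_mul]
  omega

open Classical in
lemma IsHP.phi_card (hP : IsHP A P V) : (Phi P V).card ≤ (P.erase V).card := by
  classical
  apply Finset.card_le_card_of_injOn
    (fun x => if h : ∃ B, B ∈ P.erase V ∧ x ∈ B then h.choose else ∅)
  · intro x hx
    obtain ⟨a, b, hab, hmem, hne, hcc⟩ := mem_Phi.1 hx
    have hxab : x ∈ ({a, b} : Finset (Fin n)) := by
      rcases hcc with ⟨rfl, -⟩ | ⟨rfl, -⟩ <;> simp
    have h : ∃ B, B ∈ P.erase V ∧ x ∈ B := ⟨{a, b}, Finset.mem_erase.2 ⟨hne, hmem⟩, hxab⟩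
    simp only [dif_pos h]
    exact h.choose_spec.1
  · intro x hx y hy hf
    obtain ⟨a, b, hab, hmem, hne, hcc⟩ := mem_Phi.1 hx
    obtain ⟨c, d, hcd, hmem', hne', hcc'⟩ := mem_Phi.1 hy
    have hxab : x ∈ ({a, b} : Finset (Fin n)) := by
      rcases hcc with ⟨rfl, -⟩ | ⟨rfl, -⟩ <;> simp
    have hycd : y ∈ ({c, d} : Finset (Fin n)) := by
      rcases hcc' with ⟨rfl, -⟩ | ⟨rfl, -⟩ <;> simp
    have h : ∃ B, B ∈ P.erase V ∧ x ∈ B := ⟨{a, b}, Finset.mem_erase.2 ⟨hne, hmem⟩, hxab⟩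
    have h' : ∃ B, B ∈ P.erase V ∧ y ∈ B := ⟨{c, d}, Finset.mem_erase.2 ⟨hne', hmem'⟩, hycd⟩
    simp only [dif_pos h, dif_pos h'] at hf
    have hBx := h.choose_spec
    have hBy := h'.choose_spec
    have e1 : h.choose = ({a, b} : Finset (Fin n)) :=
      hP.disj (Finset.mem_of_mem_erase hBx.1) hmem hBx.2 hxab
    have e2 : h'.choose = ({c, d} : Finset (Fin n)) :=
      hP.disj (Finset.mem_of_mem_erase hBy.1) hmem' hBy.2 hycd
    have : ({a, b} : Finset (Fin n)) = {c, d} := by rw [← e1, ← e2, hf]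
    obtain ⟨rfl, rfl⟩ := pair_eq_pair hab hcd this
    exact closer_unique hcc hcc'

lemma IsHP.V_card_ge (hP : IsHP A P V) : 2 ≤ V.card := by
  have h1 := hP.V_nonempty
  have h2 := hP.2.2.2.2.2.1
  have : V.card ≠ 0 := by simpa [Finset.card_eq_zero] using h1.ne_empty
  rcases h2 with ⟨k, hk⟩
  omega

lemma IsHP.phi_card_lt (hP : IsHP A P V) : 2 * (Phi P V).card < A.card := by
  have h1 := hP.card_A
  have h2 := hP.phi_card
  have h3 := hP.V_card_ge
  omega

end Structural

def Trans (A S : Finset (Fin n)) (i j : Fin n) : Prop :=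
  i ∈ A ∧ j ∈ A ∧ i ∉ S ∧ j ∈ S ∧
    ((i < j ∧ ∀ x ∈ A, ¬(i < x ∧ x < j)) ∨ (j < i ∧ (∀ x ∈ A, j ≤ x) ∧ ∀ x ∈ A, x ≤ i))

lemma trans_exists {A S : Finset (Fin n)} (hSA : S ⊆ A) (hne : S.Nonempty)
    (hproper : ∃ x ∈ A, x ∉ S) : ∃ i j, Trans A S i j := by
  classical
  set T := (A \ S).filter (fun x => ∃ y ∈ S, x < y) with hT
  by_cases hTne : T.Nonempty
  · set i := T.max' hTne with hi
    have hiT : i ∈ T := T.max'_mem hTne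
    have hiA : i ∈ A := (Finset.mem_sdiff.1 (Finset.mem_filter.1 hiT).1).1
    have hiS : i ∉ S := (Finset.mem_sdiff.1 (Finset.mem_filter.1 hiT).1).2
    obtain ⟨y₀, hy₀S, hy₀⟩ := (Finset.mem_filter.1 hiT).2
    set R := S.filter (fun y => i < y) with hR
    have hRne : R.Nonempty := ⟨y₀, Finset.mem_filter.2 ⟨hy₀S, hy₀⟩⟩
    set j := R.min' hRne with hj
    have hjR : j ∈ R := R.min'_mem hRne
    have hjS : j ∈ S := (Finset.mem_filter.1 hjR).1
    have hij : i < j := (Finset.mem_filter.1 hjR).2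
    refine ⟨i, j, hiA, hSA hjS, hiS, hjS, Or.inl ⟨hij, ?_⟩⟩
    rintro x hxA ⟨hix, hxj⟩
    by_cases hxS : x ∈ S
    · have : j ≤ x := R.min'_le x (Finset.mem_filter.2 ⟨hxS, hix⟩)
      exact absurd hxj (not_lt.2 this)
    · have hxT : x ∈ T := Finset.mem_filter.2 ⟨Finset.mem_sdiff.2 ⟨hxA, hxS⟩, ⟨j, hjS, hxj⟩⟩
      have : x ≤ i := T.le_max' x hxT
      exact absurd hix (not_lt.2 this)
  · have hAne : A.Nonempty := hne.mono hSA
    set i := A.max' hAne with hi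
    set j := A.min' hAne with hj
    have hjS : j ∈ S := by
      by_contra hjS
      obtain ⟨y, hyS⟩ := hne
      have hjy : j < y := lt_of_le_of_ne (A.min'_le y (hSA hyS)) (fun h => hjS (h ▸ hyS))
      exact hTne ⟨j, Finset.mem_filter.2 ⟨Finset.mem_sdiff.2 ⟨A.min'_mem hAne, hjS⟩, ⟨y, hyS, hjy⟩⟩⟩
    have hiS : i ∉ S := by
      intro hiS
      obtain ⟨x, hxA, hxS⟩ := hproper
      have hxi : x < i := lt_of_le_of_ne (A.le_max' x hxA) (fun h => hxS (h ▸ hiS))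
      exact hTne ⟨x, Finset.mem_filter.2 ⟨Finset.mem_sdiff.2 ⟨hxA, hxS⟩, ⟨i, hiS, hxi⟩⟩⟩
    have hji : j < i := lt_of_le_of_ne (A.min'_le i (A.max'_mem hAne))
      (fun h => hiS (h ▸ hjS))
    exact ⟨i, j, A.max'_mem hAne, hSA hjS, hiS, hjS,
      Or.inr ⟨hji, fun x hx => A.min'_le x hx, fun x hx => A.le_max' x hx⟩⟩

section Surgery

variable {A : Finset (Fin n)} {P : Finset (Finset (Fin n))} {V : Finset (Fin n)}

lemma IsHP.erase_pair (hP : IsHP A P V) {B : Finset (Fin n)} (hB : B ∈ P) (hBV : B ≠ V) :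
    IsHP (A \ B) (P.erase B) V := by
  have hP' := hP
  obtain ⟨hne, hsub, huniq, hnc, hV, hev, hsize⟩ := hP'
  refine ⟨fun B' h => hne B' (Finset.mem_of_mem_erase h), ?_, ?_, ?_, ?_, hev, ?_⟩
  · intro B' h x hx
    have hB' := Finset.mem_of_mem_erase h
    refine Finset.mem_sdiff.2 ⟨hsub B' hB' hx, fun hxB => ?_⟩
    exact Finset.ne_of_mem_erase h (hP.disj hB' hB hx hxB)
  · intro x hx
    obtain ⟨hxA, hxB⟩ := Finset.mem_sdiff.1 hx
    obtain ⟨C, ⟨hC, hxC⟩, hu⟩ := huniq x hxA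
    have hCB : C ≠ B := fun h => hxB (h ▸ hxC)
    exact ⟨C, ⟨Finset.mem_erase.2 ⟨hCB, hC⟩, hxC⟩,
      fun B' h' => hu B' ⟨Finset.mem_of_mem_erase h'.1, h'.2⟩⟩
  · intro B₁ h1 B₂ h2
    exact hnc B₁ (Finset.mem_of_mem_erase h1) B₂ (Finset.mem_of_mem_erase h2)
  · exact Finset.mem_erase.2 ⟨Ne.symm hBV, hV⟩
  · intro B' h hBV'
    exact hsize B' (Finset.mem_of_mem_erase h) hBV'

lemma phi_erase (hP : IsHP A P V) {a b : Fin n} (hab : a < b)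
    (hB : ({a, b} : Finset (Fin n)) ∈ P) :
    Phi (P.erase {a, b}) V = (Phi P V) \ {a, b} := by
  ext x
  simp only [Finset.mem_sdiff]
  constructor
  · intro hx
    obtain ⟨c, d, hcd, hmem, hne, hcc⟩ := mem_Phi.1 hx
    have hcd_ne : ({c, d} : Finset (Fin n)) ≠ {a, b} := Finset.ne_of_mem_erase hmem
    have hxcd : x ∈ ({c, d} : Finset (Fin n)) := by
      rcases hcc with ⟨rfl, -⟩ | ⟨rfl, -⟩ <;> simp
    refine ⟨mem_Phi.2 ⟨c, d, hcd, Finset.mem_of_mem_erase hmem, hne, hcc⟩, fun hxab => ?_⟩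
    exact hcd_ne (hP.disj (Finset.mem_of_mem_erase hmem) hB hxcd hxab)
  · rintro ⟨hx, hxab⟩
    obtain ⟨c, d, hcd, hmem, hne, hcc⟩ := mem_Phi.1 hx
    have hxcd : x ∈ ({c, d} : Finset (Fin n)) := by
      rcases hcc with ⟨rfl, -⟩ | ⟨rfl, -⟩ <;> simp
    have hcd_ne : ({c, d} : Finset (Fin n)) ≠ {a, b} := fun h => hxab (h ▸ hxcd)
    exact mem_Phi.2 ⟨c, d, hcd, Finset.mem_erase.2 ⟨hcd_ne, hmem⟩, hne, hcc⟩

lemma phi_insert {p q z : Fin n} (hpq : p < q)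
    (hz : closerCond V p q z) (hne : ({p, q} : Finset (Fin n)) ≠ V) :
    Phi (insert ({p, q} : Finset (Fin n)) P) V = insert z (Phi P V) := by
  ext x
  simp only [Finset.mem_insert]
  constructor
  · intro hx
    obtain ⟨c, d, hcd, hmem, hne', hcc⟩ := mem_Phi.1 hx
    rcases Finset.mem_insert.1 hmem with h | h
    · obtain ⟨rfl, rfl⟩ := pair_eq_pair hcd hpq h
      exact Or.inl (closer_unique hcc hz)
    · exact Or.inr (mem_Phi.2 ⟨c, d, hcd, h, hne', hcc⟩)
  · rintro (rfl | hx)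
    · exact mem_Phi.2 ⟨p, q, hpq, Finset.mem_insert_self _ _, hne, hz⟩
    · obtain ⟨c, d, hcd, hmem, hne', hcc⟩ := mem_Phi.1 hx
      exact mem_Phi.2 ⟨c, d, hcd, Finset.mem_insert_of_mem hmem, hne', hcc⟩

lemma IsHP.insert_pair {p q : Fin n} (hpq : p < q) (hp : p ∈ A) (hq : q ∈ A)
    (hgeom : (∀ x ∈ A, ¬(p < x ∧ x < q)) ∨ ((∀ x ∈ A, p ≤ x) ∧ ∀ x ∈ A, x ≤ q))
    (hP : IsHP (A \ {p, q}) P V) :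
    IsHP A (insert ({p, q} : Finset (Fin n)) P) V := by
  obtain ⟨hne, hsub, huniq, hnc, hV, hev, hsize⟩ := hP
  have hsub' : ∀ B ∈ P, B ⊆ A \ {p, q} := hsub
  have hmemA' : ∀ B ∈ P, ∀ x ∈ B, x ∈ A ∧ x ∉ ({p, q} : Finset (Fin n)) := by
    intro B hB x hx
    exact Finset.mem_sdiff.1 (hsub B hB hx)
  refine ⟨?_, ?_, ?_, ?_, Finset.mem_insert_of_mem hV, hev, ?_⟩
  · intro B hB
    rcases Finset.mem_insert.1 hB with rfl | h
    · exact ⟨p, by simp⟩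
    · exact hne B h
  · intro B hB
    rcases Finset.mem_insert.1 hB with rfl | h
    · intro x hx
      rcases Finset.mem_insert.1 hx with rfl | hx
      · exact hp
      · rw [Finset.mem_singleton.1 hx]; exact hq
    · exact (hsub B h).trans (Finset.sdiff_subset)
  · intro x hxA
    by_cases hxpq : x ∈ ({p, q} : Finset (Fin n))
    · refine ⟨{p, q}, ⟨Finset.mem_insert_self _ _, hxpq⟩, ?_⟩
      rintro B' ⟨hB', hxB'⟩
      rcases Finset.mem_insert.1 hB' with rfl | h
      · rfl
      · exact absurd ((hmemA' B' h x hxB').2 hxpq) id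
    · obtain ⟨C, ⟨hC, hxC⟩, hu⟩ := huniq x (Finset.mem_sdiff.2 ⟨hxA, hxpq⟩)
      refine ⟨C, ⟨Finset.mem_insert_of_mem hC, hxC⟩, ?_⟩
      rintro B' ⟨hB', hxB'⟩
      rcases Finset.mem_insert.1 hB' with rfl | h
      · exact absurd hxB' hxpq
      · exact hu B' ⟨h, hxB'⟩
  · intro B₁ h1 B₂ h2 a ha b hb c hc d hd hab hbc hcd
    rcases Finset.mem_insert.1 h1 with rfl | h1' <;> rcases Finset.mem_insert.1 h2 with rfl | h2'
    · rfl
    · -- B₁ = {p,q}, B₂ ∈ P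
      exfalso
      have hac : a = p ∧ c = q := by
        simp only [Finset.mem_insert, Finset.mem_singleton] at ha hc
        rcases ha with rfl | rfl <;> rcases hc with rfl | rfl
        · exact absurd (hab.trans hbc) (lt_irrefl _)
        · exact ⟨rfl, rfl⟩
        · exact absurd ((hab.trans hbc).trans hpq) (lt_irrefl _)
        · exact absurd (hab.trans hbc) (lt_irrefl _)
      obtain ⟨rfl, rfl⟩ := hac
      have hbA := hmemA' B₂ h2' b hb
      rcases hgeom with hg | hg
      · exact hg b hbA.1 ⟨hab, hbc⟩
      · have hdA := hmemA' B₂ h2' d hd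
        exact absurd hcd (not_lt.2 (hg.2 d hdA.1))
    · -- B₁ ∈ P, B₂ = {p,q}
      exfalso
      have hbd : b = p ∧ d = q := by
        simp only [Finset.mem_insert, Finset.mem_singleton] at hb hd
        rcases hb with rfl | rfl <;> rcases hd with rfl | rfl
        · exact absurd (hbc.trans hcd) (lt_irrefl _)
        · exact ⟨rfl, rfl⟩
        · exact absurd ((hbc.trans hcd).trans hpq) (lt_irrefl _)
        · exact absurd (hbc.trans hcd) (lt_irrefl _)
      obtain ⟨rfl, rfl⟩ := hbd
      have hcA := hmemA' B₁ h1' c hc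
      rcases hgeom with hg | hg
      · exact hg c hcA.1 ⟨hbc, hcd⟩
      · have haA := hmemA' B₁ h1' a ha
        exact absurd hab (not_lt.2 (hg.1 a haA.1))
    · exact hnc B₁ h1' B₂ h2' a ha b hb c hc d hd hab hbc hcd
  · intro B hB hBV
    rcases Finset.mem_insert.1 hB with rfl | h
    · exact Finset.card_pair hpq.ne
    · exact hsize B h hBV

lemma trans_pair (hP : IsHP A P V) {i j : Fin n} (ht : Trans A (Phi P V) i j) :
    ({i, j} : Finset (Fin n)) ∈ P ∧ ({i, j} : Finset (Fin n)) ≠ V := by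
  obtain ⟨hiA, hjA, hiS, hjS, hgeom⟩ := ht
  obtain ⟨a, b, hab, hBmem, hBV, hcc⟩ := mem_Phi.1 hjS
  have cross := hP.2.2.2.1
  have hV := hP.2.2.2.2.1
  have hVA := hP.V_subset
  have hBA : ({a, b} : Finset (Fin n)) ⊆ A := hP.2.1 _ hBmem
  have haA : a ∈ A := hBA (by simp)
  have hbA : b ∈ A := hBA (by simp)
  have hVB : ∀ v ∈ V, v ∉ ({a, b} : Finset (Fin n)) :=
    fun v hv hvB => hBV (hP.disj hBmem hV hvB hv)
  have oc : i ∈ V ∨ ∃ c d, c < d ∧ ({c, d} : Finset (Fin n)) ∈ P ∧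
      ({c, d} : Finset (Fin n)) ≠ V ∧
      ((i = c ∧ ¬ V ⊆ Finset.Ioo c d) ∨ (i = d ∧ V ⊆ Finset.Ioo c d)) := by
    obtain ⟨C, ⟨hC, hiC⟩, -⟩ := hP.2.2.1 i hiA
    by_cases hCV : C = V
    · exact Or.inl (hCV ▸ hiC)
    · obtain ⟨c, d, hcd, rfl⟩ := hP.pair hC hCV
      simp only [Finset.mem_insert, Finset.mem_singleton] at hiC
      rcases hiC with rfl | rfl
      · exact Or.inr ⟨i, d, hcd, hC, hCV, Or.inl ⟨rfl,
          fun hsub => hiS (mem_Phi.2 ⟨i, d, hcd, hC, hCV, Or.inl ⟨rfl, hsub⟩⟩)⟩⟩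
      · by_cases hsub : V ⊆ Finset.Ioo c i
        · exact Or.inr ⟨c, i, hcd, hC, hCV, Or.inr ⟨rfl, hsub⟩⟩
        · exact absurd (mem_Phi.2 ⟨c, i, hcd, hC, hCV, Or.inr ⟨rfl, hsub⟩⟩) hiS
  rcases hgeom with ⟨hij, hbetween⟩ | ⟨hji, hlo, hhi⟩
  · -- linear adjacency, i < j
    rcases hcc with ⟨rfl, hsubV⟩ | ⟨rfl, hnsub⟩
    · -- j = a : B = {j, b}, V ⊆ Ioo j b : impossible
      exfalso
      rcases oc with hiV | ⟨c, d, hcd, hC, hCV, hocc⟩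
      · have := Finset.mem_Ioo.1 (hsubV hiV)
        exact absurd hij (not_lt.2 this.1.le)
      rcases hocc with ⟨rfl, hnsubC⟩ | ⟨rfl, hsubC⟩
      · -- i = c, C = {i, d}
        have hdA : d ∈ A := hP.2.1 _ hC (by simp)
        have hjd : j < d := by
          rcases lt_trichotomy d j with h | h | h
          · exact absurd ⟨hcd, h⟩ (hbetween d hdA)
          · exfalso
            have heq := hP.disj hC hBmem
              (show d ∈ ({i, d} : Finset (Fin n)) by simp)
              (show d ∈ ({j, b} : Finset (Fin n)) by rw [h]; simp)
            exact absurd (pair_eq_pair hcd hab heq).1 hij.ne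
          · exact h
        rcases lt_trichotomy d b with h | h | h
        · have heq := cross _ hC _ hBmem _ (show i ∈ ({i, d} : Finset (Fin n)) by simp)
            _ (show j ∈ ({j, b} : Finset (Fin n)) by simp)
            _ (show d ∈ ({i, d} : Finset (Fin n)) by simp)
            _ (show b ∈ ({j, b} : Finset (Fin n)) by simp) hij hjd h
          exact absurd (pair_eq_pair hcd hab heq).1 hij.ne
        · have heq := hP.disj hC hBmem
            (show d ∈ ({i, d} : Finset (Fin n)) by simp)
            (show d ∈ ({j, b} : Finset (Fin n)) by rw [h]; simp)
          exact absurd (pair_eq_pair hcd hab heq).1 hij.ne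
        · refine hnsubC (fun v hv => ?_)
          have hvb := Finset.mem_Ioo.1 (hsubV hv)
          exact Finset.mem_Ioo.2 ⟨hij.trans hvb.1, hvb.2.trans h⟩
      · -- i = d, C = {c, i}, V ⊆ Ioo c i
        obtain ⟨v, hv⟩ := hP.V_nonempty
        have h1 := Finset.mem_Ioo.1 (hsubC hv)
        have h2 := Finset.mem_Ioo.1 (hsubV hv)
        exact absurd (h2.1.trans (h1.2.trans hij)) (lt_irrefl _)
    · -- j = b : B = {a, j}, ¬ V ⊆ Ioo a j
      by_cases hai : a = i
      · subst hai
        exact ⟨hBmem, hBV⟩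
      exfalso
      have hanotbetween := hbetween a haA
      have hai' : a < i := by
        rcases lt_trichotomy a i with h | h | h
        · exact h
        · exact absurd h hai
        · exact absurd ⟨h, hab⟩ hanotbetween
      rcases oc with hiV | ⟨c, d, hcd, hC, hCV, hocc⟩
      · obtain ⟨w, hwV, hw⟩ := Finset.not_subset.1 hnsub
        rw [Finset.mem_Ioo] at hw
        push_neg at hw
        have hwB := hVB w hwV
        simp only [Finset.mem_insert, Finset.mem_singleton, not_or] at hwB
        rcases lt_or_ge a w with h | h
        · have hjw : j < w := lt_of_le_of_ne (hw h) (Ne.symm hwB.2)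
          have heq := cross _ hBmem _ hV _ (show a ∈ ({a, j} : Finset (Fin n)) by simp)
            _ hiV _ (show j ∈ ({a, j} : Finset (Fin n)) by simp) _ hwV hai' hij hjw
          exact hBV heq
        · have hwa : w < a := lt_of_le_of_ne h hwB.1
          have heq := cross _ hV _ hBmem _ hwV
            _ (show a ∈ ({a, j} : Finset (Fin n)) by simp) _ hiV
            _ (show j ∈ ({a, j} : Finset (Fin n)) by simp) hwa hai' hij
          exact hBV heq.symm
      rcases hocc with ⟨rfl, hnsubC⟩ | ⟨rfl, hsubC⟩
      · -- i = c, C = {i, d}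
        have hdA : d ∈ A := hP.2.1 _ hC (by simp)
        have hjd : j < d := by
          rcases lt_trichotomy d j with h | h | h
          · exact absurd ⟨hcd, h⟩ (hbetween d hdA)
          · exfalso
            have heq := hP.disj hC hBmem
              (show d ∈ ({i, d} : Finset (Fin n)) by simp)
              (show d ∈ ({a, j} : Finset (Fin n)) by rw [h]; simp)
            exact absurd (pair_eq_pair hcd hab heq).1 (by
              intro h'; exact hai (h'.symm))
          · exact h
        have heq := cross _ hBmem _ hC _ (show a ∈ ({a, j} : Finset (Fin n)) by simp)
          _ (show i ∈ ({i, d} : Finset (Fin n)) by simp)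
          _ (show j ∈ ({a, j} : Finset (Fin n)) by simp)
          _ (show d ∈ ({i, d} : Finset (Fin n)) by simp) hai' hij hjd
        exact hai (pair_eq_pair hab hcd heq).1
      · -- i = d, C = {c, i}, V ⊆ Ioo c i
        obtain ⟨w, hwV, hw⟩ := Finset.not_subset.1 hnsub
        rw [Finset.mem_Ioo] at hw
        push_neg at hw
        have hwB := hVB w hwV
        simp only [Finset.mem_insert, Finset.mem_singleton, not_or] at hwB
        have hwC := Finset.mem_Ioo.1 (hsubC hwV)
        have hwa : w < a := by
          rcases lt_or_ge a w with h | h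
          · exfalso
            have hjw : j ≤ w := hw h
            exact absurd ((hwC.2.trans hij).trans_le hjw) (lt_irrefl _)
          · exact lt_of_le_of_ne h hwB.1
        have hca : c < a := hwC.1.trans hwa
        have heq := cross _ hC _ hBmem _ (show c ∈ ({c, i} : Finset (Fin n)) by simp)
          _ (show a ∈ ({a, j} : Finset (Fin n)) by simp)
          _ (show i ∈ ({c, i} : Finset (Fin n)) by simp)
          _ (show j ∈ ({a, j} : Finset (Fin n)) by simp) hca hai' hij
        exact absurd (pair_eq_pair hcd hab heq).1 hca.ne
  · -- wrap case : j < i, j = min, i = max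
    rcases hcc with ⟨rfl, hsubV⟩ | ⟨rfl, hnsub⟩
    · -- j = a : B = {j, b}
      by_cases hbi : b = i
      · rw [Finset.pair_comm i j, ← hbi]
        exact ⟨hBmem, hBV⟩
      have hbi' : b < i := lt_of_le_of_ne (hhi b hbA) hbi
      exfalso
      rcases oc with hiV | ⟨c, d, hcd, hC, hCV, hocc⟩
      · have := Finset.mem_Ioo.1 (hsubV hiV)
        exact absurd this.2 (not_lt.2 hbi'.le)
      rcases hocc with ⟨rfl, hnsubC⟩ | ⟨rfl, hsubC⟩
      · have hdA : d ∈ A := hP.2.1 _ hC (by simp)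
        exact absurd hcd (not_lt.2 (hhi d hdA))
      · -- i = d, C = {c, i}, V ⊆ Ioo c i
        obtain ⟨v, hv⟩ := hP.V_nonempty
        have h1 := Finset.mem_Ioo.1 (hsubC hv)
        have h2 := Finset.mem_Ioo.1 (hsubV hv)
        have hcA : c ∈ A := hP.2.1 _ hC (by simp)
        have hjc : j < c := by
          rcases lt_or_ge j c with h | h
          · exact h
          · exfalso
            have : c = j := le_antisymm h (hlo c hcA)
            subst this
            have heq := hP.disj hC hBmem
              (show c ∈ ({c, i} : Finset (Fin n)) by simp)
              (show c ∈ ({c, b} : Finset (Fin n)) by simp)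
            exact absurd (pair_eq_pair hcd hab heq).2 hbi'.ne'
        rcases lt_trichotomy c b with h | h | h
        · have heq := cross _ hBmem _ hC
            _ (show j ∈ ({j, b} : Finset (Fin n)) by simp)
            _ (show c ∈ ({c, i} : Finset (Fin n)) by simp)
            _ (show b ∈ ({j, b} : Finset (Fin n)) by simp)
            _ (show i ∈ ({c, i} : Finset (Fin n)) by simp) hjc h hbi'
          exact absurd (pair_eq_pair hab hcd heq).1 hjc.ne
        · have heq := hP.disj hC hBmem
            (show c ∈ ({c, i} : Finset (Fin n)) by simp)
            (show c ∈ ({j, b} : Finset (Fin n)) by rw [h]; simp)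
          exact absurd (pair_eq_pair hcd hab heq).1 hjc.ne'
        · exact absurd (h2.2.trans (h.trans h1.1)) (lt_irrefl _)
    · -- j = b : B = {a, j} with a < j : contradicts j = min
      exact absurd hab (not_lt.2 (hlo a haA))

lemma phi_empty_case (hP : IsHP A P V) (h : Phi P V = ∅) : P = {V} ∧ V = A := by
  have hall : ∀ B ∈ P, B = V := by
    intro B hB
    by_contra hBV
    obtain ⟨a, b, hab, rfl⟩ := hP.pair hB hBV
    by_cases hsub : V ⊆ Finset.Ioo a b
    · have : a ∈ Phi P V := mem_Phi.2 ⟨a, b, hab, hB, hBV, Or.inl ⟨rfl, hsub⟩⟩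
      simp [h] at this
    · have : b ∈ Phi P V := mem_Phi.2 ⟨a, b, hab, hB, hBV, Or.inr ⟨rfl, hsub⟩⟩
      simp [h] at this
  constructor
  · apply Finset.ext
    intro B
    simp only [Finset.mem_singleton]
    exact ⟨fun hB => hall B hB, fun hB => hB ▸ hP.2.2.2.2.1⟩
  · apply Finset.Subset.antisymm hP.V_subset
    intro x hx
    obtain ⟨C, ⟨hC, hxC⟩, -⟩ := hP.2.2.1 x hx
    exact (hall C hC) ▸ hxC

lemma base_case (hA : A.Nonempty) (hev : Even A.card) :
    IsHP A ({A} : Finset (Finset (Fin n))) A ∧ Phi ({A} : Finset (Finset (Fin n))) A = ∅ := by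
  constructor
  · refine ⟨?_, ?_, ?_, ?_, Finset.mem_singleton_self A, hev, ?_⟩
    · intro B hB; rw [Finset.mem_singleton.1 hB]; exact hA
    · intro B hB; rw [Finset.mem_singleton.1 hB]
    · intro x hx
      exact ⟨A, ⟨Finset.mem_singleton_self A, hx⟩,
        fun B' h => Finset.mem_singleton.1 h.1⟩
    · intro B₁ h1 B₂ h2 a _ b _ c _ d _ _ _ _
      rw [Finset.mem_singleton.1 h1, Finset.mem_singleton.1 h2]
    · intro B hB hBV
      exact absurd (Finset.mem_singleton.1 hB) hBV
  · rw [Finset.eq_empty_iff_forall_notMem]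
    intro x hx
    obtain ⟨a, b, hab, hmem, hne, -⟩ := mem_Phi.1 hx
    exact hne (Finset.mem_singleton.1 hmem)

lemma main_induction : ∀ N (A : Finset (Fin n)), A.card = N →
    (∀ P V P' V', IsHP A P V → IsHP A P' V' → Phi P V = Phi P' V' → P = P' ∧ V = V') ∧
    (∀ S : Finset (Fin n), S ⊆ A → 2 * S.card < A.card → Even A.card →
      ∃ P V, IsHP A P V ∧ Phi P V = S) := by
  intro N
  induction N using Nat.strong_induction_on with
  | _ N IH =>
  intro A hcard
  constructor
  · intro P V P' V' hP hP' hphi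
    by_cases hS : Phi P V = ∅
    · obtain ⟨h1, h2⟩ := phi_empty_case hP hS
      obtain ⟨h1', h2'⟩ := phi_empty_case hP' (by rw [← hphi]; exact hS)
      have hVV : V = V' := h2.trans h2'.symm
      exact ⟨by rw [h1, h1', hVV], hVV⟩
    · have hSA := hP.phi_subset
      have hlt := hP.phi_card_lt
      have hSne : (Phi P V).Nonempty := Finset.nonempty_of_ne_empty hS
      have hproper : ∃ x ∈ A, x ∉ Phi P V := by
        have hne : Phi P V ≠ A := by
          intro h
          rw [h] at hlt
          omega
        exact Finset.exists_of_ssubset (Finset.ssubset_iff_subset_ne.2 ⟨hSA, hne⟩)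
      obtain ⟨i, j, ht⟩ := trans_exists hSA hSne hproper
      obtain ⟨hmem, hneV⟩ := trans_pair hP ht
      have ht' : Trans A (Phi P' V') i j := hphi ▸ ht
      obtain ⟨hmem', hneV'⟩ := trans_pair hP' ht'
      have hiA : i ∈ A := ht.1
      have hjA : j ∈ A := ht.2.1
      have hij : i ≠ j := fun h => ht.2.2.1 (h ▸ ht.2.2.2.1)
      obtain ⟨p, q, hpq, hpair⟩ : ∃ p q, p < q ∧ ({p, q} : Finset (Fin n)) = {i, j} := by
        rcases lt_or_gt_of_ne hij with h | h
        · exact ⟨i, j, h, rfl⟩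
        · exact ⟨j, i, h, Finset.pair_comm j i⟩
      rw [← hpair] at hmem hneV hmem' hneV'
      have hpqA : ({p, q} : Finset (Fin n)) ⊆ A := hP.2.1 _ hmem
      have e1 := hP.erase_pair hmem hneV
      have e1' := hP'.erase_pair hmem' hneV'
      have f1 := phi_erase hP hpq hmem
      have f1' := phi_erase hP' hpq hmem'
      have hcard2 : (A \ {p, q}).card = N - 2 := by
        rw [Finset.card_sdiff_of_subset hpqA, Finset.card_pair hpq.ne, hcard]
      have hN2 : N - 2 < N := by
        have : 0 < A.card := Finset.card_pos.2 ⟨i, hiA⟩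
        omega
      obtain ⟨hinj, -⟩ := IH (N - 2) hN2 (A \ {p, q}) hcard2
      have heq := hinj _ _ _ _ e1 e1' (by rw [f1, f1', hphi])
      refine ⟨?_, heq.2⟩
      rw [← Finset.insert_erase hmem, ← Finset.insert_erase hmem', heq.1]
  · intro S hSA hlt hev
    by_cases hS : S = ∅
    · subst hS
      have hA : A.Nonempty := Finset.card_pos.1 (by omega)
      obtain ⟨h1, h2⟩ := base_case hA hev
      exact ⟨{A}, A, h1, h2⟩
    · have hSne : S.Nonempty := Finset.nonempty_of_ne_empty hS
      have hproper : ∃ x ∈ A, x ∉ S := by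
        have hne : S ≠ A := by
          intro h
          rw [h] at hlt
          omega
        exact Finset.exists_of_ssubset (Finset.ssubset_iff_subset_ne.2 ⟨hSA, hne⟩)
      obtain ⟨i, j, ht⟩ := trans_exists hSA hSne hproper
      obtain ⟨hiA, hjA, hiS, hjS, hgeom⟩ := ht
      have hijne : i ≠ j := fun h => hiS (h ▸ hjS)
      have hcard2 : ∀ p q : Fin n, p ≠ q → ({p,q} : Finset (Fin n)) = {i,j} →
          (A \ ({p, q} : Finset (Fin n))).card = A.card - 2 := by
        intro p q hne hpair
        have : ({p, q} : Finset (Fin n)) ⊆ A := by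
          rw [hpair]
          intro x hx
          rcases Finset.mem_insert.1 hx with rfl | hx
          · exact hiA
          · rw [Finset.mem_singleton.1 hx]; exact hjA
        rw [Finset.card_sdiff_of_subset this, Finset.card_pair hne]
      have hScard : (S.erase j).card = S.card - 1 := Finset.card_erase_of_mem hjS
      have hN2 : A.card - 2 < N := by
        have : 0 < A.card := Finset.card_pos.2 ⟨i, hiA⟩
        omega
      have hSsub : ∀ p q : Fin n, ({p,q} : Finset (Fin n)) = {i,j} →
          S.erase j ⊆ A \ ({p, q} : Finset (Fin n)) := by
        intro p q hpair x hx
        rw [hpair]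
        have hxS : x ∈ S := Finset.mem_of_mem_erase hx
        have hxj : x ≠ j := Finset.ne_of_mem_erase hx
        refine Finset.mem_sdiff.2 ⟨hSA hxS, ?_⟩
        simp only [Finset.mem_insert, Finset.mem_singleton, not_or]
        exact ⟨fun h => hiS (h ▸ hxS), hxj⟩
      rcases hgeom with ⟨hij, hbet⟩ | ⟨hji, hlo, hhi⟩
      · -- linear case : pair {i, j}, i < j
        have hc2 := hcard2 i j hij.ne rfl
        obtain ⟨-, hsurj⟩ := IH (A.card - 2) hN2 (A \ {i, j}) hc2
        obtain ⟨P₀, V₀, hP₀, hphi₀⟩ := hsurj (S.erase j) (hSsub i j rfl)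
          (by rw [hc2, hScard]
              have h1 : 1 ≤ S.card := Finset.card_pos.2 ⟨j, hjS⟩
              omega)
          (by rw [hc2]; rcases hev with ⟨k, hk⟩; exact ⟨k - 1, by omega⟩)
        have hgeom' : (∀ x ∈ A, ¬(i < x ∧ x < j)) ∨ ((∀ x ∈ A, i ≤ x) ∧ ∀ x ∈ A, x ≤ j) :=
          Or.inl hbet
        have hP₁ := hP₀.insert_pair hij hiA hjA hgeom'
        have hVne : ({i, j} : Finset (Fin n)) ≠ V₀ := by
          intro h
          have : j ∈ A \ ({i, j} : Finset (Fin n)) := hP₀.V_subset (h ▸ (by simp : j ∈ ({i,j} : Finset (Fin n))))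
          simp at this
        have hclose : closerCond V₀ i j j := by
          refine Or.inr ⟨rfl, fun hsub => ?_⟩
          obtain ⟨v, hv⟩ := hP₀.V_nonempty
          have hvA : v ∈ A := (Finset.mem_sdiff.1 (hP₀.V_subset hv)).1
          exact hbet v hvA (Finset.mem_Ioo.1 (hsub hv))
        have := phi_insert (P := P₀) hij hclose hVne
        refine ⟨insert {i, j} P₀, V₀, hP₁, ?_⟩
        rw [this, hphi₀, Finset.insert_erase hjS]
      · -- wrap case : pair {j, i}, j < i
        have hc2 := hcard2 j i (Ne.symm hijne) (Finset.pair_comm j i)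
        obtain ⟨-, hsurj⟩ := IH (A.card - 2) hN2 (A \ {j, i}) hc2
        obtain ⟨P₀, V₀, hP₀, hphi₀⟩ := hsurj (S.erase j) (hSsub j i (Finset.pair_comm j i))
          (by rw [hc2, hScard]
              have h1 : 1 ≤ S.card := Finset.card_pos.2 ⟨j, hjS⟩
              omega)
          (by rw [hc2]; rcases hev with ⟨k, hk⟩; exact ⟨k - 1, by omega⟩)
        have hgeom' : (∀ x ∈ A, ¬(j < x ∧ x < i)) ∨ ((∀ x ∈ A, j ≤ x) ∧ ∀ x ∈ A, x ≤ i) :=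
          Or.inr ⟨hlo, hhi⟩
        have hP₁ := hP₀.insert_pair hji hjA hiA hgeom'
        have hVne : ({j, i} : Finset (Fin n)) ≠ V₀ := by
          intro h
          have : j ∈ A \ ({j, i} : Finset (Fin n)) := hP₀.V_subset (h ▸ (by simp : j ∈ ({j,i} : Finset (Fin n))))
          simp at this
        have hclose : closerCond V₀ j i j := by
          refine Or.inl ⟨rfl, fun v hv => ?_⟩
          have hvA := Finset.mem_sdiff.1 (hP₀.V_subset hv)
          simp only [Finset.mem_insert, Finset.mem_singleton, not_or] at hvA
          refine Finset.mem_Ioo.2 ⟨lt_of_le_of_ne (hlo v hvA.1) (Ne.symm hvA.2.1), lt_of_le_of_ne (hhi v hvA.1) hvA.2.2⟩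
        have := phi_insert (P := P₀) hji hclose hVne
        refine ⟨insert {j, i} P₀, V₀, hP₁, ?_⟩
        rw [this, hphi₀, Finset.insert_erase hjS]

end Surgery

end HPC


namespace HPC

lemma isHalfPairing_iff {n : ℕ} {P : Finset (Finset (Fin n))} {V : Finset (Fin n)} :
    IsHalfPairing P V ↔ IsHP Finset.univ P V := by
  constructor
  · rintro ⟨⟨h1, h2⟩, h3, h4, h5, h6⟩
    exact ⟨h1, fun B _ => Finset.subset_univ B, fun x _ => h2 x, h3, h4, h5, h6⟩
  · rintro ⟨h1, h2, h3, h4, h5, h6, h7⟩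
    exact ⟨⟨h1, fun x => h3 x (Finset.mem_univ x)⟩, h4, h5, h6, h7⟩

lemma card_eq (n : ℕ) (hev : Even n) :
    Nat.card {PV : Finset (Finset (Fin n)) × Finset (Fin n) // IsHalfPairing PV.1 PV.2}
      = Nat.card {S : Finset (Fin n) // 2 * S.card < n} := by
  have huniv : (Finset.univ : Finset (Fin n)).card = n := by simp
  obtain ⟨hinj, hsurj⟩ := main_induction (n := n) n Finset.univ huniv
  apply Nat.card_eq_of_bijective (fun PV => ⟨Phi PV.1.1 PV.1.2, by
    have := (isHalfPairing_iff.1 PV.2).phi_card_lt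
    rwa [huniv] at this⟩)
  constructor
  · rintro ⟨⟨P, V⟩, h⟩ ⟨⟨P', V'⟩, h'⟩ hf
    have heq : Phi P V = Phi P' V' := by simpa using congrArg Subtype.val hf
    have := hinj P V P' V' (isHalfPairing_iff.1 h) (isHalfPairing_iff.1 h') heq
    simp only [Subtype.mk.injEq, Prod.mk.injEq]
    exact this
  · rintro ⟨S, hS⟩
    obtain ⟨P, V, hP, hphi⟩ := hsurj S (Finset.subset_univ S)
      (by rw [huniv]; exact hS) (by rw [huniv]; exact hev)
    exact ⟨⟨(P, V), isHalfPairing_iff.2 hP⟩, by simp [hphi]⟩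

lemma card_S (n : ℕ) (hev : Even n) :
    Nat.card {S : Finset (Fin n) // 2 * S.card < n}
      = ∑ j ∈ Finset.range (n/2), n.choose j := by
  classical
  have hmod : n % 2 = 0 := Nat.even_iff.1 hev
  rw [Nat.card_eq_fintype_card, Fintype.card_subtype]
  have hsplit : Finset.univ.filter (fun S : Finset (Fin n) => 2 * S.card < n)
      = (Finset.range (n/2)).biUnion
          (fun j => Finset.univ.filter (fun S : Finset (Fin n) => S.card = j)) := by
    ext S
    simp only [Finset.mem_filter, Finset.mem_biUnion, Finset.mem_range, Finset.mem_univ,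
      true_and]
    constructor
    · intro h; exact ⟨S.card, by omega, rfl⟩
    · rintro ⟨j, hj, rfl⟩; omega
  rw [hsplit, Finset.card_biUnion]
  · apply Finset.sum_congr rfl
    intro j _
    have h1 : Finset.univ.filter (fun S : Finset (Fin n) => S.card = j)
        = Finset.powersetCard j Finset.univ := by
      rw [Finset.powersetCard_eq_filter, Finset.powerset_univ]
    rw [h1, Finset.card_powersetCard]
    simp
  · intro x _ y _ hxy
    simp only [Finset.disjoint_left, Finset.mem_filter]
    rintro S ⟨-, h1⟩ ⟨-, h2⟩
    exact hxy (h1.symm.trans h2)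

end HPC

/-- For even `n`, `(2ⁿ - ∫_{-2}^2 tⁿ/(π√(4-t²)) dt)/2` equals the number of
non-crossing half-pairings of `[n]`, which is `∑_{k=1}^{n/2} C(n, n/2 - k)`. -/
theorem stmt_3 (n : ℕ) (hn : Even n) :
    ((2 : ℝ) ^ n - ∫ t in (-2 : ℝ)..2, t ^ n / (Real.pi * Real.sqrt (4 - t ^ 2))) / 2
      = Nat.card {PV : Finset (Finset (Fin n)) × Finset (Fin n) //
          IsHalfPairing PV.1 PV.2} ∧
    Nat.card {PV : Finset (Finset (Fin n)) × Finset (Fin n) // IsHalfPairing PV.1 PV.2}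
      = ∑ k ∈ Finset.Icc 1 (n / 2), n.choose (n / 2 - k) := by
  have hmod : n % 2 = 0 := Nat.even_iff.1 hn
  set m := n / 2 with hm
  have hn2 : n = 2 * m := by omega
  have hcount : Nat.card {PV : Finset (Finset (Fin n)) × Finset (Fin n) //
      IsHalfPairing PV.1 PV.2} = ∑ j ∈ Finset.range m, n.choose j := by
    rw [HPC.card_eq n hn, HPC.card_S n hn]
  have hsum : ∑ k ∈ Finset.Icc 1 m, n.choose (m - k) = ∑ j ∈ Finset.range m, n.choose j :=
    sum_choose_eq n m
  have hint : (∫ t in (-2 : ℝ)..2, t ^ n / (Real.pi * Real.sqrt (4 - t ^ 2)))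
      = Nat.centralBinom m := by
    rw [hn2]
    exact arcsine_moment m
  have hpow : 2 ^ n = Nat.centralBinom m + 2 * ∑ j ∈ Finset.range m, n.choose j := by
    rw [hn2]
    exact two_pow_split m
  constructor
  · rw [hint, hcount]
    have hc : ((2 : ℝ) ^ n) = (Nat.centralBinom m : ℝ)
        + 2 * (∑ j ∈ Finset.range m, n.choose j : ℕ) := by
      exact_mod_cast congrArg (Nat.cast (R := ℝ)) hpow
    push_cast at hc ⊢
    linarith
  · rw [hcount, ← hsum]
end

section
/- The number of non-crossing half-pairings of [n] with exactly k through strings (i.e. with |V| = k, k even and positive) is binomial(n, (n-k)/2). -/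
set_option linter.unusedVariables false
set_option linter.unusedSectionVars false

open Finset
open scoped Classical

namespace NC

noncomputable section

variable {n : ℕ}

/-- number of elements of `S` with value `< i`. -/
def cnt (S : Finset (Fin n)) (i : ℕ) : ℕ := (S.filter (fun y : Fin n => (y : ℕ) < i)).card

/-- lattice-path level: (#openers) − (#closers) among first `i` positions. -/
def lev (T : Finset (Fin n)) (i : ℕ) : ℤ := (cnt (univ : Finset (Fin n)) i : ℤ) - 2 * cnt T i

lemma cnt_zero (S : Finset (Fin n)) : cnt S 0 = 0 := by simp [cnt]

lemma cnt_succ (S : Finset (Fin n)) (i : ℕ) (hi : i < n) :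
    cnt S (i+1) = cnt S i + (if (⟨i, hi⟩ : Fin n) ∈ S then 1 else 0) := by
  classical
  unfold cnt
  have h : S.filter (fun y : Fin n => (y : ℕ) < i + 1)
      = (S.filter (fun y : Fin n => (y : ℕ) < i)) ∪ (S.filter (fun y : Fin n => (y : ℕ) = i)) := by
    ext y
    simp only [mem_filter, mem_union]
    constructor
    · rintro ⟨hy, h2⟩
      rcases Nat.lt_succ_iff_lt_or_eq.1 h2 with h | h
      · exact Or.inl ⟨hy, h⟩
      · exact Or.inr ⟨hy, h⟩
    · rintro (⟨hy, h2⟩ | ⟨hy, h2⟩)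
      · exact ⟨hy, Nat.lt_succ_of_lt h2⟩
      · exact ⟨hy, by omega⟩
  rw [h, card_union_of_disjoint]
  · congr 1
    by_cases hm : (⟨i, hi⟩ : Fin n) ∈ S
    · rw [if_pos hm]
      have : S.filter (fun y : Fin n => (y : ℕ) = i) = {⟨i, hi⟩} := by
        ext y
        simp only [mem_filter, mem_singleton]
        constructor
        · rintro ⟨hy, h2⟩
          exact Fin.ext h2
        · rintro rfl; exact ⟨hm, rfl⟩
      rw [this, card_singleton]
    · rw [if_neg hm]
      have : S.filter (fun y : Fin n => (y : ℕ) = i) = ∅ := by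
        ext y
        simp only [mem_filter, notMem_empty, iff_false, not_and]
        intro hy h2
        exact absurd (show y = (⟨i, hi⟩ : Fin n) from Fin.ext h2) (fun h => hm (h ▸ hy))
      rw [this, card_empty]
  · rw [disjoint_left]
    rintro y hy hy2
    simp only [mem_filter] at hy hy2
    omega

lemma cnt_mono (S : Finset (Fin n)) {i j : ℕ} (h : i ≤ j) : cnt S i ≤ cnt S j := by
  apply card_le_card
  intro y hy
  simp only [cnt, mem_filter] at hy ⊢
  exact ⟨hy.1, lt_of_lt_of_le hy.2 h⟩

lemma cnt_le (S : Finset (Fin n)) (i : ℕ) : cnt S i ≤ S.card := card_le_card (filter_subset _ _)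

lemma cnt_eq_card (S : Finset (Fin n)) {i : ℕ} (hi : n ≤ i) : cnt S i = S.card := by
  unfold cnt
  congr 1
  apply filter_true_of_mem
  intro y _
  exact lt_of_lt_of_le y.isLt hi

lemma cnt_univ (i : ℕ) (hi : i ≤ n) : cnt (univ : Finset (Fin n)) i = i := by
  induction i with
  | zero => exact cnt_zero _
  | succ j ih =>
    rw [cnt_succ _ j (by omega), ih (by omega), if_pos (mem_univ _)]

lemma lev_zero (T : Finset (Fin n)) : lev T 0 = 0 := by simp [lev, cnt_zero]

lemma lev_succ (T : Finset (Fin n)) (i : ℕ) (hi : i < n) :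
    lev T (i+1) = lev T i + (if (⟨i, hi⟩ : Fin n) ∈ T then -1 else 1) := by
  unfold lev
  rw [cnt_succ _ i hi, cnt_succ _ i hi, if_pos (mem_univ _)]
  split <;> push_cast <;> ring

lemma lev_succ_mem (T : Finset (Fin n)) (x : Fin n) (hx : x ∈ T) :
    lev T ((x : ℕ)+1) = lev T (x : ℕ) - 1 := by
  have := lev_succ T (x : ℕ) x.isLt
  rw [if_pos (by simpa using hx)] at this
  omega

lemma lev_succ_notMem (T : Finset (Fin n)) (x : Fin n) (hx : x ∉ T) :
    lev T ((x : ℕ)+1) = lev T (x : ℕ) + 1 := by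
  have := lev_succ T (x : ℕ) x.isLt
  rw [if_neg (by simpa using hx)] at this
  omega

lemma lev_step_abs (T : Finset (Fin n)) (i : ℕ) (hi : i < n) :
    lev T (i+1) = lev T i + 1 ∨ lev T (i+1) = lev T i - 1 := by
  rw [lev_succ T i hi]
  split <;> omega

lemma lev_n (T : Finset (Fin n)) : lev T n = (n : ℤ) - 2 * T.card := by
  unfold lev
  rw [cnt_univ n le_rfl, cnt_eq_card T le_rfl]

/-- Last place at level `v` before `N`: everything strictly after is `> v`. -/
lemma exists_last (T : Finset (Fin n)) (N : ℕ) (hN : N ≤ n) (v : ℤ)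
    (h0 : ∃ j, j ≤ N ∧ lev T j ≤ v) (hN2 : v < lev T N) :
    ∃ x, x < N ∧ lev T x = v ∧ ∀ j, x < j → j ≤ N → v < lev T j := by
  classical
  set F := (Finset.range (N+1)).filter (fun j => lev T j ≤ v) with hF
  have hFne : F.Nonempty := by
    obtain ⟨j, hj1, hj2⟩ := h0
    exact ⟨j, by simp [hF, Finset.mem_filter, Finset.mem_range]; exact ⟨by omega, hj2⟩⟩
  set x := F.max' hFne with hx
  have hxF : x ∈ F := F.max'_mem hFne
  have hxN : x ≤ N := by
    have := (Finset.mem_filter.1 hxF).1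
    simp only [Finset.mem_range] at this; omega
  have hxlev : lev T x ≤ v := (Finset.mem_filter.1 hxF).2
  have hxlt : x < N := by
    rcases Nat.lt_or_ge x N with h | h
    · exact h
    · exfalso; have : x = N := by omega
      rw [this] at hxlev; omega
  have hafter : ∀ j, x < j → j ≤ N → v < lev T j := by
    intro j hj1 hj2
    by_contra hcon
    push_neg at hcon
    have : j ∈ F := Finset.mem_filter.2 ⟨Finset.mem_range.2 (by omega), hcon⟩
    have := F.le_max' j this
    omega
  refine ⟨x, hxlt, ?_, hafter⟩
  have h1 : v < lev T (x+1) := hafter (x+1) (by omega) (by omega)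
  rcases lev_step_abs T x (by omega) with h | h <;> omega

/-- First place at level `v` in `(s, N]` (coming down from above). -/
lemma exists_first (T : Finset (Fin n)) (s N : ℕ) (hN : N ≤ n) (v : ℤ)
    (hs : v < lev T s)
    (hex : ∃ j, s ≤ j ∧ j ≤ N ∧ lev T j ≤ v) :
    ∃ j, s < j ∧ j ≤ N ∧ lev T j = v ∧ lev T (j-1) = v+1 ∧
      ∀ i, s ≤ i → i < j → v < lev T i := by
  classical
  set F := (Finset.range (N+1)).filter (fun j => s ≤ j ∧ lev T j ≤ v) with hF
  have hFne : F.Nonempty := by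
    obtain ⟨j, hj1, hj2, hj3⟩ := hex
    exact ⟨j, by simp only [hF, Finset.mem_filter, Finset.mem_range]; exact ⟨by omega, hj1, hj3⟩⟩
  set j := F.min' hFne with hj
  have hjF : j ∈ F := F.min'_mem hFne
  simp only [hF, Finset.mem_filter, Finset.mem_range] at hjF
  obtain ⟨hjN, hjs, hjlev⟩ := hjF
  have hbefore : ∀ i, s ≤ i → i < j → v < lev T i := by
    intro i hi1 hi2
    by_contra hcon
    push_neg at hcon
    have : i ∈ F := by
      simp only [hF, Finset.mem_filter, Finset.mem_range]
      exact ⟨by omega, hi1, hcon⟩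
    have := F.min'_le i this
    omega
  have hjgt : s < j := by
    rcases Nat.lt_or_ge s j with h | h
    · exact h
    · exfalso
      have : j = s := by omega
      rw [this] at hjlev; omega
  have hj1 : v < lev T (j-1) := hbefore (j-1) (by omega) (by omega)
  have hstep : lev T j = lev T (j-1) + 1 ∨ lev T j = lev T (j-1) - 1 := by
    have := lev_step_abs T (j-1) (by omega)
    rw [show j - 1 + 1 = j by omega] at this
    exact this
  refine ⟨j, hjgt, by omega, by omega, by omega, hbefore⟩

end

end NC

namespace NC

noncomputable section

variable {n : ℕ}

----------------------------------------------------------------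
-- Part 1 : relations

/-- `a` is a "pending closer": `a ∈ T` and the level at `a` is a running minimum. -/
def pending (T : Finset (Fin n)) (a : Fin n) : Prop :=
  a ∈ T ∧ ∀ j ≤ (a : ℕ), lev T (a : ℕ) ≤ lev T j

/-- `x` is an "unmatched opener": `x ∉ T` and the level never returns to `lev x`. -/
def unm (T : Finset (Fin n)) (x : Fin n) : Prop :=
  x ∉ T ∧ ∀ j, (x : ℕ) < j → j ≤ n → lev T (x : ℕ) < lev T j

/-- greedy matching: opener `x` is matched with closer `y`. -/
def matchRel (T : Finset (Fin n)) (x y : Fin n) : Prop :=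
  x < y ∧ (∀ j, (x : ℕ) < j → j ≤ (y : ℕ) → lev T (x : ℕ) < lev T j) ∧
    lev T ((y : ℕ)+1) = lev T (x : ℕ)

/-- wrap-around matching: pending closer `a` is matched with unmatched opener `u`. -/
def wrapRel (k : ℕ) (T : Finset (Fin n)) (a u : Fin n) : Prop :=
  pending T a ∧ unm T u ∧ lev T (u : ℕ) = (k : ℤ) - 1 + lev T (a : ℕ)

/-- through strings: unmatched openers with no wrap partner. -/
def inV (k : ℕ) (T : Finset (Fin n)) (x : Fin n) : Prop :=
  unm T x ∧ ∀ a, ¬ wrapRel k T a x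

def linked (k : ℕ) (T : Finset (Fin n)) (x y : Fin n) : Prop :=
  matchRel T x y ∨ matchRel T y x ∨ wrapRel k T x y ∨ wrapRel k T y x

def Vset (k : ℕ) (T : Finset (Fin n)) : Finset (Fin n) := univ.filter (inV k T)

def blockOf (k : ℕ) (T : Finset (Fin n)) (x : Fin n) : Finset (Fin n) :=
  insert x (univ.filter (fun y => linked k T x y))

def gP (k : ℕ) (T : Finset (Fin n)) : Finset (Finset (Fin n)) :=
  insert (Vset k T) (T.image (blockOf k T))

variable {k m : ℕ} {T : Finset (Fin n)}

lemma linked_symm {x y : Fin n} (h : linked k T x y) : linked k T y x := by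
  unfold linked at h ⊢; tauto

-- membership consequences
lemma matchRel_lt {x y : Fin n} (h : matchRel T x y) : x < y := h.1

lemma matchRel_notMem {x y : Fin n} (h : matchRel T x y) : x ∉ T := by
  intro hx
  have h1 := h.2.1 ((x : ℕ)+1) (by omega) (by have := h.1; omega)
  have h2 := lev_succ_mem T x hx
  omega

lemma matchRel_mem {x y : Fin n} (h : matchRel T x y) : y ∈ T := by
  by_contra hy
  have h1 := h.2.1 (y : ℕ) (by have := h.1; exact h.1) le_rfl
  have h2 := lev_succ_notMem T y hy
  have h3 := h.2.2
  omega

lemma wrapRel_lt {a u : Fin n} (h : wrapRel k T a u) : a < u := by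
  rcases h with ⟨hp, hu, _⟩
  by_contra hau
  push_neg at hau
  rcases lt_or_eq_of_le hau with h1 | h1
  · -- u < a : pending says lev a ≤ lev u; unm says lev u < lev a
    have h2 := hp.2 (u : ℕ) (le_of_lt h1)
    have h3 := hu.2 (a : ℕ) h1 (by omega)
    omega
  · exact hu.1 (h1 ▸ hp.1)

lemma pending_not_matchRel_closer {x a : Fin n} (hp : pending T a) (h : matchRel T x a) : False := by
  have h1 := hp.2 (x : ℕ) (le_of_lt h.1)
  have h2 := h.2.2
  have h3 := lev_succ_mem T a hp.1
  omega

lemma matchRel_opener_not_unm {x y : Fin n} (h : matchRel T x y) : ¬ unm T x := by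
  intro hu
  have h1 := hu.2 ((y : ℕ)+1) (by have := h.1; omega) (by omega)
  have h2 := h.2.2
  omega

-- uniqueness lemmas
lemma matchRel_right_unique {x y y' : Fin n} (h : matchRel T x y) (h' : matchRel T x y') :
    y = y' := by
  by_contra hne
  wlog hlt : y < y' generalizing y y'
  · exact this h' h (Ne.symm hne) (by omega)
  have h1 := h'.2.1 ((y : ℕ)+1) (by have := h.1; omega) (by have : (y:ℕ) < y' := hlt; omega)
  have h2 := h.2.2
  omega

lemma matchRel_left_unique {x x' y : Fin n} (h : matchRel T x y) (h' : matchRel T x' y) :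
    x = x' := by
  by_contra hne
  wlog hlt : x < x' generalizing x x'
  · exact this h' h (Ne.symm hne) (by omega)
  have h1 := h.2.1 (x' : ℕ) hlt (le_of_lt h'.1)
  have h2 := h.2.2
  have h3 := h'.2.2
  omega

lemma unm_lev_lt {x x' : Fin n} (hx : unm T x) (hx' : unm T x') (h : x < x') :
    lev T (x : ℕ) < lev T (x' : ℕ) :=
  hx.2 (x' : ℕ) h (by omega)

lemma pending_lev_lt {a a' : Fin n} (ha : pending T a) (ha' : pending T a') (h : a < a') :
    lev T (a' : ℕ) < lev T (a : ℕ) := by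
  have h1 := ha'.2 ((a : ℕ)+1) (by omega)
  have h2 := lev_succ_mem T a ha.1
  omega

lemma unm_lev_inj {x x' : Fin n} (hx : unm T x) (hx' : unm T x')
    (h : lev T (x : ℕ) = lev T (x' : ℕ)) : x = x' := by
  by_contra hne
  rcases Ne.lt_or_gt hne with hl | hl
  · have := unm_lev_lt hx hx' hl; omega
  · have := unm_lev_lt hx' hx hl; omega

lemma pending_lev_inj {a a' : Fin n} (ha : pending T a) (ha' : pending T a')
    (h : lev T (a : ℕ) = lev T (a' : ℕ)) : a = a' := by
  by_contra hne
  rcases Ne.lt_or_gt hne with hl | hl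
  · have := pending_lev_lt ha ha' hl; omega
  · have := pending_lev_lt ha' ha hl; omega

lemma wrapRel_right_unique {a u u' : Fin n} (h : wrapRel k T a u) (h' : wrapRel k T a u') :
    u = u' :=
  unm_lev_inj h.2.1 h'.2.1 (by have := h.2.2; have := h'.2.2; omega)

lemma wrapRel_left_unique {a a' u : Fin n} (h : wrapRel k T a u) (h' : wrapRel k T a' u) :
    a = a' :=
  pending_lev_inj h.1 h'.1 (by have := h.2.2; have := h'.2.2; omega)

lemma linked_unique {x y y' : Fin n} (h : linked k T x y) (h' : linked k T x y') : y = y' := by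
  rcases h with h | h | h | h <;> rcases h' with h' | h' | h' | h'
  · exact matchRel_right_unique h h'
  · exact absurd (matchRel_mem h') (matchRel_notMem h)
  · exact absurd h'.1.1 (matchRel_notMem h)
  · exact absurd h'.2.1 (matchRel_opener_not_unm h)
  · exact absurd (matchRel_mem h) (matchRel_notMem h')
  · exact matchRel_left_unique h h'
  · exact (pending_not_matchRel_closer h'.1 h).elim
  · exact absurd (matchRel_mem h) h'.2.1.1
  · exact absurd h.1.1 (matchRel_notMem h')
  · exact (pending_not_matchRel_closer h.1 h').elim
  · exact wrapRel_right_unique h h'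
  · exact absurd h.1.1 h'.2.1.1
  · exact absurd h.2.1 (matchRel_opener_not_unm h')
  · exact absurd (matchRel_mem h') h.2.1.1
  · exact absurd h'.1.1 h.2.1.1
  · exact wrapRel_left_unique h h'

lemma not_linked_self {x : Fin n} : ¬ linked k T x x := by
  rintro (h | h | h | h)
  · exact absurd h.1 (lt_irrefl x)
  · exact absurd h.1 (lt_irrefl x)
  · exact absurd (wrapRel_lt h) (lt_irrefl x)
  · exact absurd (wrapRel_lt h) (lt_irrefl x)

lemma inV_not_linked {x y : Fin n} (h : inV k T x) : ¬ linked k T x y := by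
  rintro (hl | hl | hl | hl)
  · exact matchRel_opener_not_unm hl h.1
  · exact h.1.1 (matchRel_mem hl)
  · exact h.1.1 hl.1.1
  · exact h.2 y hl


----------------------------------------------------------------
-- Part 2 : existence lemmas

section Exists

variable (hTm : T.card = m) (hnm : n = k + 2 * m) (hk0 : 0 < k)
include hTm hnm

lemma lev_n_eq : lev T n = (k : ℤ) := by
  rw [lev_n, hTm, hnm]; push_cast; ring

include hk0

/-- every non-pending closer is greedy-matched. -/
lemma exists_match_of_closer {y : Fin n} (hy : y ∈ T) (hnp : ¬ pending T y) :
    ∃ x, matchRel T x y := by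
  have hstep := lev_succ_mem T y hy
  unfold pending at hnp
  push_neg at hnp
  obtain ⟨j, hj1, hj2⟩ := hnp hy
  -- last index ≤ y with level ≤ lev(y+1) = lev y - 1
  obtain ⟨x, hx1, hx2, hx3⟩ := exists_last T (y : ℕ) (by omega) (lev T (y : ℕ) - 1)
    ⟨j, hj1, by omega⟩ (by omega)
  refine ⟨⟨x, by omega⟩, ?_, ?_, ?_⟩
  · exact hx1
  · intro j' hj1' hj2'
    have := hx3 j' hj1' hj2'
    simp only []
    omega
  · simpa using (by omega : lev T ((y : ℕ)+1) = lev T x)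

/-- every non-unmatched opener is greedy-matched. -/
lemma exists_match_of_opener {x : Fin n} (hx : x ∉ T) (hnu : ¬ unm T x) :
    ∃ y, matchRel T x y := by
  unfold unm at hnu
  push_neg at hnu
  obtain ⟨j, hj1, hj2, hj3⟩ := hnu hx
  obtain ⟨j', hj'1, hj'2, hj'3, hj'4, hj'5⟩ := exists_first T ((x : ℕ) + 1) n le_rfl
    (lev T (x : ℕ)) (by have := lev_succ_notMem T x hx; omega)
    ⟨j, by omega, by omega, hj3⟩
  have hxj : (x : ℕ) + 2 ≤ j' := by omega
  refine ⟨⟨j' - 1, by omega⟩, ?_, ?_, ?_⟩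
  · show (x : ℕ) < j' - 1; omega
  · intro i hi1 hi2
    simp only [] at hi2
    by_cases hix : i = (x : ℕ) + 1
    · subst hix
      have := lev_succ_notMem T x hx
      omega
    · exact hj'5 i (by omega) (by omega)
  · show lev T (j' - 1 + 1) = lev T (x : ℕ)
    rw [show j' - 1 + 1 = j' by omega]
    omega

/-- every pending closer has a wrap partner. -/
lemma exists_wrap_of_pending {a : Fin n} (ha : pending T a) : ∃ u, wrapRel k T a u := by
  have hn' : lev T n = (k : ℤ) := lev_n_eq hTm hnm
  have hlev0 : lev T (a : ℕ) ≤ 0 := by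
    have := ha.2 0 (by omega)
    have := lev_zero T
    omega
  obtain ⟨x, hx1, hx2, hx3⟩ := exists_last T n le_rfl ((k : ℤ) - 1 + lev T (a : ℕ))
    ⟨(a : ℕ) + 1, by omega, by have := lev_succ_mem T a ha.1; omega⟩
    (by omega)
  have hxT : (⟨x, hx1⟩ : Fin n) ∉ T := by
    intro hmem
    have := lev_succ_mem T ⟨x, hx1⟩ hmem
    have := hx3 (x+1) (by omega) (by omega)
    simp only [] at *
    omega
  refine ⟨⟨x, hx1⟩, ha, ⟨hxT, ?_⟩, by simpa using hx2⟩
  intro j hj1 hj2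
  have := hx3 j hj1 hj2
  simp only [] at *
  omega

/-- pending closers exist at every level in `(min, 0]`. -/
lemma exists_pending_at (w : ℤ) (hw : w ≤ 0) (hex : ∃ j, j ≤ n ∧ lev T j ≤ w - 1) :
    ∃ a : Fin n, pending T a ∧ lev T (a : ℕ) = w := by
  obtain ⟨j, hj1, hj2⟩ := hex
  obtain ⟨j', hj'1, hj'2, hj'3, hj'4, hj'5⟩ := exists_first T 0 n le_rfl (w - 1)
    (by have := lev_zero T; omega) ⟨j, by omega, hj1, hj2⟩
  have hj'n : j' - 1 < n := by omega
  have haT : (⟨j' - 1, hj'n⟩ : Fin n) ∈ T := by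
    by_contra hmem
    have := lev_succ_notMem T ⟨j' - 1, hj'n⟩ hmem
    simp only [] at this
    rw [show j' - 1 + 1 = j' by omega] at this
    omega
  refine ⟨⟨j' - 1, hj'n⟩, ⟨haT, ?_⟩, by simpa using (by omega : lev T (j'-1) = w)⟩
  intro i hi
  simp only [] at *
  have h1 := hj'5 i (by omega) (by omega)
  omega

/-- the claim: any through-string lies left of any wrap-matched opener. -/
lemma inV_lt_wrap {v a u : Fin n} (hv : inV k T v) (hw : wrapRel k T a u) : v < u := by
  by_contra hvu
  push_neg at hvu
  have hne : v ≠ u := by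
    rintro rfl
    exact hv.2 a hw
  have hlt : u < v := lt_of_le_of_ne hvu (Ne.symm hne)
  have h1 : lev T (u : ℕ) < lev T (v : ℕ) := unm_lev_lt hw.2.1 hv.1 hlt
  -- find pending at level lev v - k + 1
  have h2 : lev T (v : ℕ) ≤ (k : ℤ) - 1 := by
    have := hv.1.2 n (by omega) le_rfl
    have := lev_n_eq hTm hnm (T := T)
    omega
  obtain ⟨a', ha'1, ha'2⟩ := exists_pending_at hTm hnm hk0 (lev T (v : ℕ) - (k : ℤ) + 1)
    (by omega)
    ⟨(a : ℕ) + 1, by omega, by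
      have := lev_succ_mem T a hw.1.1
      have := hw.2.2
      omega⟩
  exact hv.2 a' ⟨ha'1, hv.1, by omega⟩

/-- the global minimum gives a through string: Vset is nonempty. -/
lemma Vset_nonempty : (Vset k T).Nonempty := by
  classical
  have hn0 : 0 < n := by omega
  have hn' : lev T n = (k : ℤ) := lev_n_eq hTm hnm
  -- μ = min level
  set F := (Finset.range (n+1)).image (lev T) with hF
  have hFne : F.Nonempty := ⟨lev T 0, Finset.mem_image.2 ⟨0, Finset.mem_range.2 (by omega), rfl⟩⟩
  set μ := F.min' hFne with hμ
  have hμle : ∀ j ≤ n, μ ≤ lev T j := by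
    intro j hj
    exact F.min'_le _ (Finset.mem_image.2 ⟨j, Finset.mem_range.2 (by omega), rfl⟩)
  have hμmem : ∃ j ≤ n, lev T j = μ := by
    obtain ⟨j, hj1, hj2⟩ := Finset.mem_image.1 (F.min'_mem hFne)
    exact ⟨j, by simp only [Finset.mem_range] at hj1; omega, hj2⟩
  have hμ0 : μ ≤ 0 := by
    have := hμle 0 (by omega)
    have := lev_zero T
    omega
  obtain ⟨x, hx1, hx2, hx3⟩ := exists_last T n le_rfl μ
    (by obtain ⟨j, hj1, hj2⟩ := hμmem; exact ⟨j, hj1, le_of_eq hj2⟩) (by omega)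
  have hxT : (⟨x, hx1⟩ : Fin n) ∉ T := by
    intro hmem
    have := lev_succ_mem T ⟨x, hx1⟩ hmem
    have := hμle (x+1) (by omega)
    simp only [] at *
    omega
  have hunm : unm T (⟨x, hx1⟩ : Fin n) := by
    refine ⟨hxT, ?_⟩
    intro j hj1 hj2
    have := hx3 j (by simpa using hj1) hj2
    simp only [] at *
    omega
  refine ⟨⟨x, hx1⟩, ?_⟩
  simp only [Vset, Finset.mem_filter, Finset.mem_univ, true_and]
  refine ⟨hunm, ?_⟩
  rintro a ⟨hap, hau, haeq⟩
  -- lev a = μ - k + 1 ≤ μ - ... < μ : contradiction with μ min at a+1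
  have h1 : lev T ((a : ℕ)+1) = lev T (a : ℕ) - 1 := lev_succ_mem T a hap.1
  have h2 := hμle ((a : ℕ)+1) (by omega)
  simp only [] at haeq
  have hxv : lev T x = μ := hx2
  omega

end Exists

end

end NC

namespace NC

noncomputable section

variable {n k m : ℕ} {T : Finset (Fin n)}

----------------------------------------------------------------
-- Part 3 : `gP` is a non-crossing half-pairing

lemma mem_Vset_iff {x : Fin n} : x ∈ Vset k T ↔ inV k T x := by
  simp [Vset]

lemma blockOf_eq_pair {x y : Fin n} (h : linked k T x y) : blockOf k T x = {x, y} := by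
  unfold blockOf
  congr 1
  ext z
  simp only [Finset.mem_filter, Finset.mem_univ, true_and, Finset.mem_singleton]
  exact ⟨fun hz => linked_unique hz h, fun hz => hz ▸ h⟩

lemma linked_mem_right {x y : Fin n} (hx : x ∉ T) (h : linked k T x y) : y ∈ T := by
  rcases h with h | h | h | h
  · exact matchRel_mem h
  · exact absurd (matchRel_mem h) hx
  · exact absurd h.1.1 hx
  · exact h.1.1

lemma linked_notMem_right {y x : Fin n} (hy : y ∈ T) (h : linked k T y x) : x ∉ T := by
  rcases h with h | h | h | h
  · exact absurd hy (matchRel_notMem h)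
  · exact matchRel_notMem h
  · exact h.2.1.1
  · exact absurd hy h.2.1.1

lemma linked_orient {x y : Fin n} (h : linked k T x y) (hxy : x < y) :
    matchRel T x y ∨ wrapRel k T x y := by
  rcases h with h | h | h | h
  · exact Or.inl h
  · exact absurd h.1 (by omega)
  · exact Or.inr h
  · exact absurd (wrapRel_lt h) (by omega)

lemma pair_mem_order {p q a c : Fin n} (hpq : p < q) (ha : a ∈ ({p, q} : Finset (Fin n)))
    (hc : c ∈ ({p, q} : Finset (Fin n))) (hac : a < c) : p = a ∧ q = c := by
  rcases Finset.mem_insert.1 ha with h | h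
  · rcases Finset.mem_insert.1 hc with h' | h'
    · exact absurd hac (by rw [h, h']; exact lt_irrefl _)
    · exact ⟨h.symm, (Finset.mem_singleton.1 h').symm⟩
  · rcases Finset.mem_insert.1 hc with h' | h'
    · exact absurd hac (by rw [Finset.mem_singleton.1 h, h']; exact not_lt_of_gt hpq)
    · have h1 := Finset.mem_singleton.1 h
      have h2 := Finset.mem_singleton.1 h'
      rw [h1, h2] at hac
      exact absurd hac (lt_irrefl _)

section Main

variable (hTm : T.card = m) (hnm : n = k + 2 * m) (hk0 : 0 < k)
include hTm hnm hk0

lemma linked_total (x : Fin n) : inV k T x ∨ ∃ y, linked k T x y := by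
  by_cases hx : x ∈ T
  · by_cases hp : pending T x
    · obtain ⟨u, hu⟩ := exists_wrap_of_pending hTm hnm hk0 hp
      exact Or.inr ⟨u, Or.inr (Or.inr (Or.inl hu))⟩
    · obtain ⟨y, hy⟩ := exists_match_of_closer hTm hnm hk0 hx hp
      exact Or.inr ⟨y, Or.inr (Or.inl hy)⟩
  · by_cases hu : unm T x
    · by_cases hv : inV k T x
      · exact Or.inl hv
      · unfold inV at hv
        push_neg at hv
        obtain ⟨a, ha⟩ := hv hu
        exact Or.inr ⟨a, Or.inr (Or.inr (Or.inr ha))⟩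
    · obtain ⟨y, hy⟩ := exists_match_of_opener hTm hnm hk0 hx hu
      exact Or.inr ⟨y, Or.inl hy⟩

lemma mem_gP_cases {B : Finset (Fin n)} (hB : B ∈ gP k T) :
    B = Vset k T ∨ ∃ p q : Fin n, p < q ∧ (matchRel T p q ∨ wrapRel k T p q) ∧ B = {p, q} := by
  unfold gP at hB
  rcases Finset.mem_insert.1 hB with h | h
  · exact Or.inl h
  · obtain ⟨t, htT, rfl⟩ := Finset.mem_image.1 h
    right
    -- t ∈ T has some link
    have htot : inV k T t ∨ ∃ y, linked k T t y := linked_total hTm hnm hk0 t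
    rcases htot with hv | ⟨y, hy⟩
    · exact absurd htT hv.1.1
    have hne : t ≠ y := fun h => not_linked_self (h ▸ hy)
    rcases Ne.lt_or_gt hne with hlt | hlt
    · exact ⟨t, y, hlt, linked_orient hy hlt, blockOf_eq_pair hy⟩
    · refine ⟨y, t, hlt, linked_orient (linked_symm hy) hlt, ?_⟩
      rw [blockOf_eq_pair hy, Finset.pair_comm]

lemma gP_partition : IsPartition (gP k T) := by
  constructor
  · intro B hB
    rcases Finset.mem_insert.1 hB with h | h
    · exact h ▸ Vset_nonempty hTm hnm hk0
    · obtain ⟨t, htT, rfl⟩ := Finset.mem_image.1 h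
      exact ⟨t, Finset.mem_insert_self _ _⟩
  · intro x
    -- existence
    have hex : ∃ B, B ∈ gP k T ∧ x ∈ B := by
      rcases linked_total hTm hnm hk0 x with hv | ⟨y, hy⟩
      · exact ⟨Vset k T, Finset.mem_insert_self _ _, mem_Vset_iff.2 hv⟩
      · by_cases hx : x ∈ T
        · exact ⟨blockOf k T x, Finset.mem_insert.2 (Or.inr (Finset.mem_image_of_mem _ hx)),
            Finset.mem_insert_self _ _⟩
        · have hyT : y ∈ T := linked_mem_right hx hy
          refine ⟨blockOf k T y, Finset.mem_insert.2 (Or.inr (Finset.mem_image_of_mem _ hyT)), ?_⟩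
          rw [blockOf_eq_pair (linked_symm hy)]
          simp
    obtain ⟨B, hB, hxB⟩ := hex
    refine ⟨B, ⟨hB, hxB⟩, ?_⟩
    rintro B' ⟨hB', hxB'⟩
    -- uniqueness
    have key : ∀ B₁ B₂ : Finset (Fin n), B₁ ∈ gP k T → B₂ ∈ gP k T → x ∈ B₁ → x ∈ B₂ → B₁ = B₂ := by
      intro B₁ B₂ h₁ h₂ hx₁ hx₂
      unfold gP at h₁ h₂
      rcases Finset.mem_insert.1 h₁ with e₁ | e₁ <;> rcases Finset.mem_insert.1 h₂ with e₂ | e₂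
      · rw [e₁, e₂]
      · -- B₁ = Vset, B₂ = blockOf t
        exfalso
        obtain ⟨t, htT, rfl⟩ := Finset.mem_image.1 e₂
        subst e₁
        have hv : inV k T x := mem_Vset_iff.1 hx₁
        rcases Finset.mem_insert.1 hx₂ with h | h
        · exact hv.1.1 (h ▸ htT)
        · have := (Finset.mem_filter.1 h).2
          exact inV_not_linked hv (linked_symm this)
      · exfalso
        obtain ⟨t, htT, rfl⟩ := Finset.mem_image.1 e₁
        subst e₂
        have hv : inV k T x := mem_Vset_iff.1 hx₂
        rcases Finset.mem_insert.1 hx₁ with h | h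
        · exact hv.1.1 (h ▸ htT)
        · have := (Finset.mem_filter.1 h).2
          exact inV_not_linked hv (linked_symm this)
      · obtain ⟨t, htT, rfl⟩ := Finset.mem_image.1 e₁
        obtain ⟨t', htT', rfl⟩ := Finset.mem_image.1 e₂
        rcases Finset.mem_insert.1 hx₁ with h | h <;> rcases Finset.mem_insert.1 hx₂ with h' | h'
        · rw [← h, ← h']
        · subst h
          have hl : linked k T t' x := (Finset.mem_filter.1 h').2
          rw [blockOf_eq_pair (linked_symm hl), blockOf_eq_pair hl, Finset.pair_comm]
        · subst h'
          have hl : linked k T t x := (Finset.mem_filter.1 h).2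
          rw [blockOf_eq_pair (linked_symm hl), blockOf_eq_pair hl, Finset.pair_comm]
        · have hl : linked k T x t := linked_symm (Finset.mem_filter.1 h).2
          have hl' : linked k T x t' := linked_symm (Finset.mem_filter.1 h').2
          rw [linked_unique hl hl']
    exact key B' B hB' hB hxB' hxB

lemma gP_noncrossing : IsNonCrossing (gP k T) := by
  intro B₁ hB₁ B₂ hB₂ a ha b hb c hc d hd hab hbc hcd
  by_contra hne
  have hac : a < c := lt_trans hab hbc
  have hbd : b < d := lt_trans hbc hcd
  rcases mem_gP_cases hTm hnm hk0 hB₁ with e₁ | ⟨p, q, hpq, hrel, e₁⟩ <;>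
    rcases mem_gP_cases hTm hnm hk0 hB₂ with e₂ | ⟨p', q', hpq', hrel', e₂⟩
  · exact hne (e₁.trans e₂.symm)
  · -- B₁ = Vset, B₂ = {p', q'}
    rw [e₂] at hb hd
    obtain ⟨h1, h2⟩ := pair_mem_order hpq' hb hd hbd
    rw [h1, h2] at hrel'
    rw [e₁] at ha hc
    have hvA : inV k T a := mem_Vset_iff.1 ha
    have hvC : inV k T c := mem_Vset_iff.1 hc
    rcases hrel' with hr | hr
    · have h3 : lev T (c : ℕ) > lev T (b : ℕ) := hr.2.1 (c : ℕ) hbc (by omega)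
      have h4 := hvC.1.2 ((d : ℕ)+1) (by omega) (by omega)
      have h5 := hr.2.2
      omega
    · have h3 := hr.1.2 (a : ℕ) (by omega)
      have h4 := hvA.1.2 (b : ℕ) hab (by omega)
      omega
  · -- B₁ = {p, q}, B₂ = Vset
    rw [e₁] at ha hc
    obtain ⟨h1, h2⟩ := pair_mem_order hpq ha hc hac
    rw [h1, h2] at hrel
    rw [e₂] at hb hd
    have hvB : inV k T b := mem_Vset_iff.1 hb
    have hvD : inV k T d := mem_Vset_iff.1 hd
    rcases hrel with hr | hr
    · have h3 : lev T (b : ℕ) > lev T (a : ℕ) := hr.2.1 (b : ℕ) hab (by omega)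
      have h4 := hvB.1.2 ((c : ℕ)+1) (by omega) (by omega)
      have h5 := hr.2.2
      omega
    · have h3 := inV_lt_wrap hTm hnm hk0 hvD hr
      omega
  · -- both pairs
    rw [e₁] at ha hc
    rw [e₂] at hb hd
    obtain ⟨h1, h2⟩ := pair_mem_order hpq ha hc hac
    obtain ⟨h3, h4⟩ := pair_mem_order hpq' hb hd hbd
    rw [h1, h2] at hrel
    rw [h3, h4] at hrel'
    rcases hrel with hr | hr <;> rcases hrel' with hr' | hr'
    · have h5 : lev T (b : ℕ) > lev T (a : ℕ) := hr.2.1 (b : ℕ) hab (by omega)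
      have h6 : lev T ((c : ℕ)+1) > lev T (b : ℕ) := hr'.2.1 ((c : ℕ)+1) (by omega) (by omega)
      have h7 := hr.2.2
      omega
    · have h5 : lev T (b : ℕ) > lev T (a : ℕ) := hr.2.1 (b : ℕ) hab (by omega)
      have h6 := hr'.1.2 (a : ℕ) (by omega)
      omega
    · have h5 : lev T (c : ℕ) > lev T (b : ℕ) := hr'.2.1 (c : ℕ) hbc (by omega)
      have h6 := hr.2.1.2 ((d : ℕ)+1) (by omega) (by omega)
      have h7 := hr'.2.2
      omega
    · have h5 := pending_lev_lt hr.1 hr'.1 hab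
      have h6 := unm_lev_lt hr.2.1 hr'.2.1 hcd
      have h7 := hr.2.2
      have h8 := hr'.2.2
      omega


lemma blockOf_card {y : Fin n} (hy : y ∈ T) : (blockOf k T y).card = 2 := by
  rcases linked_total hTm hnm hk0 y with hv | ⟨x, hx⟩
  · exact absurd hy hv.1.1
  · rw [blockOf_eq_pair hx]
    rw [Finset.card_insert_of_notMem (by simp; exact fun h => not_linked_self (h ▸ hx))]
    simp

lemma blockOf_injOn {x y : Fin n} (hx : x ∈ T) (hy : y ∈ T)
    (h : blockOf k T x = blockOf k T y) : x = y := by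
  have hyx : y ∈ blockOf k T x := h ▸ Finset.mem_insert_self y _
  rcases Finset.mem_insert.1 hyx with h' | h'
  · exact h'.symm
  · have := (Finset.mem_filter.1 h').2
    exact absurd hy (linked_notMem_right hx this)

lemma Vset_notMem_image : Vset k T ∉ T.image (blockOf k T) := by
  intro h
  obtain ⟨t, htT, ht⟩ := Finset.mem_image.1 h
  have : t ∈ Vset k T := ht ▸ Finset.mem_insert_self t _
  exact (mem_Vset_iff.1 this).1.1 htT

omit hTm hnm hk0 in
lemma partition_sum {P : Finset (Finset (Fin n))} (hP : IsPartition P) :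
    ∑ B ∈ P, B.card = n := by
  classical
  have hdisj : ∀ B ∈ P, ∀ B' ∈ P, B ≠ B' → Disjoint B B' := by
    intro B hB B' hB' hne
    rw [Finset.disjoint_left]
    intro x hxB hxB'
    obtain ⟨C, _, hCuniq⟩ := hP.2 x
    exact hne ((hCuniq B ⟨hB, hxB⟩).trans (hCuniq B' ⟨hB', hxB'⟩).symm)
  have hbu : P.biUnion id = (Finset.univ : Finset (Fin n)) := by
    ext x
    simp only [Finset.mem_biUnion, id, Finset.mem_univ, iff_true]
    obtain ⟨B, ⟨hB, hxB⟩, _⟩ := hP.2 x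
    exact ⟨B, hB, hxB⟩
  have h1 := Finset.card_biUnion hdisj
  rw [show (P.biUnion fun x => x) = P.biUnion id from rfl, hbu, Finset.card_univ,
    Fintype.card_fin] at h1
  exact h1.symm

lemma gP_card_sum : (Vset k T).card + 2 * m = n := by
  have hsum := partition_sum (gP_partition hTm hnm hk0)
  unfold gP at hsum
  rw [Finset.sum_insert (Vset_notMem_image hTm hnm hk0)] at hsum
  rw [Finset.sum_image (fun x hx y hy h => blockOf_injOn hTm hnm hk0 hx hy h)] at hsum
  have h2 : ∑ y ∈ T, (blockOf k T y).card = 2 * m := by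
    rw [Finset.sum_congr rfl (fun y hy => blockOf_card hTm hnm hk0 hy)]
    simp [hTm, Nat.mul_comm]
  omega

lemma Vset_card : (Vset k T).card = k := by
  have := gP_card_sum hTm hnm hk0
  omega

lemma gP_pair_card {B : Finset (Fin n)} (hB : B ∈ gP k T) (hBV : B ≠ Vset k T) :
    B.card = 2 := by
  rcases Finset.mem_insert.1 hB with h | h
  · exact absurd h hBV
  · obtain ⟨t, htT, rfl⟩ := Finset.mem_image.1 h
    exact blockOf_card hTm hnm hk0 htT

end Main

----------------------------------------------------------------
-- Part 4 : marking map

/-- `B` spans `V` : every element of `V` lies strictly between two elements of `B`. -/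
def spans (V B : Finset (Fin n)) : Prop :=
  ∀ v ∈ V, (∃ x ∈ B, x < v) ∧ (∃ x ∈ B, v < x)

/-- the piece contributed by block `B` : its min if it spans `V`, else its max. -/
def piece (V B : Finset (Fin n)) : Finset (Fin n) :=
  if spans V B then B.filter (fun x => ∃ y ∈ B, x < y) else B.filter (fun x => ∀ y ∈ B, y ≤ x)

/-- the set of marks of a half-pairing. -/
def markSet (V : Finset (Fin n)) (P : Finset (Finset (Fin n))) : Finset (Fin n) :=
  (P.erase V).biUnion (piece V)

lemma mem_pair_iff {p q z : Fin n} : z ∈ ({p, q} : Finset (Fin n)) ↔ z = p ∨ z = q := by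
  simp [Finset.mem_insert, Finset.mem_singleton]

lemma spans_pair_iff {p q : Fin n} (hpq : p < q) (V : Finset (Fin n)) :
    spans V {p, q} ↔ ∀ v ∈ V, p < v ∧ v < q := by
  unfold spans
  constructor
  · intro h v hv
    obtain ⟨⟨x, hx, hx2⟩, ⟨y, hy, hy2⟩⟩ := h v hv
    constructor
    · rcases mem_pair_iff.1 hx with rfl | rfl
      · exact hx2
      · exact lt_trans hpq hx2
    · rcases mem_pair_iff.1 hy with rfl | rfl
      · exact lt_trans hy2 hpq
      · exact hy2
  · intro h v hv
    exact ⟨⟨p, mem_pair_iff.2 (Or.inl rfl), (h v hv).1⟩,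
      ⟨q, mem_pair_iff.2 (Or.inr rfl), (h v hv).2⟩⟩

lemma piece_pair_spans {p q : Fin n} (hpq : p < q) {V : Finset (Fin n)}
    (h : spans V {p, q}) : piece V {p, q} = {p} := by
  unfold piece
  rw [if_pos h]
  ext z
  simp only [Finset.mem_filter, Finset.mem_singleton]
  constructor
  · rintro ⟨hz1, y, hy, hy2⟩
    rcases mem_pair_iff.1 hz1 with rfl | rfl
    · rfl
    · exfalso
      rcases mem_pair_iff.1 hy with rfl | rfl
      · exact absurd (lt_trans hpq hy2) (lt_irrefl _)
      · exact absurd hy2 (lt_irrefl _)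
  · rintro rfl
    exact ⟨mem_pair_iff.2 (Or.inl rfl), q, mem_pair_iff.2 (Or.inr rfl), hpq⟩

lemma piece_pair_not_spans {p q : Fin n} (hpq : p < q) {V : Finset (Fin n)}
    (h : ¬ spans V {p, q}) : piece V {p, q} = {q} := by
  unfold piece
  rw [if_neg h]
  ext z
  simp only [Finset.mem_filter, Finset.mem_singleton]
  constructor
  · rintro ⟨hz1, h2⟩
    rcases mem_pair_iff.1 hz1 with rfl | rfl
    · exact absurd (h2 q (mem_pair_iff.2 (Or.inr rfl))) (by omega)
    · rfl
  · rintro rfl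
    refine ⟨mem_pair_iff.2 (Or.inr rfl), ?_⟩
    intro y hy
    rcases mem_pair_iff.1 hy with rfl | rfl
    · exact le_of_lt hpq
    · exact le_rfl

section Main2

variable (hTm : T.card = m) (hnm : n = k + 2 * m) (hk0 : 0 < k)
include hTm hnm hk0

lemma piece_blockOf {t : Fin n} (htT : t ∈ T) :
    piece (Vset k T) (blockOf k T t) = {t} := by
  rcases linked_total hTm hnm hk0 t with hv | ⟨x, hx⟩
  · exact absurd htT hv.1.1
  have hxT : x ∉ T := linked_notMem_right htT hx
  have hBP : blockOf k T t = {t, x} := blockOf_eq_pair hx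
  have hne : t ≠ x := fun h => not_linked_self (h ▸ hx)
  -- orient
  rcases hx with hr | hr | hr | hr
  · exact absurd htT (matchRel_notMem hr)
  · -- matchRel x t : x < t, mark is t (not spanning)
    have hlt : x < t := hr.1
    have hB2 : blockOf k T t = {x, t} := by rw [hBP, Finset.pair_comm]
    rw [hB2]
    apply piece_pair_not_spans hlt
    rw [spans_pair_iff hlt]
    intro hsp
    obtain ⟨v, hv⟩ := Vset_nonempty hTm hnm hk0
    obtain ⟨h1, h2⟩ := hsp v hv
    have hvV := mem_Vset_iff.1 hv
    have h3 : lev T (v : ℕ) > lev T (x : ℕ) := hr.2.1 (v : ℕ) h1 (by omega)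
    have h4 := hvV.1.2 ((t : ℕ)+1) (by omega) (by omega)
    have h5 := hr.2.2
    omega
  · -- wrapRel t x : t pending, t < x, mark is t (spanning)
    have hlt : t < x := wrapRel_lt hr
    rw [hBP]
    apply piece_pair_spans hlt
    rw [spans_pair_iff hlt]
    intro v hv
    have hvV := mem_Vset_iff.1 hv
    constructor
    · -- t < v
      by_contra hc
      push_neg at hc
      have hne2 : v ≠ t := fun h => hvV.1.1 (h ▸ htT)
      have hlt2 : v < t := lt_of_le_of_ne hc hne2
      have h1 := hr.1.2 (v : ℕ) (le_of_lt hlt2)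
      have h2 := hvV.1.2 (t : ℕ) hlt2 (by omega)
      omega
    · exact inV_lt_wrap hTm hnm hk0 hvV hr
  · -- wrapRel x t : x pending ∈ T, contradiction
    exact absurd hr.1.1 hxT

/-- roundtrip 1 : the marks of the constructed half-pairing recover `T`. -/
lemma markSet_gP : markSet (Vset k T) (gP k T) = T := by
  unfold markSet
  have herase : (gP k T).erase (Vset k T) = T.image (blockOf k T) := by
    unfold gP
    rw [Finset.erase_insert (Vset_notMem_image hTm hnm hk0)]
  rw [herase]
  ext z
  simp only [Finset.mem_biUnion, Finset.mem_image]
  constructor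
  · rintro ⟨B, ⟨t, htT, rfl⟩, hz⟩
    -- piece of blockOf t is {t}
    have : piece (Vset k T) (blockOf k T t) = {t} := piece_blockOf hTm hnm hk0 htT
    rw [this] at hz
    rw [Finset.mem_singleton.1 hz]
    exact htT
  · intro hz
    refine ⟨blockOf k T z, ⟨z, hz, rfl⟩, ?_⟩
    rw [piece_blockOf hTm hnm hk0 hz]
    exact Finset.mem_singleton_self z

end Main2

----------------------------------------------------------------
-- Part 5 : analysis of an arbitrary half-pairing

lemma piece_subset (V B : Finset (Fin n)) : piece V B ⊆ B := by
  unfold piece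
  split <;> exact Finset.filter_subset _ _

lemma cnt_sum_piece (V B : Finset (Fin n)) : True := trivial

lemma cnt_pair {p q : Fin n} (hpq : p ≠ q) (i : ℕ) :
    cnt ({p, q} : Finset (Fin n)) i
      = (if (p : ℕ) < i then 1 else 0) + (if (q : ℕ) < i then 1 else 0) := by
  unfold cnt
  rw [Finset.card_filter]
  rw [Finset.sum_pair hpq]

lemma cnt_singleton (p : Fin n) (i : ℕ) :
    cnt ({p} : Finset (Fin n)) i = if (p : ℕ) < i then 1 else 0 := by
  unfold cnt
  rw [Finset.card_filter, Finset.sum_singleton]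

/-- contribution of a 2-block to the level. -/
def cpair (V B : Finset (Fin n)) (i : ℕ) : ℤ :=
  (cnt B i : ℤ) - 2 * (cnt (piece V B) i : ℤ)

lemma cpair_spans {p q : Fin n} (hpq : p < q) {V : Finset (Fin n)}
    (h : spans V {p, q}) (i : ℕ) :
    cpair V {p, q} i = if (p : ℕ) < i ∧ i ≤ (q : ℕ) then -1 else 0 := by
  have hv : (p : ℕ) < (q : ℕ) := hpq
  unfold cpair
  rw [piece_pair_spans hpq h, cnt_pair (Fin.ne_of_lt hpq), cnt_singleton]
  split_ifs <;> push_cast <;> omega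

lemma cpair_not_spans {p q : Fin n} (hpq : p < q) {V : Finset (Fin n)}
    (h : ¬ spans V {p, q}) (i : ℕ) :
    cpair V {p, q} i = if (p : ℕ) < i ∧ i ≤ (q : ℕ) then 1 else 0 := by
  have hv : (p : ℕ) < (q : ℕ) := hpq
  unfold cpair
  rw [piece_pair_not_spans hpq h, cnt_pair (Fin.ne_of_lt hpq), cnt_singleton]
  split_ifs <;> push_cast <;> omega

section Analysis

variable {P : Finset (Finset (Fin n))} {V : Finset (Fin n)}
variable (hP : IsPartition P) (hNC : IsNonCrossing P) (hV : V ∈ P) (hVk : V.card = k)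
  (hB2 : ∀ B ∈ P, B ≠ V → B.card = 2) (hnm : n = k + 2 * m) (hk0 : 0 < k)

include hP

lemma part_disjoint {B B' : Finset (Fin n)} (hB : B ∈ P) (hB' : B' ∈ P) (hne : B ≠ B') :
    Disjoint B B' := by
  rw [Finset.disjoint_left]
  intro x hxB hxB'
  obtain ⟨C, _, hCuniq⟩ := hP.2 x
  exact hne ((hCuniq B ⟨hB, hxB⟩).trans (hCuniq B' ⟨hB', hxB'⟩).symm)

lemma part_unique {B B' : Finset (Fin n)} {x : Fin n} (hB : B ∈ P) (hB' : B' ∈ P)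
    (hxB : x ∈ B) (hxB' : x ∈ B') : B = B' := by
  by_contra hne
  exact (Finset.disjoint_left.1 (part_disjoint hP hB hB' hne)) hxB hxB'

include hB2 in
lemma pair_rep {B : Finset (Fin n)} (hB : B ∈ P) (hBV : B ≠ V) :
    ∃ p q : Fin n, p < q ∧ B = {p, q} := by
  obtain ⟨x, y, hxy, hB'⟩ := Finset.card_eq_two.1 (hB2 B hB hBV)
  rcases Ne.lt_or_gt hxy with h | h
  · exact ⟨x, y, h, hB'⟩
  · exact ⟨y, x, h, by rw [hB', Finset.pair_comm]⟩

include hNC hV in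
/-- dichotomy: a 2-block either spans all of `V` or contains none of it. -/
lemma spans_dichotomy {p q : Fin n} (hpq : p < q) (hBP : ({p, q} : Finset (Fin n)) ∈ P)
    (hBV : ({p, q} : Finset (Fin n)) ≠ V) :
    spans V {p, q} ∨ ∀ v ∈ V, ¬(p < v ∧ v < q) := by
  by_cases hsp : spans V {p, q}
  · exact Or.inl hsp
  right
  rintro v hv ⟨h1, h2⟩
  apply hsp
  rw [spans_pair_iff hpq]
  intro w hw
  by_contra hcon
  -- w outside (p,q) ; w ≠ p,q since blocks disjoint
  have hwp : w ≠ p := by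
    rintro rfl
    exact (Finset.disjoint_left.1 (part_disjoint hP hV hBP (Ne.symm hBV))) hw
      (mem_pair_iff.2 (Or.inl rfl))
  have hwq : w ≠ q := by
    rintro rfl
    exact (Finset.disjoint_left.1 (part_disjoint hP hV hBP (Ne.symm hBV))) hw
      (mem_pair_iff.2 (Or.inr rfl))
  push_neg at hcon
  have hor : w < p ∨ q < w := by
    by_cases h : p < w
    · right
      have := hcon h
      rcases lt_or_eq_of_le (le_of_not_gt (fun hh => absurd this (not_le_of_gt hh))) with
        h' | h'
      · omega
      · omega
    · left
      omega
  rcases hor with h | h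
  · -- w < p < v < q : crossing V vs B
    exact hBV.symm (hNC V hV {p, q} hBP w hw p (mem_pair_iff.2 (Or.inl rfl)) v hv q
      (mem_pair_iff.2 (Or.inr rfl)) h h1 h2) |>.elim
  · -- p < v < q < w
    exact hBV (hNC {p, q} hBP V hV p (mem_pair_iff.2 (Or.inl rfl)) v hv q
      (mem_pair_iff.2 (Or.inr rfl)) w hw h1 h2 h) |>.elim

include hNC in
/-- pairs do not cross. -/
lemma pairs_no_cross {p q p' q' : Fin n} (hB : ({p, q} : Finset (Fin n)) ∈ P)
    (hB' : ({p', q'} : Finset (Fin n)) ∈ P)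
    (h1 : p < p') (h2 : p' < q) (h3 : q < q') : ({p, q} : Finset (Fin n)) = {p', q'} := by
  exact hNC {p, q} hB {p', q'} hB' p (mem_pair_iff.2 (Or.inl rfl)) p'
    (mem_pair_iff.2 (Or.inl rfl)) q (mem_pair_iff.2 (Or.inr rfl)) q'
    (mem_pair_iff.2 (Or.inr rfl)) h1 h2 h3

include hV in
/-- the key level-decomposition formula. -/
lemma lev_markSet (i : ℕ) (hi : i ≤ n) :
    lev (markSet V P) i = (cnt V i : ℤ) + ∑ B ∈ P.erase V, cpair V B i := by
  classical
  have hdisj : ∀ B ∈ P, ∀ B' ∈ P, B ≠ B' → Disjoint B B' :=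
    fun B hB B' hB' hne => part_disjoint hP hB hB' hne
  -- cnt univ i = ∑ B ∈ P, cnt B i
  have hbu : P.biUnion id = (Finset.univ : Finset (Fin n)) := by
    ext x
    simp only [Finset.mem_biUnion, id, Finset.mem_univ, iff_true]
    obtain ⟨B, ⟨hB, hxB⟩, _⟩ := hP.2 x
    exact ⟨B, hB, hxB⟩
  have h1 : cnt (Finset.univ : Finset (Fin n)) i = ∑ B ∈ P, cnt B i := by
    unfold cnt
    rw [← hbu, Finset.filter_biUnion]
    simp only [id]
    rw [Finset.card_biUnion
      (fun B hB B' hB' hne => Finset.disjoint_filter_filter (hdisj B hB B' hB' hne))]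
  -- cnt T i = ∑ B ∈ P.erase V, cnt (piece V B) i
  have h2 : cnt (markSet V P) i = ∑ B ∈ P.erase V, cnt (piece V B) i := by
    unfold cnt markSet
    rw [Finset.filter_biUnion, Finset.card_biUnion
      (fun B hB B' hB' hne => Finset.disjoint_filter_filter
        (Finset.disjoint_of_subset_left (piece_subset V B)
          (Finset.disjoint_of_subset_right (piece_subset V B')
            (hdisj B (Finset.mem_of_mem_erase hB) B' (Finset.mem_of_mem_erase hB') hne))))]
  have h3 : ∑ B ∈ P, cnt B i = cnt V i + ∑ B ∈ P.erase V, cnt B i :=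
    (Finset.add_sum_erase P (fun B => cnt B i) hV).symm
  have h4 : ∑ B ∈ P.erase V, cpair V B i
      = (∑ B ∈ P.erase V, (cnt B i : ℤ)) - 2 * ∑ B ∈ P.erase V, (cnt (piece V B) i : ℤ) := by
    unfold cpair
    rw [Finset.sum_sub_distrib, Finset.mul_sum]
  unfold lev
  rw [h1, h2, h3, h4]
  push_cast
  ring



omit hP in
lemma spans_val' {a b : Fin n} (hab : a < b) (hsp : spans V ({a, b} : Finset (Fin n))) :
    ∀ v ∈ V, (a : ℕ) < (v : ℕ) ∧ (v : ℕ) < (b : ℕ) := by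
  intro v hv
  exact (spans_pair_iff hab V).1 hsp v hv

include hNC hV in
lemma not_spans_val' {a b : Fin n} (hab : a < b) (hBm : ({a, b} : Finset (Fin n)) ∈ P)
    (hBV : ({a, b} : Finset (Fin n)) ≠ V)
    (hnsp : ¬ spans V ({a, b} : Finset (Fin n))) :
    ∀ v ∈ V, ¬((a : ℕ) < (v : ℕ) ∧ (v : ℕ) < (b : ℕ)) := by
  rcases spans_dichotomy hP hNC hV hab hBm hBV with h | h
  · exact absurd h hnsp
  · intro v hv hcon
    exact h v hv ⟨hcon.1, hcon.2⟩

include hNC in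
lemma no_crossV {a b p q : Fin n} (hB : ({a, b} : Finset (Fin n)) ∈ P)
    (hB' : ({p, q} : Finset (Fin n)) ∈ P) (hne : ({p, q} : Finset (Fin n)) ≠ {a, b})
    (h1 : (a : ℕ) < (p : ℕ)) (h2 : (p : ℕ) < (b : ℕ)) (h3 : (b : ℕ) < (q : ℕ)) : False := by
  exact hne ((pairs_no_cross hP hNC hB hB' h1 h2 h3).symm)

lemma pair_disj_vals {a b p q : Fin n} (hB : ({a, b} : Finset (Fin n)) ∈ P)
    (hB' : ({p, q} : Finset (Fin n)) ∈ P) (hne : ({p, q} : Finset (Fin n)) ≠ {a, b}) :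
    (p : ℕ) ≠ (a : ℕ) ∧ (p : ℕ) ≠ (b : ℕ) ∧ (q : ℕ) ≠ (a : ℕ) ∧ (q : ℕ) ≠ (b : ℕ) := by
  have hd : Disjoint ({p, q} : Finset (Fin n)) ({a, b} : Finset (Fin n)) :=
    part_disjoint hP hB' hB hne
  have hp := Finset.disjoint_left.1 hd (mem_pair_iff.2 (Or.inl rfl))
  have hq := Finset.disjoint_left.1 hd (mem_pair_iff.2 (Or.inr rfl))
  refine ⟨?_, ?_, ?_, ?_⟩ <;> intro h
  · exact hp (mem_pair_iff.2 (Or.inl (Fin.ext h)))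
  · exact hp (mem_pair_iff.2 (Or.inr (Fin.ext h)))
  · exact hq (mem_pair_iff.2 (Or.inl (Fin.ext h)))
  · exact hq (mem_pair_iff.2 (Or.inr (Fin.ext h)))

include hV in
lemma V_disj_vals {a b : Fin n} (hB : ({a, b} : Finset (Fin n)) ∈ P)
    (hBV : ({a, b} : Finset (Fin n)) ≠ V) {v : Fin n} (hv : v ∈ V) :
    (v : ℕ) ≠ (a : ℕ) ∧ (v : ℕ) ≠ (b : ℕ) := by
  have hd : Disjoint V ({a, b} : Finset (Fin n)) := part_disjoint hP hV hB (Ne.symm hBV)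
  have h := Finset.disjoint_left.1 hd hv
  constructor <;> intro heq
  · exact h (mem_pair_iff.2 (Or.inl (Fin.ext heq)))
  · exact h (mem_pair_iff.2 (Or.inr (Fin.ext heq)))

section Blocks

variable {a b : Fin n} (hab : a < b) (hBm : ({a, b} : Finset (Fin n)) ∈ P)
  (hBV : ({a, b} : Finset (Fin n)) ≠ V)

include hNC hV hVk hB2 hk0 hab hBm hBV

/-- other-block comparison when `{a,b}` does not span, on `(a, b+1]`, upward. -/
lemma Y1 (hnsp : ¬ spans V ({a, b} : Finset (Fin n))) {B : Finset (Fin n)}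
    (hB : B ∈ P.erase V) (hBne : B ≠ {a, b}) (j : ℕ) (hj1 : (a : ℕ) < j)
    (hj2 : j ≤ (b : ℕ) + 1) : cpair V B (a : ℕ) ≤ cpair V B j := by
  obtain ⟨p, q, hpq, rfl⟩ := pair_rep hP hB2 (Finset.mem_of_mem_erase hB)
    (Finset.ne_of_mem_erase hB)
  have hpq' : (p : ℕ) < q := hpq
  have hab' : (a : ℕ) < b := hab
  have hBP' : ({p, q} : Finset (Fin n)) ∈ P := Finset.mem_of_mem_erase hB
  obtain ⟨hd1, hd2, hd3, hd4⟩ := pair_disj_vals hP hBm hBP' hBne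
  by_cases hsp' : spans V ({p, q} : Finset (Fin n))
  · have key : ((p : ℕ) < j ∧ j ≤ (q : ℕ)) → ((p : ℕ) < (a : ℕ) ∧ (a : ℕ) ≤ (q : ℕ)) := by
      rintro ⟨hpj, hjq⟩
      refine ⟨?_, by omega⟩
      by_contra hcon
      push_neg at hcon
      have hap : (a : ℕ) < p := by omega
      have hpb : (p : ℕ) < b := by omega
      obtain ⟨v₀, hv₀⟩ := Finset.card_pos.1 (show 0 < V.card by omega)
      obtain ⟨hv1, hv2⟩ := spans_val' hpq hsp' v₀ hv₀
      have hnv := not_spans_val' hP hNC hV hab hBm hBV hnsp v₀ hv₀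
      obtain ⟨hvb1, hvb2⟩ := V_disj_vals hP hV hBm hBV hv₀
      have hvb : (b : ℕ) < v₀ := by omega
      exact no_crossV hP hNC hBm hBP' hBne hap hpb (by omega)
    simp only [cpair_spans hpq hsp']
    by_cases h2 : ((p : ℕ) < j ∧ j ≤ (q : ℕ))
    · rw [if_pos h2, if_pos (key h2)]
    · rw [if_neg h2]
      split_ifs <;> omega
  · have key : ((p : ℕ) < (a : ℕ) ∧ (a : ℕ) ≤ (q : ℕ)) → ((p : ℕ) < j ∧ j ≤ (q : ℕ)) := by
      rintro ⟨hpa, haq⟩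
      refine ⟨by omega, ?_⟩
      have hqb : (b : ℕ) < q := by
        by_contra hcon
        push_neg at hcon
        have h3 : (q : ℕ) < b := by omega
        have h4 : (a : ℕ) < q := by omega
        exact no_crossV hP hNC hBP' hBm (fun h => hBne h.symm) hpa h4 h3
      omega
    simp only [cpair_not_spans hpq hsp']
    by_cases h1 : ((p : ℕ) < (a : ℕ) ∧ (a : ℕ) ≤ (q : ℕ))
    · rw [if_pos h1, if_pos (key h1)]
    · rw [if_neg h1]
      split_ifs <;> omega

/-- other-block comparison when `{a,b}` does not span, at `b+1`, downward. -/
lemma Y2 (hnsp : ¬ spans V ({a, b} : Finset (Fin n))) {B : Finset (Fin n)}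
    (hB : B ∈ P.erase V) (hBne : B ≠ {a, b}) :
    cpair V B ((b : ℕ) + 1) ≤ cpair V B (a : ℕ) := by
  obtain ⟨p, q, hpq, rfl⟩ := pair_rep hP hB2 (Finset.mem_of_mem_erase hB)
    (Finset.ne_of_mem_erase hB)
  have hpq' : (p : ℕ) < q := hpq
  have hab' : (a : ℕ) < b := hab
  have hBP' : ({p, q} : Finset (Fin n)) ∈ P := Finset.mem_of_mem_erase hB
  obtain ⟨hd1, hd2, hd3, hd4⟩ := pair_disj_vals hP hBm hBP' hBne
  by_cases hsp' : spans V ({p, q} : Finset (Fin n))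
  · -- span B' : str a → str (b+1)
    have key : ((p : ℕ) < (a : ℕ) ∧ (a : ℕ) ≤ (q : ℕ)) →
        ((p : ℕ) < (b : ℕ) + 1 ∧ (b : ℕ) + 1 ≤ (q : ℕ)) := by
      rintro ⟨hpa, haq⟩
      refine ⟨by omega, ?_⟩
      by_contra hcon
      push_neg at hcon
      have hqb : (q : ℕ) < b := by omega
      have haq' : (a : ℕ) < q := by omega
      obtain ⟨v₀, hv₀⟩ := Finset.card_pos.1 (show 0 < V.card by omega)
      obtain ⟨hv1, hv2⟩ := spans_val' hpq hsp' v₀ hv₀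
      have hnv := not_spans_val' hP hNC hV hab hBm hBV hnsp v₀ hv₀
      obtain ⟨hvb1, hvb2⟩ := V_disj_vals hP hV hBm hBV hv₀
      have hva : (v₀ : ℕ) < a := by omega
      exact no_crossV hP hNC hBP' hBm (fun h => hBne h.symm) (by omega) haq' hqb
    simp only [cpair_spans hpq hsp']
    by_cases h1 : ((p : ℕ) < (a : ℕ) ∧ (a : ℕ) ≤ (q : ℕ))
    · rw [if_pos h1, if_pos (key h1)]
    · rw [if_neg h1]
      split_ifs <;> omega
  · -- nonspan B' : str (b+1) → str a
    have key : ((p : ℕ) < (b : ℕ) + 1 ∧ (b : ℕ) + 1 ≤ (q : ℕ)) →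
        ((p : ℕ) < (a : ℕ) ∧ (a : ℕ) ≤ (q : ℕ)) := by
      rintro ⟨hpb, hbq⟩
      refine ⟨?_, by omega⟩
      by_contra hcon
      push_neg at hcon
      have hap : (a : ℕ) < p := by omega
      exact no_crossV hP hNC hBm hBP' hBne hap (by omega) (by omega)
    simp only [cpair_not_spans hpq hsp']
    by_cases h2 : ((p : ℕ) < (b : ℕ) + 1 ∧ (b : ℕ) + 1 ≤ (q : ℕ))
    · rw [if_pos h2, if_pos (key h2)]
    · rw [if_neg h2]
      split_ifs <;> omega

/-- other-block comparison when `{a,b}` spans, for `j ≤ a`. -/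
lemma Y3 (hsp : spans V ({a, b} : Finset (Fin n))) {B : Finset (Fin n)}
    (hB : B ∈ P.erase V) (hBne : B ≠ {a, b}) (j : ℕ) (hj : j ≤ (a : ℕ)) :
    cpair V B (a : ℕ) ≤ cpair V B j := by
  obtain ⟨p, q, hpq, rfl⟩ := pair_rep hP hB2 (Finset.mem_of_mem_erase hB)
    (Finset.ne_of_mem_erase hB)
  have hpq' : (p : ℕ) < q := hpq
  have hab' : (a : ℕ) < b := hab
  have hBP' : ({p, q} : Finset (Fin n)) ∈ P := Finset.mem_of_mem_erase hB
  obtain ⟨hd1, hd2, hd3, hd4⟩ := pair_disj_vals hP hBm hBP' hBne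
  obtain ⟨v₀, hv₀⟩ := Finset.card_pos.1 (show 0 < V.card by omega)
  obtain ⟨hva, hvb⟩ := spans_val' hab hsp v₀ hv₀
  by_cases hsp' : spans V ({p, q} : Finset (Fin n))
  · -- span B' : str j → str a
    obtain ⟨hv1, hv2⟩ := spans_val' hpq hsp' v₀ hv₀
    have key : ((p : ℕ) < j ∧ j ≤ (q : ℕ)) → ((p : ℕ) < (a : ℕ) ∧ (a : ℕ) ≤ (q : ℕ)) := by
      rintro ⟨hpj, hjq⟩
      exact ⟨by omega, by omega⟩
    simp only [cpair_spans hpq hsp']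
    by_cases h2 : ((p : ℕ) < j ∧ j ≤ (q : ℕ))
    · rw [if_pos h2, if_pos (key h2)]
    · rw [if_neg h2]
      split_ifs <;> omega
  · -- nonspan B' : ¬ str a
    have hnostr : ¬((p : ℕ) < (a : ℕ) ∧ (a : ℕ) ≤ (q : ℕ)) := by
      rintro ⟨hpa, haq⟩
      have hqa : (a : ℕ) < q := by omega
      rcases Nat.lt_or_ge (q : ℕ) (b : ℕ) with h | h
      · exact no_crossV hP hNC hBP' hBm (fun h => hBne h.symm) hpa hqa h
      · have hqb : (b : ℕ) < q := by omega
        apply hsp'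
        rw [spans_pair_iff hpq]
        intro v hv
        obtain ⟨h1, h2⟩ := spans_val' hab hsp v hv
        exact ⟨show (p : ℕ) < v by omega, show (v : ℕ) < q by omega⟩
    simp only [cpair_not_spans hpq hsp']
    rw [if_neg hnostr]
    split_ifs <;> omega

/-- other-block comparison when `{a,b}` spans, for `j > b`. -/
lemma Y4 (hsp : spans V ({a, b} : Finset (Fin n))) {B : Finset (Fin n)}
    (hB : B ∈ P.erase V) (hBne : B ≠ {a, b}) (j : ℕ) (hj : (b : ℕ) < j) :
    cpair V B (b : ℕ) ≤ cpair V B j := by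
  obtain ⟨p, q, hpq, rfl⟩ := pair_rep hP hB2 (Finset.mem_of_mem_erase hB)
    (Finset.ne_of_mem_erase hB)
  have hpq' : (p : ℕ) < q := hpq
  have hab' : (a : ℕ) < b := hab
  have hBP' : ({p, q} : Finset (Fin n)) ∈ P := Finset.mem_of_mem_erase hB
  obtain ⟨hd1, hd2, hd3, hd4⟩ := pair_disj_vals hP hBm hBP' hBne
  obtain ⟨v₀, hv₀⟩ := Finset.card_pos.1 (show 0 < V.card by omega)
  obtain ⟨hva, hvb⟩ := spans_val' hab hsp v₀ hv₀
  by_cases hsp' : spans V ({p, q} : Finset (Fin n))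
  · -- span B' : str j → str b
    obtain ⟨hv1, hv2⟩ := spans_val' hpq hsp' v₀ hv₀
    have key : ((p : ℕ) < j ∧ j ≤ (q : ℕ)) → ((p : ℕ) < (b : ℕ) ∧ (b : ℕ) ≤ (q : ℕ)) := by
      rintro ⟨hpj, hjq⟩
      exact ⟨by omega, by omega⟩
    simp only [cpair_spans hpq hsp']
    by_cases h2 : ((p : ℕ) < j ∧ j ≤ (q : ℕ))
    · rw [if_pos h2, if_pos (key h2)]
    · rw [if_neg h2]
      split_ifs <;> omega
  · -- nonspan B' : ¬ str b
    have hnostr : ¬((p : ℕ) < (b : ℕ) ∧ (b : ℕ) ≤ (q : ℕ)) := by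
      rintro ⟨hpb, hbq⟩
      have hqb : (b : ℕ) < q := by omega
      rcases Nat.lt_or_ge (a : ℕ) (p : ℕ) with h | h
      · exact no_crossV hP hNC hBm hBP' hBne h hpb hqb
      · have hpa : (p : ℕ) < a := by omega
        apply hsp'
        rw [spans_pair_iff hpq]
        intro v hv
        obtain ⟨h1, h2⟩ := spans_val' hab hsp v hv
        exact ⟨show (p : ℕ) < v by omega, show (v : ℕ) < q by omega⟩
    simp only [cpair_not_spans hpq hsp']
    rw [if_neg hnostr]
    split_ifs <;> omega

/-- other-block equality at `a` and `b` when `{a,b}` spans. -/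
lemma Y5 (hsp : spans V ({a, b} : Finset (Fin n))) {B : Finset (Fin n)}
    (hB : B ∈ P.erase V) (hBne : B ≠ {a, b}) :
    cpair V B (b : ℕ) = cpair V B (a : ℕ) := by
  obtain ⟨p, q, hpq, rfl⟩ := pair_rep hP hB2 (Finset.mem_of_mem_erase hB)
    (Finset.ne_of_mem_erase hB)
  have hpq' : (p : ℕ) < q := hpq
  have hab' : (a : ℕ) < b := hab
  have hBP' : ({p, q} : Finset (Fin n)) ∈ P := Finset.mem_of_mem_erase hB
  obtain ⟨hd1, hd2, hd3, hd4⟩ := pair_disj_vals hP hBm hBP' hBne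
  obtain ⟨v₀, hv₀⟩ := Finset.card_pos.1 (show 0 < V.card by omega)
  obtain ⟨hva, hvb⟩ := spans_val' hab hsp v₀ hv₀
  by_cases hsp' : spans V ({p, q} : Finset (Fin n))
  · -- span B' : str a ↔ str b
    obtain ⟨hv1, hv2⟩ := spans_val' hpq hsp' v₀ hv₀
    have key : ((p : ℕ) < (a : ℕ) ∧ (a : ℕ) ≤ (q : ℕ)) ↔
        ((p : ℕ) < (b : ℕ) ∧ (b : ℕ) ≤ (q : ℕ)) := by
      constructor
      · rintro ⟨hpa, haq⟩
        refine ⟨by omega, ?_⟩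
        by_contra hcon
        push_neg at hcon
        have hqb : (q : ℕ) < b := by omega
        exact no_crossV hP hNC hBP' hBm (fun h => hBne h.symm) hpa (by omega) hqb
      · rintro ⟨hpb, hbq⟩
        refine ⟨?_, by omega⟩
        by_contra hcon
        push_neg at hcon
        have hap : (a : ℕ) < p := by omega
        exact no_crossV hP hNC hBm hBP' hBne hap (by omega) (by omega)
    simp only [cpair_spans hpq hsp']
    by_cases h1 : ((p : ℕ) < (a : ℕ) ∧ (a : ℕ) ≤ (q : ℕ))
    · rw [if_pos h1, if_pos (key.1 h1)]
    · rw [if_neg h1, if_neg (fun h => h1 (key.2 h))]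
  · -- nonspan B' : ¬ str a and ¬ str b
    have hnostra : ¬((p : ℕ) < (a : ℕ) ∧ (a : ℕ) ≤ (q : ℕ)) := by
      rintro ⟨hpa, haq⟩
      have hqa : (a : ℕ) < q := by omega
      rcases Nat.lt_or_ge (q : ℕ) (b : ℕ) with h | h
      · exact no_crossV hP hNC hBP' hBm (fun h => hBne h.symm) hpa hqa h
      · apply hsp'
        rw [spans_pair_iff hpq]
        intro v hv
        obtain ⟨h1, h2⟩ := spans_val' hab hsp v hv
        have hqb : (b : ℕ) < q := by omega
        exact ⟨show (p : ℕ) < v by omega, show (v : ℕ) < q by omega⟩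
    have hnostrb : ¬((p : ℕ) < (b : ℕ) ∧ (b : ℕ) ≤ (q : ℕ)) := by
      rintro ⟨hpb, hbq⟩
      have hqb : (b : ℕ) < q := by omega
      rcases Nat.lt_or_ge (a : ℕ) (p : ℕ) with h | h
      · exact no_crossV hP hNC hBm hBP' hBne h hpb hqb
      · apply hsp'
        rw [spans_pair_iff hpq]
        intro v hv
        obtain ⟨h1, h2⟩ := spans_val' hab hsp v hv
        exact ⟨show (p : ℕ) < v by omega, show (v : ℕ) < q by omega⟩
    simp only [cpair_not_spans hpq hsp']
    rw [if_neg hnostra, if_neg hnostrb]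

end Blocks

include hNC hV hVk hB2 hk0 in
/-- any block's contribution is minimized at a through string. -/
lemma Y6 {v : Fin n} (hv : v ∈ V) {B : Finset (Fin n)} (hB : B ∈ P.erase V) (j : ℕ) :
    cpair V B ((v : ℕ)) ≤ cpair V B j := by
  obtain ⟨p, q, hpq, rfl⟩ := pair_rep hP hB2 (Finset.mem_of_mem_erase hB)
    (Finset.ne_of_mem_erase hB)
  have hpq' : (p : ℕ) < q := hpq
  have hBP' : ({p, q} : Finset (Fin n)) ∈ P := Finset.mem_of_mem_erase hB
  obtain ⟨hda, hdb⟩ := V_disj_vals hP hV hBP' (Finset.ne_of_mem_erase hB) hv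
  by_cases hsp' : spans V ({p, q} : Finset (Fin n))
  · -- str v always : cpair v = -1
    obtain ⟨h1, h2⟩ := spans_val' hpq hsp' v hv
    simp only [cpair_spans hpq hsp']
    rw [if_pos (show (p : ℕ) < (v : ℕ) ∧ (v : ℕ) ≤ (q : ℕ) by omega)]
    split_ifs <;> omega
  ·
    have hnostr : ¬((p : ℕ) < (v : ℕ) ∧ (v : ℕ) ≤ (q : ℕ)) := by
      rintro ⟨h1, h2⟩
      have h3 : (v : ℕ) < q := by omega
      exact not_spans_val' hP hNC hV hpq hBP' (Finset.ne_of_mem_erase hB) hsp' v hv ⟨h1, h3⟩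
    simp only [cpair_not_spans hpq hsp']
    rw [if_neg hnostr]
    split_ifs <;> omega


section Blocks2

variable {a b : Fin n} (hab : a < b) (hBm : ({a, b} : Finset (Fin n)) ∈ P)
  (hBV : ({a, b} : Finset (Fin n)) ≠ V)

include hNC hV hVk hB2 hk0 hab hBm hBV

/-- V-contribution lemma when `{a,b}` does not span : no `v` in `[a, b]`. -/
lemma Z1 (hnsp : ¬ spans V ({a, b} : Finset (Fin n))) (j : ℕ) (hj1 : (a : ℕ) < j)
    (hj2 : j ≤ (b : ℕ) + 1) : cnt V j = cnt V (a : ℕ) := by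
  unfold cnt
  congr 1
  ext v
  simp only [Finset.mem_filter]
  constructor
  · rintro ⟨hv, hvj⟩
    refine ⟨hv, ?_⟩
    obtain ⟨hne1, hne2⟩ := V_disj_vals hP hV hBm hBV hv
    have hnv := not_spans_val' hP hNC hV hab hBm hBV hnsp v hv
    have hab' : (a : ℕ) < b := hab
    omega
  · rintro ⟨hv, hva⟩
    exact ⟨hv, by omega⟩

lemma Z2a (hsp : spans V ({a, b} : Finset (Fin n))) : cnt V (a : ℕ) = 0 := by
  unfold cnt
  rw [Finset.card_eq_zero]
  rw [Finset.filter_eq_empty_iff]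
  intro v hv
  have := (spans_val' hab hsp v hv).1
  omega

lemma Z2b (hsp : spans V ({a, b} : Finset (Fin n))) : cnt V (b : ℕ) = k := by
  unfold cnt
  rw [Finset.filter_true_of_mem (fun v hv => (spans_val' hab hsp v hv).2)]
  exact hVk

/-- other-block comparison for a through string vs. a spanning pair's opener. -/
lemma Y7 (hsp : spans V ({a, b} : Finset (Fin n))) {v : Fin n} (hv : v ∈ V)
    {B : Finset (Fin n)} (hB : B ∈ P.erase V) (hBne : B ≠ {a, b}) :
    cpair V B ((v : ℕ)) ≤ cpair V B (a : ℕ) := by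
  obtain ⟨p, q, hpq, rfl⟩ := pair_rep hP hB2 (Finset.mem_of_mem_erase hB)
    (Finset.ne_of_mem_erase hB)
  have hpq' : (p : ℕ) < q := hpq
  have hab' : (a : ℕ) < b := hab
  have hBP' : ({p, q} : Finset (Fin n)) ∈ P := Finset.mem_of_mem_erase hB
  obtain ⟨hd1, hd2, hd3, hd4⟩ := pair_disj_vals hP hBm hBP' hBne
  obtain ⟨hva, hvb⟩ := spans_val' hab hsp v hv
  obtain ⟨hvq1, hvq2⟩ := V_disj_vals hP hV hBP' (Finset.ne_of_mem_erase hB) hv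
  by_cases hsp' : spans V ({p, q} : Finset (Fin n))
  · -- cpair v = -1 ≤ cpair a
    obtain ⟨h1, h2⟩ := spans_val' hpq hsp' v hv
    simp only [cpair_spans hpq hsp']
    rw [if_pos (show (p : ℕ) < (v : ℕ) ∧ (v : ℕ) ≤ (q : ℕ) by omega)]
    split_ifs <;> omega
  · -- nonspan : cpair v = 0 = cpair a
    have hnostrv : ¬((p : ℕ) < (v : ℕ) ∧ (v : ℕ) ≤ (q : ℕ)) := by
      rintro ⟨h1, h2⟩
      have h3 : (v : ℕ) < q := by omega
      exact not_spans_val' hP hNC hV hpq hBP' (Finset.ne_of_mem_erase hB) hsp' v hv ⟨h1, h3⟩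
    have hnostra : ¬((p : ℕ) < (a : ℕ) ∧ (a : ℕ) ≤ (q : ℕ)) := by
      rintro ⟨hpa, haq⟩
      have hqa : (a : ℕ) < q := by omega
      rcases Nat.lt_or_ge (q : ℕ) (b : ℕ) with h | h
      · exact no_crossV hP hNC hBP' hBm (fun h => hBne h.symm) hpa hqa h
      · apply hsp'
        rw [spans_pair_iff hpq]
        intro w hw
        obtain ⟨g1, g2⟩ := spans_val' hab hsp w hw
        exact ⟨show (p : ℕ) < w by omega, show (w : ℕ) < q by omega⟩
    simp only [cpair_not_spans hpq hsp']
    rw [if_neg hnostrv, if_neg hnostra]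

end Blocks2

omit hP in
lemma Z3a (hVk' : V.card = k) {v : Fin n} (hv : v ∈ V) : cnt V (v : ℕ) + 1 ≤ k := by
  have h1 : V.filter (fun y : Fin n => (y : ℕ) < (v : ℕ)) ⊆ V.erase v := by
    intro x hx
    simp only [Finset.mem_filter] at hx
    exact Finset.mem_erase.2 ⟨fun h => by subst h; omega, hx.1⟩
  have h2 := Finset.card_le_card h1
  rw [Finset.card_erase_of_mem hv, hVk'] at h2
  have hk1 : 0 < k := hVk' ▸ Finset.card_pos.2 ⟨v, hv⟩
  have h4 : cnt V (v : ℕ) ≤ k - 1 := h2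
  omega

omit hP in
lemma Z3b {v : Fin n} (hv : v ∈ V) (j : ℕ) (hj : (v : ℕ) < j) :
    cnt V v + 1 ≤ cnt V j := by
  have h1 := cnt_succ V (v : ℕ) v.isLt
  have h2 : (⟨(v : ℕ), v.isLt⟩ : Fin n) = v := Fin.ext rfl
  rw [h2, if_pos hv] at h1
  have h3 := cnt_mono V (show (v : ℕ) + 1 ≤ j by omega)
  omega

section AN

variable {a b : Fin n} (hab : a < b) (hBm : ({a, b} : Finset (Fin n)) ∈ P)
  (hBV : ({a, b} : Finset (Fin n)) ≠ V)

include hNC hV hVk hB2 hk0 hab hBm hBV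

/-- non-spanning pair : interior levels are strictly higher. -/
lemma AN1 (hnsp : ¬ spans V ({a, b} : Finset (Fin n))) (j : ℕ) (hj1 : (a : ℕ) < j)
    (hj2 : j ≤ (b : ℕ)) : lev (markSet V P) (a : ℕ) < lev (markSet V P) j := by
  have hab' : (a : ℕ) < b := hab
  have hbn : (b : ℕ) < n := b.isLt
  rw [lev_markSet hP hV (a : ℕ) (by omega), lev_markSet hP hV j (by omega)]
  have hBmem : ({a, b} : Finset (Fin n)) ∈ P.erase V := Finset.mem_erase.2 ⟨hBV, hBm⟩
  rw [← Finset.add_sum_erase _ _ hBmem, ← Finset.add_sum_erase _ _ hBmem]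
  have hz : cnt V j = cnt V (a : ℕ) := Z1 hP hNC hV hVk hB2 hk0 hab hBm hBV hnsp j hj1 (by omega)
  have e1 : cpair V {a, b} (a : ℕ) = 0 := by
    rw [cpair_not_spans hab hnsp, if_neg (by omega)]
  have e2 : cpair V {a, b} j = 1 := by
    rw [cpair_not_spans hab hnsp, if_pos ⟨hj1, hj2⟩]
  have hsum : ∑ B ∈ (P.erase V).erase {a, b}, cpair V B (a : ℕ)
      ≤ ∑ B ∈ (P.erase V).erase {a, b}, cpair V B j :=
    Finset.sum_le_sum (fun B hB => Y1 hP hNC hV hVk hB2 hk0 hab hBm hBV hnsp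
      (Finset.mem_of_mem_erase hB) (Finset.ne_of_mem_erase hB) j hj1 (by omega))
  rw [hz, e1, e2]
  linarith

/-- non-spanning pair : level returns at `b+1`. -/
lemma AN2 (hnsp : ¬ spans V ({a, b} : Finset (Fin n))) :
    lev (markSet V P) ((b : ℕ) + 1) = lev (markSet V P) (a : ℕ) := by
  have hab' : (a : ℕ) < b := hab
  have hbn : (b : ℕ) < n := b.isLt
  rw [lev_markSet hP hV ((b : ℕ) + 1) (by omega), lev_markSet hP hV (a : ℕ) (by omega)]
  have hBmem : ({a, b} : Finset (Fin n)) ∈ P.erase V := Finset.mem_erase.2 ⟨hBV, hBm⟩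
  rw [← Finset.add_sum_erase _ _ hBmem, ← Finset.add_sum_erase _ _ hBmem]
  have hz : cnt V ((b : ℕ) + 1) = cnt V (a : ℕ) :=
    Z1 hP hNC hV hVk hB2 hk0 hab hBm hBV hnsp ((b : ℕ) + 1) (by omega) (by omega)
  have e1 : cpair V {a, b} (a : ℕ) = 0 := by
    rw [cpair_not_spans hab hnsp, if_neg (by omega)]
  have e2 : cpair V {a, b} ((b : ℕ) + 1) = 0 := by
    rw [cpair_not_spans hab hnsp, if_neg (by omega)]
  have hsum : ∑ B ∈ (P.erase V).erase {a, b}, cpair V B ((b : ℕ) + 1)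
      = ∑ B ∈ (P.erase V).erase {a, b}, cpair V B (a : ℕ) := by
    apply Finset.sum_congr rfl
    intro B hB
    exact le_antisymm
      (Y2 hP hNC hV hVk hB2 hk0 hab hBm hBV hnsp (Finset.mem_of_mem_erase hB)
        (Finset.ne_of_mem_erase hB))
      (Y1 hP hNC hV hVk hB2 hk0 hab hBm hBV hnsp (Finset.mem_of_mem_erase hB)
        (Finset.ne_of_mem_erase hB) ((b : ℕ) + 1) (by omega) (by omega))
  rw [hz, e1, e2, hsum]

/-- spanning pair : the opener is at a running minimum. -/
lemma AN3 (hsp : spans V ({a, b} : Finset (Fin n))) (j : ℕ) (hj : j ≤ (a : ℕ)) :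
    lev (markSet V P) (a : ℕ) ≤ lev (markSet V P) j := by
  have hab' : (a : ℕ) < b := hab
  have hbn : (b : ℕ) < n := b.isLt
  rw [lev_markSet hP hV (a : ℕ) (by omega), lev_markSet hP hV j (by omega)]
  have hBmem : ({a, b} : Finset (Fin n)) ∈ P.erase V := Finset.mem_erase.2 ⟨hBV, hBm⟩
  rw [← Finset.add_sum_erase _ _ hBmem, ← Finset.add_sum_erase _ _ hBmem]
  have hz : cnt V (a : ℕ) = 0 := Z2a hP hNC hV hVk hB2 hk0 hab hBm hBV hsp
  have e1 : cpair V {a, b} (a : ℕ) = 0 := by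
    rw [cpair_spans hab hsp, if_neg (by omega)]
  have e2 : cpair V {a, b} j = 0 := by
    rw [cpair_spans hab hsp, if_neg (by omega)]
  have hsum : ∑ B ∈ (P.erase V).erase {a, b}, cpair V B (a : ℕ)
      ≤ ∑ B ∈ (P.erase V).erase {a, b}, cpair V B j :=
    Finset.sum_le_sum (fun B hB => Y3 hP hNC hV hVk hB2 hk0 hab hBm hBV hsp
      (Finset.mem_of_mem_erase hB) (Finset.ne_of_mem_erase hB) j hj)
  rw [hz, e1, e2]
  have : (0 : ℤ) ≤ (cnt V j : ℤ) := Int.ofNat_nonneg _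
  push_cast
  linarith

/-- spanning pair : the closer's level is never matched afterwards. -/
lemma AN4 (hsp : spans V ({a, b} : Finset (Fin n))) (j : ℕ) (hj : (b : ℕ) < j)
    (hjn : j ≤ n) : lev (markSet V P) (b : ℕ) < lev (markSet V P) j := by
  have hab' : (a : ℕ) < b := hab
  have hbn : (b : ℕ) < n := b.isLt
  rw [lev_markSet hP hV (b : ℕ) (by omega), lev_markSet hP hV j (by omega)]
  have hBmem : ({a, b} : Finset (Fin n)) ∈ P.erase V := Finset.mem_erase.2 ⟨hBV, hBm⟩
  rw [← Finset.add_sum_erase _ _ hBmem, ← Finset.add_sum_erase _ _ hBmem]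
  have hz : cnt V (b : ℕ) ≤ cnt V j := cnt_mono V (by omega)
  have e1 : cpair V {a, b} (b : ℕ) = -1 := by
    rw [cpair_spans hab hsp, if_pos (by omega)]
  have e2 : cpair V {a, b} j = 0 := by
    rw [cpair_spans hab hsp, if_neg (by omega)]
  have hsum : ∑ B ∈ (P.erase V).erase {a, b}, cpair V B (b : ℕ)
      ≤ ∑ B ∈ (P.erase V).erase {a, b}, cpair V B j :=
    Finset.sum_le_sum (fun B hB => Y4 hP hNC hV hVk hB2 hk0 hab hBm hBV hsp
      (Finset.mem_of_mem_erase hB) (Finset.ne_of_mem_erase hB) j hj)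
  have hzc : (cnt V (b : ℕ) : ℤ) ≤ (cnt V j : ℤ) := by exact_mod_cast hz
  rw [e1, e2]
  linarith

/-- spanning pair : level difference between closer and opener is `k-1`. -/
lemma AN5 (hsp : spans V ({a, b} : Finset (Fin n))) :
    lev (markSet V P) (b : ℕ) = (k : ℤ) - 1 + lev (markSet V P) (a : ℕ) := by
  have hab' : (a : ℕ) < b := hab
  have hbn : (b : ℕ) < n := b.isLt
  rw [lev_markSet hP hV (b : ℕ) (by omega), lev_markSet hP hV (a : ℕ) (by omega)]
  have hBmem : ({a, b} : Finset (Fin n)) ∈ P.erase V := Finset.mem_erase.2 ⟨hBV, hBm⟩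
  rw [← Finset.add_sum_erase _ _ hBmem, ← Finset.add_sum_erase _ _ hBmem]
  have hz1 : cnt V (b : ℕ) = k := Z2b hP hNC hV hVk hB2 hk0 hab hBm hBV hsp
  have hz2 : cnt V (a : ℕ) = 0 := Z2a hP hNC hV hVk hB2 hk0 hab hBm hBV hsp
  have e1 : cpair V {a, b} (b : ℕ) = -1 := by
    rw [cpair_spans hab hsp, if_pos (by omega)]
  have e2 : cpair V {a, b} (a : ℕ) = 0 := by
    rw [cpair_spans hab hsp, if_neg (by omega)]
  have hsum : ∑ B ∈ (P.erase V).erase {a, b}, cpair V B (b : ℕ)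
      = ∑ B ∈ (P.erase V).erase {a, b}, cpair V B (a : ℕ) :=
    Finset.sum_congr rfl (fun B hB => Y5 hP hNC hV hVk hB2 hk0 hab hBm hBV hsp
      (Finset.mem_of_mem_erase hB) (Finset.ne_of_mem_erase hB))
  rw [hz1, hz2, e1, e2, hsum]
  push_cast
  ring

end AN

include hNC hV hVk hB2 hk0 in
/-- through strings: level never returns. -/
lemma AN6 {v : Fin n} (hv : v ∈ V) (j : ℕ) (hj1 : (v : ℕ) < j) (hj2 : j ≤ n) :
    lev (markSet V P) ((v : ℕ)) < lev (markSet V P) j := by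
  rw [lev_markSet hP hV ((v : ℕ)) (by omega), lev_markSet hP hV j (by omega)]
  have hz := Z3b hv j hj1
  have hsum : ∑ B ∈ P.erase V, cpair V B ((v : ℕ)) ≤ ∑ B ∈ P.erase V, cpair V B j :=
    Finset.sum_le_sum (fun B hB => Y6 hP hNC hV hVk hB2 hk0 hv hB j)
  have : (cnt V v + 1 : ℤ) ≤ (cnt V j : ℤ) := by exact_mod_cast hz
  linarith

section AN7

variable {a b : Fin n} (hab : a < b) (hBm : ({a, b} : Finset (Fin n)) ∈ P)
  (hBV : ({a, b} : Finset (Fin n)) ≠ V)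

include hNC hV hVk hB2 hk0 hab hBm hBV in
/-- through strings sit at levels well below wrap level. -/
lemma AN7 (hsp : spans V ({a, b} : Finset (Fin n))) {v : Fin n} (hv : v ∈ V) :
    lev (markSet V P) ((v : ℕ)) ≤ (k : ℤ) - 2 + lev (markSet V P) (a : ℕ) := by
  have hab' : (a : ℕ) < b := hab
  have hbn : (b : ℕ) < n := b.isLt
  obtain ⟨hva, hvb⟩ := spans_val' hab hsp v hv
  rw [lev_markSet hP hV ((v : ℕ)) (by omega), lev_markSet hP hV (a : ℕ) (by omega)]
  have hBmem : ({a, b} : Finset (Fin n)) ∈ P.erase V := Finset.mem_erase.2 ⟨hBV, hBm⟩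
  rw [← Finset.add_sum_erase _ _ hBmem, ← Finset.add_sum_erase _ _ hBmem]
  have hz1 : cnt V (v : ℕ) + 1 ≤ k := Z3a hVk hv
  have hz2 : cnt V (a : ℕ) = 0 := Z2a hP hNC hV hVk hB2 hk0 hab hBm hBV hsp
  have e1 : cpair V {a, b} ((v : ℕ)) = -1 := by
    rw [cpair_spans hab hsp, if_pos (by omega)]
  have e2 : cpair V {a, b} (a : ℕ) = 0 := by
    rw [cpair_spans hab hsp, if_neg (by omega)]
  have hsum : ∑ B ∈ (P.erase V).erase {a, b}, cpair V B ((v : ℕ))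
      ≤ ∑ B ∈ (P.erase V).erase {a, b}, cpair V B (a : ℕ) :=
    Finset.sum_le_sum (fun B hB => Y7 hP hNC hV hVk hB2 hk0 hab hBm hBV hsp hv
      (Finset.mem_of_mem_erase hB) (Finset.ne_of_mem_erase hB))
  have : (cnt V v + 1 : ℤ) ≤ (k : ℤ) := by exact_mod_cast hz1
  rw [hz2, e1, e2]
  linarith

end AN7


-- membership lemmas for the mark set
lemma mem_markSet_iff {x : Fin n} :
    x ∈ markSet V P ↔ ∃ B ∈ P.erase V, x ∈ piece V B := Finset.mem_biUnion

omit hP in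
lemma AM1 {a b : Fin n} (hab : a < b) (hBm : ({a, b} : Finset (Fin n)) ∈ P)
    (hBV : ({a, b} : Finset (Fin n)) ≠ V) (hsp : spans V ({a, b} : Finset (Fin n))) :
    a ∈ markSet V P :=
  Finset.mem_biUnion.2 ⟨{a, b}, Finset.mem_erase.2 ⟨hBV, hBm⟩,
    by rw [piece_pair_spans hab hsp]; exact Finset.mem_singleton_self a⟩

omit hP in
lemma AM1' {a b : Fin n} (hab : a < b) (hBm : ({a, b} : Finset (Fin n)) ∈ P)
    (hBV : ({a, b} : Finset (Fin n)) ≠ V) (hnsp : ¬ spans V ({a, b} : Finset (Fin n))) :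
    b ∈ markSet V P :=
  Finset.mem_biUnion.2 ⟨{a, b}, Finset.mem_erase.2 ⟨hBV, hBm⟩,
    by rw [piece_pair_not_spans hab hnsp]; exact Finset.mem_singleton_self b⟩

include hV in
lemma AM2 {v : Fin n} (hv : v ∈ V) : v ∉ markSet V P := by
  intro h
  obtain ⟨B, hB, hvB⟩ := Finset.mem_biUnion.1 h
  exact Finset.ne_of_mem_erase hB
    (part_unique hP (Finset.mem_of_mem_erase hB) hV (piece_subset V B hvB) hv)

lemma AM4 {a b : Fin n} (hab : a < b) (hBm : ({a, b} : Finset (Fin n)) ∈ P)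
    (hsp : spans V ({a, b} : Finset (Fin n))) : b ∉ markSet V P := by
  intro h
  obtain ⟨B, hB, hbB⟩ := Finset.mem_biUnion.1 h
  have hBeq : B = ({a, b} : Finset (Fin n)) :=
    part_unique hP (Finset.mem_of_mem_erase hB) hBm (piece_subset V B hbB)
      (mem_pair_iff.2 (Or.inr rfl))
  subst hBeq
  rw [piece_pair_spans hab hsp] at hbB
  have : (b : ℕ) = (a : ℕ) := congrArg Fin.val (Finset.mem_singleton.1 hbB)
  have : (a : ℕ) < b := hab
  omega

lemma AM5 {a b : Fin n} (hab : a < b) (hBm : ({a, b} : Finset (Fin n)) ∈ P)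
    (hnsp : ¬ spans V ({a, b} : Finset (Fin n))) : a ∉ markSet V P := by
  intro h
  obtain ⟨B, hB, hbB⟩ := Finset.mem_biUnion.1 h
  have hBeq : B = ({a, b} : Finset (Fin n)) :=
    part_unique hP (Finset.mem_of_mem_erase hB) hBm (piece_subset V B hbB)
      (mem_pair_iff.2 (Or.inl rfl))
  subst hBeq
  rw [piece_pair_not_spans hab hnsp] at hbB
  have : (a : ℕ) = (b : ℕ) := congrArg Fin.val (Finset.mem_singleton.1 hbB)
  have : (a : ℕ) < b := hab
  omega

include hB2 in
lemma AM3 {x : Fin n} (hx : x ∈ markSet V P) :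
    ∃ a b : Fin n, a < b ∧ ({a, b} : Finset (Fin n)) ∈ P ∧ ({a, b} : Finset (Fin n)) ≠ V ∧
      ((spans V ({a, b} : Finset (Fin n)) ∧ x = a) ∨
        (¬ spans V ({a, b} : Finset (Fin n)) ∧ x = b)) := by
  obtain ⟨B, hB, hxB⟩ := Finset.mem_biUnion.1 hx
  obtain ⟨a, b, hab, rfl⟩ := pair_rep hP hB2 (Finset.mem_of_mem_erase hB)
    (Finset.ne_of_mem_erase hB)
  refine ⟨a, b, hab, Finset.mem_of_mem_erase hB, Finset.ne_of_mem_erase hB, ?_⟩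
  by_cases hsp : spans V ({a, b} : Finset (Fin n))
  · rw [piece_pair_spans hab hsp] at hxB
    exact Or.inl ⟨hsp, Finset.mem_singleton.1 hxB⟩
  · rw [piece_pair_not_spans hab hsp] at hxB
    exact Or.inr ⟨hsp, Finset.mem_singleton.1 hxB⟩

include hV hVk hB2 hnm in
lemma AM6 : (markSet V P).card = m := by
  classical
  have hdisj : ∀ B ∈ P.erase V, ∀ B' ∈ P.erase V, B ≠ B' → Disjoint (piece V B) (piece V B') :=
    fun B hB B' hB' hne =>
      Finset.disjoint_of_subset_left (piece_subset V B)
        (Finset.disjoint_of_subset_right (piece_subset V B')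
          (part_disjoint hP (Finset.mem_of_mem_erase hB) (Finset.mem_of_mem_erase hB') hne))
  have h1 : (markSet V P).card = ∑ B ∈ P.erase V, (piece V B).card :=
    Finset.card_biUnion hdisj
  have h2 : ∀ B ∈ P.erase V, (piece V B).card = 1 := by
    intro B hB
    obtain ⟨a, b, hab, rfl⟩ := pair_rep hP hB2 (Finset.mem_of_mem_erase hB)
      (Finset.ne_of_mem_erase hB)
    by_cases hsp : spans V ({a, b} : Finset (Fin n))
    · rw [piece_pair_spans hab hsp]; exact Finset.card_singleton a
    · rw [piece_pair_not_spans hab hsp]; exact Finset.card_singleton b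
  rw [h1, Finset.sum_congr rfl h2]
  have hsum := partition_sum hP
  rw [← Finset.add_sum_erase _ _ hV] at hsum
  have h3 : ∑ B ∈ P.erase V, B.card
      = ∑ B ∈ P.erase V, 2 := Finset.sum_congr rfl
    (fun B hB => hB2 B (Finset.mem_of_mem_erase hB) (Finset.ne_of_mem_erase hB))
  rw [h3] at hsum
  rw [Finset.sum_const, smul_eq_mul] at hsum
  rw [Finset.sum_const, smul_eq_mul]
  rw [hVk] at hsum
  omega

-- relation lemmas
section AR

variable {a b : Fin n} (hab : a < b) (hBm : ({a, b} : Finset (Fin n)) ∈ P)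
  (hBV : ({a, b} : Finset (Fin n)) ≠ V)

include hNC hV hVk hB2 hk0 hab hBm hBV

lemma AR1 (hnsp : ¬ spans V ({a, b} : Finset (Fin n))) : matchRel (markSet V P) a b :=
  ⟨hab, fun j hj1 hj2 => AN1 hP hNC hV hVk hB2 hk0 hab hBm hBV hnsp j hj1 hj2,
    AN2 hP hNC hV hVk hB2 hk0 hab hBm hBV hnsp⟩

lemma AR2 (hsp : spans V ({a, b} : Finset (Fin n))) : wrapRel k (markSet V P) a b := by
  refine ⟨⟨AM1 hab hBm hBV hsp, fun j hj => AN3 hP hNC hV hVk hB2 hk0 hab hBm hBV hsp j hj⟩,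
    ⟨AM4 hP hab hBm hsp, fun j hj1 hj2 => AN4 hP hNC hV hVk hB2 hk0 hab hBm hBV hsp j hj1 hj2⟩,
    AN5 hP hNC hV hVk hB2 hk0 hab hBm hBV hsp⟩

end AR

include hNC hV hVk hB2 hk0 in
lemma AR3 {v : Fin n} (hv : v ∈ V) : inV k (markSet V P) v := by
  refine ⟨⟨AM2 hP hV hv, fun j hj1 hj2 => AN6 hP hNC hV hVk hB2 hk0 hv j hj1 hj2⟩, ?_⟩
  rintro c ⟨hcpend, hcunm, hceq⟩
  obtain ⟨a₁, b₁, hab₁, hBm₁, hBV₁, hcase⟩ := AM3 hP hB2 hcpend.1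
  rcases hcase with ⟨hsp₁, rfl⟩ | ⟨hnsp₁, rfl⟩
  · -- c = a₁, spanning : AN7 contradicts the level equation
    have h7 := AN7 hP hNC hV hVk hB2 hk0 hab₁ hBm₁ hBV₁ hsp₁ hv
    omega
  · -- c = b₁, non-spanning : cannot be pending
    have h1 := AN1 hP hNC hV hVk hB2 hk0 hab₁ hBm₁ hBV₁ hnsp₁ ((c : ℕ)) hab₁ le_rfl
    have h2 := hcpend.2 (a₁ : ℕ) (le_of_lt hab₁)
    omega

include hNC hV hVk hB2 hk0 in
lemma Vset_markSet : Vset k (markSet V P) = V := by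
  ext x
  rw [mem_Vset_iff]
  constructor
  · intro hx
    by_contra hxV
    obtain ⟨B, ⟨hB, hxB⟩, _⟩ := hP.2 x
    have hBV : B ≠ V := fun h => hxV (h ▸ hxB)
    obtain ⟨a₁, b₁, hab₁, rfl⟩ := pair_rep hP hB2 hB hBV
    rcases mem_pair_iff.1 hxB with rfl | rfl
    · -- x = a₁
      by_cases hsp : spans V ({x, b₁} : Finset (Fin n))
      · exact hx.1.1 (AM1 hab₁ hB hBV hsp)
      · have h2 := AN2 hP hNC hV hVk hB2 hk0 hab₁ hB hBV hsp
        have h3 := hx.1.2 ((b₁ : ℕ) + 1) (by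
          have : (x : ℕ) < b₁ := hab₁
          omega) (by
          have := b₁.isLt
          omega)
        omega
    · -- x = b₁
      by_cases hsp : spans V ({a₁, x} : Finset (Fin n))
      · exact hx.2 a₁ (AR2 hP hNC hV hVk hB2 hk0 hab₁ hB hBV hsp)
      · exact hx.1.1 (AM1' hab₁ hB hBV hsp)
  · exact fun hx => AR3 hP hNC hV hVk hB2 hk0 hx

include hNC hV hVk hB2 hnm hk0 in
lemma image_blockOf_markSet :
    (markSet V P).image (blockOf k (markSet V P)) = P.erase V := by
  have hTm : (markSet V P).card = m := AM6 hP hV hVk hB2 hnm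
  ext B
  simp only [Finset.mem_image]
  constructor
  · rintro ⟨t, htT, rfl⟩
    obtain ⟨a₁, b₁, hab₁, hBm₁, hBV₁, hcase⟩ := AM3 hP hB2 htT
    rcases hcase with ⟨hsp₁, rfl⟩ | ⟨hnsp₁, rfl⟩
    · have hw := AR2 hP hNC hV hVk hB2 hk0 hab₁ hBm₁ hBV₁ hsp₁
      have hl : linked k (markSet V P) t b₁ := Or.inr (Or.inr (Or.inl hw))
      rw [blockOf_eq_pair hl]
      exact Finset.mem_erase.2 ⟨hBV₁, hBm₁⟩
    · have hw := AR1 hP hNC hV hVk hB2 hk0 hab₁ hBm₁ hBV₁ hnsp₁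
      have hl : linked k (markSet V P) t a₁ := Or.inr (Or.inl hw)
      rw [blockOf_eq_pair hl, Finset.pair_comm]
      exact Finset.mem_erase.2 ⟨hBV₁, hBm₁⟩
  · intro hB
    obtain ⟨a₁, b₁, hab₁, rfl⟩ := pair_rep hP hB2 (Finset.mem_of_mem_erase hB)
      (Finset.ne_of_mem_erase hB)
    by_cases hsp : spans V ({a₁, b₁} : Finset (Fin n))
    · refine ⟨a₁, AM1 hab₁ (Finset.mem_of_mem_erase hB) (Finset.ne_of_mem_erase hB) hsp, ?_⟩
      have hw := AR2 hP hNC hV hVk hB2 hk0 hab₁ (Finset.mem_of_mem_erase hB)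
        (Finset.ne_of_mem_erase hB) hsp
      exact blockOf_eq_pair (Or.inr (Or.inr (Or.inl hw)))
    · refine ⟨b₁, AM1' hab₁ (Finset.mem_of_mem_erase hB) (Finset.ne_of_mem_erase hB) hsp, ?_⟩
      have hw := AR1 hP hNC hV hVk hB2 hk0 hab₁ (Finset.mem_of_mem_erase hB)
        (Finset.ne_of_mem_erase hB) hsp
      rw [blockOf_eq_pair (Or.inr (Or.inl hw)), Finset.pair_comm]

include hNC hV hVk hB2 hnm hk0 in
lemma gP_markSet : gP k (markSet V P) = P := by
  unfold gP
  rw [Vset_markSet hP hNC hV hVk hB2 hk0, image_blockOf_markSet hP hNC hV hVk hB2 hnm hk0]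
  exact Finset.insert_erase hV

end Analysis


end

end NC

/-- The number of non-crossing half-pairings of `[n]` with exactly `k` through
strings (i.e. `|V| = k`, `k` even and positive, all other blocks of size 2)
is `C(n, (n-k)/2)`. -/
theorem stmt_4 (n k : ℕ) (hn : Even n) (hk : Even k) (hk0 : 0 < k) (hkn : k ≤ n) :
    Nat.card {PV : Finset (Finset (Fin n)) × Finset (Fin n) //
        IsPartition PV.1 ∧ IsNonCrossing PV.1 ∧ PV.2 ∈ PV.1 ∧ PV.2.card = k ∧
        ∀ B ∈ PV.1, B ≠ PV.2 → B.card = 2}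
      = n.choose ((n - k) / 2) := by
  classical
  obtain ⟨m, hm⟩ : ∃ m, n = k + 2 * m := by
    rcases hn with ⟨p, hp⟩
    rcases hk with ⟨q, hq⟩
    exact ⟨p - q, by omega⟩
  have hm2 : (n - k) / 2 = m := by omega
  rw [hm2]
  have e : {PV : Finset (Finset (Fin n)) × Finset (Fin n) //
        IsPartition PV.1 ∧ IsNonCrossing PV.1 ∧ PV.2 ∈ PV.1 ∧ PV.2.card = k ∧
        ∀ B ∈ PV.1, B ≠ PV.2 → B.card = 2} ≃ {T : Finset (Fin n) // T.card = m} := by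
    refine
      { toFun := fun PV => ⟨NC.markSet PV.1.2 PV.1.1,
          NC.AM6 PV.2.1 PV.2.2.2.1 PV.2.2.2.2.1 PV.2.2.2.2.2 hm⟩,
        invFun := fun T => ⟨(NC.gP k T.1, NC.Vset k T.1),
          NC.gP_partition T.2 hm hk0, NC.gP_noncrossing T.2 hm hk0,
          Finset.mem_insert_self _ _, NC.Vset_card T.2 hm hk0,
          fun B hB hBV => NC.gP_pair_card T.2 hm hk0 hB hBV⟩,
        left_inv := ?_,
        right_inv := ?_ }
    · rintro ⟨⟨P, V⟩, hP, hNC, hV, hVk, hB2⟩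
      apply Subtype.ext
      show (NC.gP k (NC.markSet V P), NC.Vset k (NC.markSet V P)) = (P, V)
      rw [NC.gP_markSet hP hNC hV hVk hB2 hm hk0, NC.Vset_markSet hP hNC hV hVk hB2 hk0]
    · rintro ⟨T, hT⟩
      apply Subtype.ext
      show NC.markSet (NC.Vset k T) (NC.gP k T) = T
      exact NC.markSet_gP hT hm hk0
  rw [Nat.card_congr e, Nat.card_eq_fintype_card, Fintype.card_finset_len, Fintype.card_fin]
end

section
/- The number of non-crossing partitions of [n] having exactly one block of size k (for even k > 2) and all other blocks of size 2 is binomial(n, (n+k)/2). -/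
open Finset


section Toolkit
variable {n : ℕ} [NeZero n]

/-- cyclic distance from `a` to `b` going upward. -/
def cr (a b : Fin n) : ℕ := (b - a).val

lemma cr_spec (a z : Fin n) :
    (z.val = a.val + cr a z ∨ z.val + n = a.val + cr a z) ∧ cr a z < n ∧
      (cr a z = 0 ↔ a.val = z.val) := by
  have ha := a.is_lt
  have hz := z.is_lt
  have h : cr a z = (n - a.val + z.val) % n := by
    simp [cr, Fin.sub_def]
  have hn : 0 < n := Nat.pos_of_ne_zero (NeZero.ne n)
  rcases Nat.lt_or_ge (n - a.val + z.val) n with h1 | h1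
  · rw [Nat.mod_eq_of_lt h1] at h
    constructor
    · omega
    constructor
    · omega
    · omega
  · rw [Nat.mod_eq_sub_mod h1, Nat.mod_eq_of_lt (by omega)] at h
    refine ⟨by omega, by omega, by omega⟩

/-- `z` lies strictly inside the cyclic arc from `a` (upward) to `b`. -/
def InArc (a b z : Fin n) : Prop := 0 < cr a z ∧ cr a z < cr a b

lemma arc_total {a b : Fin n} (hab : a ≠ b) (z : Fin n) (hza : z ≠ a) (hzb : z ≠ b)
    (h : ¬ InArc a b z) : InArc b a z := by
  have q0 : a.val ≠ b.val := fun he => hab (Fin.ext he)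
  obtain ⟨e1, f1, -⟩ := cr_spec a b
  obtain ⟨e2, f2, g2⟩ := cr_spec a z
  obtain ⟨e3, f3, g3⟩ := cr_spec b z
  obtain ⟨e4, f4, -⟩ := cr_spec b a
  have w1 := a.is_lt
  have w2 := b.is_lt
  have w3 := z.is_lt
  have q1 : a.val ≠ z.val := fun he => hza (Fin.ext he.symm)
  have q2 : b.val ≠ z.val := fun he => hzb (Fin.ext he.symm)
  have h0 : 0 < cr a z := by
    rcases Nat.eq_zero_or_pos (cr a z) with h0 | h0
    · exact absurd (g2.mp h0) q1
    · exact h0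
  have h0' : 0 < cr b z := by
    rcases Nat.eq_zero_or_pos (cr b z) with h0' | h0'
    · exact absurd (g3.mp h0') q2
    · exact h0'
  have hge : cr a b ≤ cr a z := by
    by_contra hlt
    exact h ⟨h0, by omega⟩
  exact ⟨h0', by omega⟩

lemma cross {P : Finset (Finset (Fin n))}
    (hnc : ∀ B₁ ∈ P, ∀ B₂ ∈ P, ∀ a ∈ B₁, ∀ b ∈ B₂, ∀ c ∈ B₁, ∀ d ∈ B₂,
      a < b → b < c → c < d → B₁ = B₂)
    {B₁ B₂ : Finset (Fin n)} (hB₁ : B₁ ∈ P) (hB₂ : B₂ ∈ P)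
    {a b c d : Fin n} (ha : a ∈ B₁) (hc : c ∈ B₁) (hb : b ∈ B₂) (hd : d ∈ B₂)
    (h1 : 0 < cr a b) (h2 : cr a b < cr a c) (h3 : cr a c < cr a d) : B₁ = B₂ := by
  obtain ⟨sb, ltb, -⟩ := cr_spec a b
  obtain ⟨sc, ltc, -⟩ := cr_spec a c
  obtain ⟨sd, ltd, -⟩ := cr_spec a d
  have hav := a.is_lt
  have hbv := b.is_lt
  have hcv := c.is_lt
  have hdv := d.is_lt
  rcases sb with sb | sb
  · rcases sc with sc | sc
    · rcases sd with sd | sd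
      · -- nothing wraps : a < b < c < d
        exact hnc B₁ hB₁ B₂ hB₂ a ha b hb c hc d hd
          (Fin.lt_def.mpr (by omega)) (Fin.lt_def.mpr (by omega))
          (Fin.lt_def.mpr (by omega))
      · -- d wraps : d < a < b < c
        exact (hnc B₂ hB₂ B₁ hB₁ d hd a ha b hb c hc
          (Fin.lt_def.mpr (by omega)) (Fin.lt_def.mpr (by omega))
          (Fin.lt_def.mpr (by omega))).symm
    · rcases sd with sd | sd
      · omega
      · -- c, d wrap : c < d < a < b
        exact hnc B₁ hB₁ B₂ hB₂ c hc d hd a ha b hb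
          (Fin.lt_def.mpr (by omega)) (Fin.lt_def.mpr (by omega))
          (Fin.lt_def.mpr (by omega))
  · rcases sc with sc | sc
    · omega
    · rcases sd with sd | sd
      · omega
      · -- b, c, d wrap : b < c < d < a
        exact (hnc B₂ hB₂ B₁ hB₁ b hb c hc d hd a ha
          (Fin.lt_def.mpr (by omega)) (Fin.lt_def.mpr (by omega))
          (Fin.lt_def.mpr (by omega))).symm

lemma exists_succ {S V : Finset (Fin n)} (hSV : S ⊆ V) (hS : S.Nonempty)
    (hVS : (V \ S).Nonempty) :
    ∃ s ∈ S, ∃ t ∈ V, t ∉ S ∧ s ≠ t ∧ ∀ z ∈ V, ¬ InArc s t z := by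
  have hne : (S ×ˢ (V \ S)).Nonempty := hS.product hVS
  obtain ⟨⟨s, t⟩, hmem, hmin⟩ :=
    Finset.exists_min_image _ (fun q => cr q.1 q.2) hne
  rw [Finset.mem_product] at hmem
  obtain ⟨hs, ht⟩ := hmem
  rw [Finset.mem_sdiff] at ht
  refine ⟨s, hs, t, ht.1, ht.2, ?_, ?_⟩
  · rintro rfl; exact ht.2 hs
  · rintro z hz ⟨hz1, hz2⟩
    by_cases hzS : z ∈ S
    · -- then (z, t) is a smaller pair
      have hmem' : (z, t) ∈ S ×ˢ (V \ S) := by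
        rw [Finset.mem_product, Finset.mem_sdiff]; exact ⟨hzS, ht.1, ht.2⟩
      have := hmin _ hmem'
      simp only at this
      -- cr z t < cr s t
      obtain ⟨e1, f1, -⟩ := cr_spec s z
      obtain ⟨e2, f2, -⟩ := cr_spec s t
      obtain ⟨e3, f3, g3⟩ := cr_spec z t
      have w1 := s.is_lt
      have w2 := t.is_lt
      have w3 := z.is_lt
      have hzt : z.val ≠ t.val := by
        intro he
        exact ht.2 (by rwa [Fin.ext he] at hzS)
      have : 0 < cr z t := by
        rcases Nat.eq_zero_or_pos (cr z t) with h0 | h0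
        · exact absurd (g3.mp h0) hzt
        · exact h0
      omega
    · have hmem' : (s, z) ∈ S ×ˢ (V \ S) := by
        rw [Finset.mem_product, Finset.mem_sdiff]; exact ⟨hs, hz, hzS⟩
      have := hmin _ hmem'
      simp only at this
      omega




lemma cr_pos {a z : Fin n} (h : a ≠ z) : 0 < cr a z := by
  obtain ⟨-, -, g⟩ := cr_spec a z
  rcases Nat.eq_zero_or_pos (cr a z) with h0 | h0
  · exact absurd (Fin.ext (g.mp h0)) h
  · exact h0

lemma cr_inj {a z w : Fin n} (h : cr a z = cr a w) : z = w := by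
  obtain ⟨e1, f1, -⟩ := cr_spec a z
  obtain ⟨e2, f2, -⟩ := cr_spec a w
  have w1 := a.is_lt
  have w2 := z.is_lt
  have w3 := w.is_lt
  exact Fin.ext (by omega)

def Valid (k : ℕ) (V : Finset (Fin n)) (P : Finset (Finset (Fin n))) : Prop :=
  (∀ B ∈ P, B ⊆ V) ∧
  (∀ x ∈ V, ∃ B ∈ P, x ∈ B) ∧
  (∀ B₁ ∈ P, ∀ B₂ ∈ P, ∀ x, x ∈ B₁ → x ∈ B₂ → B₁ = B₂) ∧
  (∀ B₁ ∈ P, ∀ B₂ ∈ P, ∀ a ∈ B₁, ∀ b ∈ B₂, ∀ c ∈ B₁, ∀ d ∈ B₂,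
      a < b → b < c → c < d → B₁ = B₂) ∧
  (∃ K ∈ P, K.card = k ∧ ∀ B ∈ P, B ≠ K → B.card = 2)

def IsMark (P : Finset (Finset (Fin n))) (x : Fin n) : Prop :=
  ∃ B ∈ P, B.card = 2 ∧ x ∈ B ∧ ∃ y ∈ B, y ≠ x ∧
    ∀ C ∈ P, C.card ≠ 2 → ∀ κ ∈ C, ¬ InArc x y κ

noncomputable def marks (P : Finset (Finset (Fin n))) : Finset (Fin n) := by
  classical exact univ.filter (IsMark P)

lemma mem_marks {P : Finset (Finset (Fin n))} {x : Fin n} :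
    x ∈ marks P ↔ IsMark P x := by
  simp [marks]

lemma pair_other {C : Finset (Fin n)} {t : Fin n} (h2 : C.card = 2) (ht : t ∈ C) :
    ∃ t', t' ≠ t ∧ C = {t, t'} := by
  obtain ⟨x, y, hxy, rfl⟩ := Finset.card_eq_two.mp h2
  rcases Finset.mem_insert.mp ht with rfl | ht
  · exact ⟨y, fun h => hxy h.symm, rfl⟩
  · rw [Finset.mem_singleton] at ht
    subst ht
    exact ⟨x, hxy, by rw [Finset.pair_comm]⟩

lemma big_unique {k : ℕ} {V P} (hk2 : 2 < k) (hV : Valid (n := n) k V P)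
    {K : Finset (Fin n)} (hK : K ∈ P) (hKc : K.card = k)
    (hsz : ∀ B ∈ P, B ≠ K → B.card = 2)
    {C : Finset (Fin n)} (hC : C ∈ P) (hC2 : C.card ≠ 2) : C = K := by
  by_contra h
  exact hC2 (hsz C hC h)

lemma pair_mark {k : ℕ} {V P} (hk2 : 2 < k) (hV : Valid (n := n) k V P)
    {B : Finset (Fin n)} (hB : B ∈ P) (h2 : B.card = 2) : ∃ x ∈ B, IsMark P x := by
  obtain ⟨hsub, hcov, hdisj, hnc, K, hK, hKc, hsz⟩ := hV
  obtain ⟨a, b, hab, rfl⟩ := Finset.card_eq_two.mp h2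
  have hBK : ({a, b} : Finset (Fin n)) ≠ K := by
    intro h
    rw [← h] at hKc
    omega
  by_cases hcase : ∀ κ ∈ K, ¬ InArc a b κ
  · refine ⟨a, by simp, {a, b}, hB, h2, by simp, b, by simp, hab.symm, ?_⟩
    intro C hC hC2 κ hκ
    have hCK : C = K := by
      by_contra h; exact hC2 (hsz C hC h)
    exact hcase κ (hCK ▸ hκ)
  · push_neg at hcase
    obtain ⟨κ₁, hκ₁, harc1⟩ := hcase
    refine ⟨b, by simp, {a, b}, hB, h2, by simp, a, by simp, hab, ?_⟩
    intro C hC hC2 κ hκ hbad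
    have hCK : C = K := by
      by_contra h; exact hC2 (hsz C hC h)
    subst hCK
    -- hbad : InArc b a κ ; derive cr a κ > cr a b
    obtain ⟨hb1, hb2⟩ := hbad
    obtain ⟨ha1, ha2⟩ := harc1
    have h3 : cr a b < cr a κ := by
      obtain ⟨e1, f1, -⟩ := cr_spec a b
      obtain ⟨e2, f2, -⟩ := cr_spec a κ
      obtain ⟨e3, f3, -⟩ := cr_spec b κ
      obtain ⟨e4, f4, -⟩ := cr_spec b a
      have w1 := a.is_lt
      have w2 := b.is_lt
      have w3 := κ.is_lt
      omega
    have := cross hnc hB hK (by simp : a ∈ ({a,b} : Finset (Fin n)))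
      (by simp : b ∈ ({a,b} : Finset (Fin n))) hκ₁ hκ ha1 ha2 h3
    exact absurd this hBK
-- end Defs

lemma adj_pair_mem {k : ℕ} {V : Finset (Fin n)} {P : Finset (Finset (Fin n))}
    (hk2 : 2 < k) (hV : Valid (n := n) k V P)
    {s t : Fin n} (hs : s ∈ marks P) (ht : t ∈ V) (htm : t ∉ marks P)
    (hst : s ≠ t) (harc : ∀ z ∈ V, ¬ InArc s t z) : ({s, t} : Finset (Fin n)) ∈ P := by
  obtain ⟨hsub, hcov, hdisj, hnc, K, hK, hKc, hsz⟩ := hV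
  obtain ⟨B, hB, hB2, hsB, s', hs'B, hs's, hcond⟩ := mem_marks.mp hs
  have hss' : s ≠ s' := fun h => hs's h.symm
  have hBeq : B = {s, s'} := by
    refine (Finset.eq_of_subset_of_card_le ?_ ?_).symm
    · intro x hx
      rcases Finset.mem_insert.mp hx with rfl | hx
      · exact hsB
      · rw [Finset.mem_singleton] at hx; exact hx ▸ hs'B
    · rw [hB2, Finset.card_insert_of_notMem (by simpa using hss'), Finset.card_singleton]
  by_cases hts' : s' = t
  · rw [hBeq, hts'] at hB; exact hB
  have hs'V : s' ∈ V := hsub B hB hs'B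
  have hstpos : 0 < cr s t := cr_pos hst
  have hstlt : cr s t < cr s s' := by
    have h1 := harc s' hs'V
    have h2 : 0 < cr s s' := cr_pos hss'
    have h4 : cr s t ≠ cr s s' := fun h => hts' (cr_inj h).symm
    by_contra hle
    exact h1 ⟨h2, by omega⟩
  obtain ⟨C, hC, htC⟩ := hcov t ht
  by_cases hC2 : C.card = 2
  case neg =>
    have hCK : C = K := by by_contra h; exact hC2 (hsz C hC h)
    exact absurd ⟨hstpos, hstlt⟩ (hcond C hC hC2 t htC)
  case pos =>
  obtain ⟨t', ht't, hCeq⟩ := pair_other hC2 htC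
  have ht'C : t' ∈ C := by rw [hCeq]; simp
  have hBC : B ≠ C := by
    intro h
    rw [← h, hBeq] at htC
    rcases Finset.mem_insert.mp htC with h' | h'
    · exact hst h'.symm
    · rw [Finset.mem_singleton] at h'; exact hts' h'.symm
  have hsC : s ∉ C := fun hx => hBC (hdisj B hB C hC s hsB hx)
  have hs'C : s' ∉ C := fun hx => hBC (hdisj B hB C hC s' hs'B hx)
  have ht's : t' ≠ s := fun h => hsC (h ▸ ht'C)
  have ht's' : t' ≠ s' := fun h => hs'C (h ▸ ht'C)
  -- the mark of C is t'
  obtain ⟨x, hxC, hxM⟩ := pair_mark hk2 ⟨hsub, hcov, hdisj, hnc, K, hK, hKc, hsz⟩ hC hC2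
  have hxt' : x = t' := by
    rw [hCeq] at hxC
    rcases Finset.mem_insert.mp hxC with rfl | hx
    · exact absurd (mem_marks.mpr hxM) htm
    · exact Finset.mem_singleton.mp hx
  rw [hxt'] at hxM
  obtain ⟨C'', hC'', hC''2, ht'C'', y, hyC'', hyt', hcond'⟩ := hxM
  have hC''C : C'' = C := hdisj C'' hC'' C hC t' ht'C'' ht'C
  rw [hC''C] at hyC''
  have hyeq : y = t := by
    rw [hCeq] at hyC''
    rcases Finset.mem_insert.mp hyC'' with rfl | hy
    · rfl
    · rw [Finset.mem_singleton] at hy; exact absurd hy hyt'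
  rw [hyeq] at hcond'
  -- a member of the big block
  obtain ⟨κ, hκK⟩ : K.Nonempty := Finset.card_pos.mp (by omega)
  have hBK : B ≠ K := fun h => by rw [h, hKc] at hB2; omega
  have hCK : C ≠ K := fun h => by rw [h, hKc] at hC2; omega
  have hκB : κ ∉ B := fun hx => hBK (hdisj B hB K hK κ hx hκK)
  have hκC : κ ∉ C := fun hx => hCK (hdisj C hC K hK κ hx hκK)
  have hκs : κ ≠ s := fun h => hκB (h ▸ hsB)
  have hκs' : κ ≠ s' := fun h => hκB (h ▸ hs'B)
  have hκt : κ ≠ t := fun h => hκC (h ▸ htC)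
  have hκt' : κ ≠ t' := fun h => hκC (h ▸ ht'C)
  have hKbig : K.card ≠ 2 := by omega
  have hκss' : ¬ InArc s s' κ := hcond K hK hKbig κ hκK
  have hκt't : ¬ InArc t' t κ := hcond' K hK hKbig κ hκK
  have ht'V : t' ∈ V := hsub C hC ht'C
  have harct' : ¬ InArc s t t' := harc t' ht'V
  -- κ is beyond s' as seen from s
  have hκfar : cr s s' < cr s κ := by
    have h2 : 0 < cr s κ := cr_pos (fun h => hκs h.symm)
    have h4 : cr s κ ≠ cr s s' := fun h => hκs' (cr_inj h)
    by_contra hle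
    exact hκss' ⟨h2, by omega⟩
  rcases lt_trichotomy (cr s t') (cr s t) with hlt | heq | hgt
  · exact (harct' ⟨cr_pos (fun h => ht's h.symm), hlt⟩).elim
  · exact (ht't (cr_inj heq)).elim
  rcases lt_trichotomy (cr s t') (cr s s') with hlt2 | heq2 | hgt2
  · -- κ lies in the arc from t' to t : contradiction
    refine (hκt't ⟨cr_pos (fun h => hκt' h.symm), ?_⟩).elim
    obtain ⟨e1, f1, -⟩ := cr_spec s t
    obtain ⟨e2, f2, -⟩ := cr_spec s s'
    obtain ⟨e3, f3, -⟩ := cr_spec s t'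
    obtain ⟨e4, f4, -⟩ := cr_spec s κ
    obtain ⟨e5, f5, -⟩ := cr_spec t' κ
    obtain ⟨e6, f6, -⟩ := cr_spec t' t
    have w1 := s.is_lt
    have w2 := t.is_lt
    have w3 := s'.is_lt
    have w4 := t'.is_lt
    have w5 := κ.is_lt
    omega
  · exact (ht's' (cr_inj heq2)).elim
  · exact (hBC (cross hnc hB hC hsB (hBeq ▸ (by simp : s' ∈ ({s, s'} : Finset (Fin n)))) htC ht'C hstpos hstlt hgt2)).elim

lemma pair_card {s t : Fin n} (hst : s ≠ t) : ({s, t} : Finset (Fin n)).card = 2 := by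
  rw [Finset.card_insert_of_notMem (by simpa using hst), Finset.card_singleton]

lemma valid_erase {k : ℕ} {V : Finset (Fin n)} {P : Finset (Finset (Fin n))}
    (hk2 : 2 < k) (hV : Valid (n := n) k V P) {s t : Fin n} (hst : s ≠ t)
    (hmem : ({s, t} : Finset (Fin n)) ∈ P) :
    Valid (n := n) k (V \ {s, t}) (P.erase {s, t}) := by
  obtain ⟨hsub, hcov, hdisj, hnc, K, hK, hKc, hsz⟩ := hV
  refine ⟨?_, ?_, ?_, ?_, ?_⟩
  · intro B hB
    have hBP := Finset.mem_of_mem_erase hB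
    have hBne := Finset.ne_of_mem_erase hB
    intro x hx
    rw [Finset.mem_sdiff]
    refine ⟨hsub B hBP hx, fun hx2 => hBne ?_⟩
    exact hdisj B hBP _ hmem x hx hx2
  · intro x hx
    rw [Finset.mem_sdiff] at hx
    obtain ⟨B, hB, hxB⟩ := hcov x hx.1
    refine ⟨B, Finset.mem_erase.mpr ⟨fun h => hx.2 (h ▸ hxB), hB⟩, hxB⟩
  · intro B₁ h₁ B₂ h₂ x hx1 hx2
    exact hdisj B₁ (Finset.mem_of_mem_erase h₁) B₂ (Finset.mem_of_mem_erase h₂) x hx1 hx2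
  · intro B₁ h₁ B₂ h₂ a ha b hb c hc d hd h1 h2 h3
    exact hnc B₁ (Finset.mem_of_mem_erase h₁) B₂ (Finset.mem_of_mem_erase h₂) a ha b hb c hc d hd h1 h2 h3
  · have hKne : K ≠ ({s, t} : Finset (Fin n)) := by
      intro h
      rw [h, pair_card hst] at hKc
      omega
    refine ⟨K, Finset.mem_erase.mpr ⟨hKne, hK⟩, hKc, ?_⟩
    intro B hB hBK
    exact hsz B (Finset.mem_of_mem_erase hB) hBK

lemma valid_insert {k : ℕ} {V : Finset (Fin n)} {P' : Finset (Finset (Fin n))}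
    {s t : Fin n} (hk2 : 2 < k) (hV : Valid (n := n) k (V \ {s, t}) P')
    (hsV : s ∈ V) (htV : t ∈ V) (hst : s ≠ t)
    (harc : ∀ z ∈ V, ¬ InArc s t z) :
    Valid (n := n) k V (insert {s, t} P') := by
  obtain ⟨hsub, hcov, hdisj, hnc, K, hK, hKc, hsz⟩ := hV
  have hsubV : ∀ B ∈ P', B ⊆ V \ {s, t} := hsub
  have hnotin : ∀ B ∈ P', s ∉ B ∧ t ∉ B := by
    intro B hB
    constructor
    · intro h
      have := hsub B hB h
      rw [Finset.mem_sdiff] at this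
      exact this.2 (by simp)
    · intro h
      have := hsub B hB h
      rw [Finset.mem_sdiff] at this
      exact this.2 (by simp)
  refine ⟨?_, ?_, ?_, ?_, ?_⟩
  · intro B hB
    rcases Finset.mem_insert.mp hB with rfl | hB
    · intro x hx
      rcases Finset.mem_insert.mp hx with rfl | hx
      · exact hsV
      · rw [Finset.mem_singleton] at hx; exact hx ▸ htV
    · exact (hsub B hB).trans (Finset.sdiff_subset)
  · intro x hx
    by_cases hx2 : x ∈ ({s, t} : Finset (Fin n))
    · exact ⟨{s, t}, Finset.mem_insert_self _ _, hx2⟩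
    · obtain ⟨B, hB, hxB⟩ := hcov x (Finset.mem_sdiff.mpr ⟨hx, hx2⟩)
      exact ⟨B, Finset.mem_insert_of_mem hB, hxB⟩
  · intro B₁ h₁ B₂ h₂ x hx1 hx2
    rcases Finset.mem_insert.mp h₁ with he₁ | hm₁
    · rcases Finset.mem_insert.mp h₂ with he₂ | hm₂
      · rw [he₁, he₂]
      · exfalso
        rw [he₁] at hx1
        rcases Finset.mem_insert.mp hx1 with heq | heq
        · exact (hnotin B₂ hm₂).1 (heq ▸ hx2)
        · rw [Finset.mem_singleton] at heq
          exact (hnotin B₂ hm₂).2 (heq ▸ hx2)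
    · rcases Finset.mem_insert.mp h₂ with he₂ | hm₂
      · exfalso
        rw [he₂] at hx2
        rcases Finset.mem_insert.mp hx2 with heq | heq
        · exact (hnotin B₁ hm₁).1 (heq ▸ hx1)
        · rw [Finset.mem_singleton] at heq
          exact (hnotin B₁ hm₁).2 (heq ▸ hx1)
      · exact hdisj B₁ hm₁ B₂ hm₂ x hx1 hx2
  · intro B₁ h₁ B₂ h₂ a ha b hb c hc d hd h1 h2 h3
    have hlt := fun (x y : Fin n) (h : x < y) => Fin.lt_def.mp h
    rcases Finset.mem_insert.mp h₁ with rfl | h₁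
    case inl =>
      rcases Finset.mem_insert.mp h₂ with rfl | h₂
      · rfl
      -- B₁ = {s,t}, a c ∈ {s,t}, a < c
      exfalso
      have hbV : b ∈ V := ((hsub B₂ h₂).trans Finset.sdiff_subset) hb
      have hdV : d ∈ V := ((hsub B₂ h₂).trans Finset.sdiff_subset) hd
      have hac : a ≠ c := ne_of_lt (lt_trans h1 h2)
      obtain ⟨e1, f1, -⟩ := cr_spec s t
      obtain ⟨e2, f2, g2⟩ := cr_spec s b
      obtain ⟨e3, f3, g3⟩ := cr_spec s d
      have w1 := s.is_lt
      have w2 := t.is_lt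
      have w3 := b.is_lt
      have w4 := d.is_lt
      have hbs : b ≠ s := fun h => ((hnotin B₂ h₂).1 (h ▸ hb))
      have hbt : b ≠ t := fun h => ((hnotin B₂ h₂).2 (h ▸ hb))
      have hds : d ≠ s := fun h => ((hnotin B₂ h₂).1 (h ▸ hd))
      have hdt : d ≠ t := fun h => ((hnotin B₂ h₂).2 (h ▸ hd))
      have qbs : b.val ≠ s.val := fun h => hbs (Fin.ext h)
      have qbt : b.val ≠ t.val := fun h => hbt (Fin.ext h)
      have qds : d.val ≠ s.val := fun h => hds (Fin.ext h)
      have qdt : d.val ≠ t.val := fun h => hdt (Fin.ext h)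
      have ha' : a = s ∨ a = t := by
        rcases Finset.mem_insert.mp ha with rfl | h
        · exact Or.inl rfl
        · exact Or.inr (Finset.mem_singleton.mp h)
      have hc' : c = s ∨ c = t := by
        rcases Finset.mem_insert.mp hc with rfl | h
        · exact Or.inl rfl
        · exact Or.inr (Finset.mem_singleton.mp h)
      rcases ha' with rfl | rfl <;> rcases hc' with rfl | rfl
      · exact hac rfl
      · -- a = s, c = t : s < b < t, b in arc
        exact harc b hbV ⟨by omega, by
          have := hlt _ _ h1; have := hlt _ _ h2; omega⟩
      · -- a = t, c = s : t < s linearly, look at d > s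
        exact harc d hdV ⟨by omega, by
          have := hlt _ _ h1; have := hlt _ _ h2; have := hlt _ _ h3; omega⟩
      · exact hac rfl
    case inr =>
      rcases Finset.mem_insert.mp h₂ with rfl | h₂
      · -- B₂ = {s,t}, b d ∈ {s,t}
        exfalso
        have haV : a ∈ V := ((hsub B₁ h₁).trans Finset.sdiff_subset) ha
        have hcV : c ∈ V := ((hsub B₁ h₁).trans Finset.sdiff_subset) hc
        have hbd : b ≠ d := ne_of_lt (lt_trans h2 h3)
        obtain ⟨e1, f1, -⟩ := cr_spec s t
        obtain ⟨e2, f2, g2⟩ := cr_spec s a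
        obtain ⟨e3, f3, g3⟩ := cr_spec s c
        have w1 := s.is_lt
        have w2 := t.is_lt
        have w3 := a.is_lt
        have w4 := c.is_lt
        have has : a ≠ s := fun h => ((hnotin B₁ h₁).1 (h ▸ ha))
        have hat : a ≠ t := fun h => ((hnotin B₁ h₁).2 (h ▸ ha))
        have hcs : c ≠ s := fun h => ((hnotin B₁ h₁).1 (h ▸ hc))
        have hct : c ≠ t := fun h => ((hnotin B₁ h₁).2 (h ▸ hc))
        have qas : a.val ≠ s.val := fun h => has (Fin.ext h)
        have qat : a.val ≠ t.val := fun h => hat (Fin.ext h)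
        have qcs : c.val ≠ s.val := fun h => hcs (Fin.ext h)
        have qct : c.val ≠ t.val := fun h => hct (Fin.ext h)
        have hb' : b = s ∨ b = t := by
          rcases Finset.mem_insert.mp hb with rfl | h
          · exact Or.inl rfl
          · exact Or.inr (Finset.mem_singleton.mp h)
        have hd' : d = s ∨ d = t := by
          rcases Finset.mem_insert.mp hd with rfl | h
          · exact Or.inl rfl
          · exact Or.inr (Finset.mem_singleton.mp h)
        rcases hb' with rfl | rfl <;> rcases hd' with rfl | rfl
        · exact hbd rfl
        · -- b = s, d = t : s < c < t
          exact harc c hcV ⟨by omega, by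
            have := hlt _ _ h2; have := hlt _ _ h3; omega⟩
        · -- b = t, d = s : a < t < ... < s
          exact harc a haV ⟨by omega, by
            have := hlt _ _ h1; have := hlt _ _ h3; omega⟩
        · exact hbd rfl
      · exact hnc B₁ h₁ B₂ h₂ a ha b hb c hc d hd h1 h2 h3
  · have hKne : K ≠ ({s, t} : Finset (Fin n)) := by
      intro h
      rw [h, pair_card hst] at hKc
      omega
    refine ⟨K, Finset.mem_insert_of_mem hK, hKc, ?_⟩
    intro B hB hBK
    rcases Finset.mem_insert.mp hB with rfl | hB
    · exact pair_card hst
    · exact hsz B hB hBK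

lemma marks_subset {k : ℕ} {V : Finset (Fin n)} {P : Finset (Finset (Fin n))}
    (hV : Valid (n := n) k V P) : marks P ⊆ V := by
  intro x hx
  obtain ⟨B, hB, -, hxB, -⟩ := mem_marks.mp hx
  exact hV.1 B hB hxB

lemma marks_erase {k : ℕ} {V : Finset (Fin n)} {P : Finset (Finset (Fin n))}
    {s t : Fin n} (hk2 : 2 < k) (hV : Valid (n := n) k V P) (hst : s ≠ t)
    (hmem : ({s, t} : Finset (Fin n)) ∈ P) (harc : ∀ z ∈ V, ¬ InArc s t z) :
    s ∈ marks P ∧ t ∉ marks P ∧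
      marks (P.erase {s, t}) = (marks P).erase s ∧
      marks P = insert s (marks (P.erase {s, t})) := by
  obtain ⟨hsub, hcov, hdisj, hnc, K, hK, hKc, hsz⟩ := hV
  have hKpair : K ≠ ({s, t} : Finset (Fin n)) := by
    intro h; rw [h, pair_card hst] at hKc; omega
  have hKbig : K.card ≠ 2 := by omega
  have hsmem : s ∈ ({s, t} : Finset (Fin n)) := by simp
  have htmem : t ∈ ({s, t} : Finset (Fin n)) := by simp
  have hbigK : ∀ C ∈ P, C.card ≠ 2 → C = K := by
    intro C hC hC2; by_contra h; exact hC2 (hsz C hC h)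
  have hKV : K ⊆ V := hsub K hK
  obtain ⟨κ₀, hκ₀⟩ : K.Nonempty := Finset.card_pos.mp (by omega)
  have hs : s ∈ marks P := by
    rw [mem_marks]
    refine ⟨{s, t}, hmem, pair_card hst, hsmem, t, htmem, hst.symm, ?_⟩
    intro C hC hC2 κ hκ
    rw [hbigK C hC hC2] at hκ
    exact harc κ (hKV hκ)
  have ht : t ∉ marks P := by
    rw [mem_marks]
    rintro ⟨B', hB', h2', htB', y, hyB', hyt, cond⟩
    have hB'eq : B' = ({s, t} : Finset (Fin n)) := hdisj B' hB' _ hmem t htB' htmem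
    have hys : y = s := by
      rw [hB'eq] at hyB'
      rcases Finset.mem_insert.mp hyB' with h | h
      · exact h
      · rw [Finset.mem_singleton] at h; exact absurd h hyt
    rw [hys] at cond
    have hκs : κ₀ ≠ s := by
      intro h
      exact hKpair (hdisj K hK _ hmem κ₀ hκ₀ (h ▸ hsmem))
    have hκt : κ₀ ≠ t := by
      intro h
      exact hKpair (hdisj K hK _ hmem κ₀ hκ₀ (h ▸ htmem))
    exact cond K hK hKbig κ₀ hκ₀ (arc_total hst κ₀ hκs hκt (harc κ₀ (hKV hκ₀)))
  have hmain : marks (P.erase {s, t}) = (marks P).erase s := by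
    ext x
    rw [Finset.mem_erase, mem_marks, mem_marks]
    constructor
    · rintro ⟨B, hB, h2, hxB, y, hyB, hyx, cond⟩
      have hBP := Finset.mem_of_mem_erase hB
      have hBne := Finset.ne_of_mem_erase hB
      have hxs : x ≠ s := by
        intro h
        exact hBne (hdisj B hBP _ hmem x hxB (h ▸ hsmem))
      refine ⟨hxs, B, hBP, h2, hxB, y, hyB, hyx, ?_⟩
      intro C hC hC2 κ hκ
      have hCne : C ≠ ({s, t} : Finset (Fin n)) := by
        intro h; rw [h, pair_card hst] at hC2; exact hC2 rfl
      exact cond C (Finset.mem_erase.mpr ⟨hCne, hC⟩) hC2 κ hκ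
    · rintro ⟨hxs, B, hB, h2, hxB, y, hyB, hyx, cond⟩
      have hxt : x ≠ t := by
        intro h
        exact ht (h ▸ mem_marks.mpr ⟨B, hB, h2, hxB, y, hyB, hyx, cond⟩)
      have hBne : B ≠ ({s, t} : Finset (Fin n)) := by
        intro h
        rw [h] at hxB
        rcases Finset.mem_insert.mp hxB with h' | h'
        · exact hxs h'
        · rw [Finset.mem_singleton] at h'; exact hxt h'
      refine ⟨B, Finset.mem_erase.mpr ⟨hBne, hB⟩, h2, hxB, y, hyB, hyx, ?_⟩
      intro C hC hC2 κ hκ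
      exact cond C (Finset.mem_of_mem_erase hC) hC2 κ hκ
  refine ⟨hs, ht, hmain, ?_⟩
  rw [hmain, Finset.insert_erase hs]

lemma valid_no_pair {k : ℕ} {V : Finset (Fin n)} {P : Finset (Finset (Fin n))}
    (hk2 : 2 < k) (hV : Valid (n := n) k V P) (hcard : V.card = k) :
    P = {V} := by
  obtain ⟨hsub, hcov, hdisj, hnc, K, hK, hKc, hsz⟩ := hV
  have hKV : K = V := by
    apply Finset.eq_of_subset_of_card_le (hsub K hK)
    omega
  subst hKV
  apply Finset.eq_singleton_iff_unique_mem.mpr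
  refine ⟨hK, ?_⟩
  intro B hB
  by_contra hne
  have h2 := hsz B hB hne
  obtain ⟨x, hx⟩ : B.Nonempty := Finset.card_pos.mp (by omega)
  exact hne (hdisj B hB K hK x hx (hsub B hB hx))

lemma marks_singleton_big {k : ℕ} {V : Finset (Fin n)}
    (hk2 : 2 < k) (hcard : V.card = k) :
    marks ({V} : Finset (Finset (Fin n))) = ∅ := by
  ext x
  simp only [mem_marks, Finset.notMem_empty, iff_false]
  rintro ⟨B, hB, h2, -⟩
  rw [Finset.mem_singleton] at hB
  rw [hB, hcard] at h2
  omega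

lemma exists_pair_block {k p : ℕ} {V : Finset (Fin n)} {P : Finset (Finset (Fin n))}
    (hk2 : 2 < k) (hV : Valid (n := n) k V P) (hcard : V.card = k + 2 * (p + 1)) :
    ∃ B ∈ P, B.card = 2 := by
  by_contra h
  push_neg at h
  obtain ⟨hsub, hcov, hdisj, hnc, K, hK, hKc, hsz⟩ := hV
  have hall : ∀ B ∈ P, B = K := by
    intro B hB
    by_contra hne
    exact h B hB (hsz B hB hne)
  have hVK : V ⊆ K := by
    intro x hx
    obtain ⟨B, hB, hxB⟩ := hcov x hx
    exact (hall B hB) ▸ hxB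
  have := Finset.card_le_card hVK
  omega

lemma marks_nonempty_aux {k p : ℕ} {V : Finset (Fin n)} {P : Finset (Finset (Fin n))}
    (hk2 : 2 < k) (hV : Valid (n := n) k V P) (hcard : V.card = k + 2 * (p + 1)) :
    (marks P).Nonempty ∧ (V \ marks P).Nonempty := by
  obtain ⟨B, hB, h2⟩ := exists_pair_block hk2 hV hcard
  obtain ⟨x, hxB, hxM⟩ := pair_mark hk2 hV hB h2
  obtain ⟨hsub, hcov, hdisj, hnc, K, hK, hKc, hsz⟩ := hV
  obtain ⟨κ₀, hκ₀⟩ : K.Nonempty := Finset.card_pos.mp (by omega)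
  refine ⟨⟨x, mem_marks.mpr hxM⟩, κ₀, Finset.mem_sdiff.mpr ⟨hsub K hK hκ₀, ?_⟩⟩
  intro hmk
  obtain ⟨C, hC, hC2, hκC, -⟩ := mem_marks.mp hmk
  have : C = K := hdisj C hC K hK κ₀ hκC hκ₀
  rw [this, hKc] at hC2
  omega

lemma marks_card {k : ℕ} (hk2 : 2 < k) :
    ∀ (p : ℕ) (V : Finset (Fin n)) (P : Finset (Finset (Fin n))),
      V.card = k + 2 * p → Valid (n := n) k V P → (marks P).card = p := by
  intro p
  induction p with
  | zero =>
    intro V P hcard hV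
    rw [valid_no_pair hk2 hV (by omega), marks_singleton_big hk2 (by omega)]
    rfl
  | succ p ih =>
    intro V P hcard hV
    obtain ⟨hne, hVS⟩ := marks_nonempty_aux hk2 hV hcard
    obtain ⟨s, hsS, t, htV, htS, hst, harc⟩ :=
      exists_succ (marks_subset hV) hne hVS
    have hmem := adj_pair_mem hk2 hV hsS htV htS hst harc
    have hV' : Valid (n := n) k (V \ {s, t}) (P.erase {s, t}) :=
      valid_erase hk2 hV hst hmem
    have hstV : ({s, t} : Finset (Fin n)) ⊆ V := by
      intro x hx
      rcases Finset.mem_insert.mp hx with h | h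
      · exact h ▸ marks_subset hV hsS
      · rw [Finset.mem_singleton] at h; exact h ▸ htV
    have hcard' : (V \ ({s, t} : Finset (Fin n))).card = k + 2 * p := by
      rw [Finset.card_sdiff_of_subset hstV, pair_card hst]
      omega
    have hmc := ih _ _ hcard' hV'
    obtain ⟨hs, -, hmain, hins⟩ := marks_erase hk2 hV hst hmem harc
    rw [hins, Finset.card_insert_of_notMem (by rw [hmain]; simp), hmc]

lemma marks_inj {k : ℕ} (hk2 : 2 < k) :
    ∀ (p : ℕ) (V : Finset (Fin n)) (P₁ P₂ : Finset (Finset (Fin n))),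
      V.card = k + 2 * p → Valid (n := n) k V P₁ → Valid (n := n) k V P₂ →
      marks P₁ = marks P₂ → P₁ = P₂ := by
  intro p
  induction p with
  | zero =>
    intro V P₁ P₂ hcard hV₁ hV₂ _
    rw [valid_no_pair hk2 hV₁ (by omega), valid_no_pair hk2 hV₂ (by omega)]
  | succ p ih =>
    intro V P₁ P₂ hcard hV₁ hV₂ hm
    obtain ⟨hne, hVS⟩ := marks_nonempty_aux hk2 hV₁ hcard
    obtain ⟨s, hsS, t, htV, htS, hst, harc⟩ :=
      exists_succ (marks_subset hV₁) hne hVS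
    have hmem₁ := adj_pair_mem hk2 hV₁ hsS htV htS hst harc
    have hmem₂ := adj_pair_mem hk2 hV₂ (hm ▸ hsS) htV (hm ▸ htS) hst harc
    have hstV : ({s, t} : Finset (Fin n)) ⊆ V := by
      intro x hx
      rcases Finset.mem_insert.mp hx with h | h
      · exact h ▸ marks_subset hV₁ hsS
      · rw [Finset.mem_singleton] at h; exact h ▸ htV
    have hcard' : (V \ ({s, t} : Finset (Fin n))).card = k + 2 * p := by
      rw [Finset.card_sdiff_of_subset hstV, pair_card hst]
      omega
    obtain ⟨-, -, hmain₁, -⟩ := marks_erase hk2 hV₁ hst hmem₁ harc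
    obtain ⟨-, -, hmain₂, -⟩ := marks_erase hk2 hV₂ hst hmem₂ harc
    have heq := ih _ _ _ hcard' (valid_erase hk2 hV₁ hst hmem₁)
      (valid_erase hk2 hV₂ hst hmem₂) (by rw [hmain₁, hmain₂, hm])
    calc P₁ = insert {s, t} (P₁.erase {s, t}) := (Finset.insert_erase hmem₁).symm
    _ = insert {s, t} (P₂.erase {s, t}) := by rw [heq]
    _ = P₂ := Finset.insert_erase hmem₂

lemma marks_sur {k : ℕ} (hk2 : 2 < k) :
    ∀ (p : ℕ) (V : Finset (Fin n)), V.card = k + 2 * p →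
      ∀ S ⊆ V, S.card = p → ∃ P, Valid (n := n) k V P ∧ marks P = S := by
  intro p
  induction p with
  | zero =>
    intro V hcard S hSV hS
    rw [Finset.card_eq_zero] at hS
    subst hS
    refine ⟨{V}, ⟨?_, ?_, ?_, ?_, ?_⟩, marks_singleton_big hk2 (by omega)⟩
    · intro B hB
      rw [Finset.mem_singleton] at hB
      exact hB ▸ Finset.Subset.refl V
    · intro x hx
      exact ⟨V, Finset.mem_singleton_self V, hx⟩
    · intro B₁ h₁ B₂ h₂ x hx1 hx2
      rw [Finset.mem_singleton] at h₁ h₂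
      rw [h₁, h₂]
    · intro B₁ h₁ B₂ h₂ a ha b hb c hc d hd h1 h2 h3
      rw [Finset.mem_singleton] at h₁ h₂
      rw [h₁, h₂]
    · refine ⟨V, Finset.mem_singleton_self V, by omega, ?_⟩
      intro B hB hne
      rw [Finset.mem_singleton] at hB
      exact absurd hB hne
  | succ p ih =>
    intro V hcard S hSV hS
    have hSne : S.Nonempty := Finset.card_pos.mp (by omega)
    have hVSne : (V \ S).Nonempty := by
      apply Finset.card_pos.mp
      rw [Finset.card_sdiff_of_subset hSV]
      omega
    obtain ⟨s, hsS, t, htV, htS, hst, harc⟩ := exists_succ hSV hSne hVSne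
    have hsV : s ∈ V := hSV hsS
    have hstV : ({s, t} : Finset (Fin n)) ⊆ V := by
      intro x hx
      rcases Finset.mem_insert.mp hx with h | h
      · exact h ▸ hsV
      · rw [Finset.mem_singleton] at h; exact h ▸ htV
    have hcard' : (V \ ({s, t} : Finset (Fin n))).card = k + 2 * p := by
      rw [Finset.card_sdiff_of_subset hstV, pair_card hst]
      omega
    have hS'sub : S.erase s ⊆ V \ ({s, t} : Finset (Fin n)) := by
      intro x hx
      rw [Finset.mem_erase] at hx
      rw [Finset.mem_sdiff]
      refine ⟨hSV hx.2, ?_⟩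
      intro hx2
      rcases Finset.mem_insert.mp hx2 with h | h
      · exact hx.1 h
      · rw [Finset.mem_singleton] at h
        exact htS (h ▸ hx.2)
    have hS'card : (S.erase s).card = p := by
      rw [Finset.card_erase_of_mem hsS, hS]
      omega
    obtain ⟨P', hV', hm'⟩ := ih _ hcard' _ hS'sub hS'card
    have hP'ne : ({s, t} : Finset (Fin n)) ∉ P' := by
      intro h
      have := hV'.1 _ h (Finset.mem_insert_self s {t})
      rw [Finset.mem_sdiff] at this
      exact this.2 (Finset.mem_insert_self s {t})
    have hVP : Valid (n := n) k V (insert {s, t} P') :=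
      valid_insert hk2 hV' hsV htV hst harc
    refine ⟨insert {s, t} P', hVP, ?_⟩
    obtain ⟨-, -, -, hins⟩ := marks_erase hk2 hVP hst (Finset.mem_insert_self _ _) harc
    rw [hins, Finset.erase_insert hP'ne, hm', Finset.insert_erase hsS]

lemma count_lemma {k : ℕ} (hk2 : 2 < k) (p : ℕ) (V : Finset (Fin n))
    (hcard : V.card = k + 2 * p) [DecidablePred (Valid (n := n) k V)] :
    (Finset.univ.filter (Valid (n := n) k V)).card = (V.card).choose p := by
  rw [← Finset.card_powersetCard p V]
  apply Finset.card_bij (fun P _ => marks P)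
  · intro P hP
    rw [Finset.mem_filter] at hP
    rw [Finset.mem_powersetCard]
    exact ⟨marks_subset hP.2, marks_card hk2 p V P hcard hP.2⟩
  · intro P₁ h₁ P₂ h₂ hm
    rw [Finset.mem_filter] at h₁ h₂
    exact marks_inj hk2 p V P₁ P₂ hcard h₁.2 h₂.2 hm
  · intro S hSmem
    rw [Finset.mem_powersetCard] at hSmem
    obtain ⟨P, hVP, hm⟩ := marks_sur hk2 p V hcard S hSmem.1 hSmem.2
    exact ⟨P, Finset.mem_filter.mpr ⟨Finset.mem_univ P, hVP⟩, hm⟩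

end Toolkit


/-- (Kreweras) The number of non-crossing partitions of `[n]` with exactly one
block of size `k` (for even `k > 2`, `n - k` even) and all other blocks of size 2
is `C(n, (n+k)/2)`. -/
theorem stmt_5 (n k : ℕ) (hk : Even k) (hk2 : 2 < k) (hkn : k ≤ n) (hnk : Even (n - k)) :
    Nat.card {P : Finset (Finset (Fin n)) //
        IsPartition P ∧ IsNonCrossing P ∧
        ∃ B ∈ P, B.card = k ∧ ∀ B' ∈ P, B' ≠ B → B'.card = 2}
      = n.choose ((n + k) / 2) := by
  classical
  haveI : NeZero n := ⟨by omega⟩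
  obtain ⟨m, hm⟩ := hnk
  have hn : n = k + 2 * m := by omega
  have hiff : ∀ P : Finset (Finset (Fin n)),
      (IsPartition P ∧ IsNonCrossing P ∧
        ∃ B ∈ P, B.card = k ∧ ∀ B' ∈ P, B' ≠ B → B'.card = 2) ↔
      Valid (n := n) k Finset.univ P := by
    intro P
    constructor
    · rintro ⟨⟨hne, huniq⟩, hnc, K, hK, hKc, hsz⟩
      refine ⟨fun B _ => Finset.subset_univ B, ?_, ?_, hnc, K, hK, hKc, hsz⟩
      · intro x _
        obtain ⟨B, ⟨hB, hxB⟩, -⟩ := huniq x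
        exact ⟨B, hB, hxB⟩
      · intro B₁ h₁ B₂ h₂ x hx1 hx2
        exact (huniq x).unique ⟨h₁, hx1⟩ ⟨h₂, hx2⟩
    · rintro ⟨hsub, hcov, hdisj, hnc, K, hK, hKc, hsz⟩
      refine ⟨⟨?_, ?_⟩, hnc, K, hK, hKc, hsz⟩
      · intro B hB
        by_cases h : B = K
        · subst h; exact Finset.card_pos.mp (by omega)
        · exact Finset.card_pos.mp (by rw [hsz B hB h]; omega)
      · intro x
        obtain ⟨B, hB, hxB⟩ := hcov x (Finset.mem_univ x)
        exact ⟨B, ⟨hB, hxB⟩, fun C hC => hdisj C hC.1 B hB x hC.2 hxB⟩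
  have hcardU : (Finset.univ : Finset (Fin n)).card = k + 2 * m := by
    rw [Finset.card_univ, Fintype.card_fin]
    omega
  have hcount := count_lemma (n := n) hk2 m Finset.univ hcardU
  have hstep : Nat.card {P : Finset (Finset (Fin n)) //
      IsPartition P ∧ IsNonCrossing P ∧
      ∃ B ∈ P, B.card = k ∧ ∀ B' ∈ P, B' ≠ B → B'.card = 2} =
      (Finset.univ.filter (Valid (n := n) k Finset.univ)).card := by
    rw [Nat.card_congr (Equiv.subtypeEquivRight hiff), Nat.card_eq_fintype_card,
      Fintype.card_subtype]
  rw [hstep, hcount, hcardU]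
  have h2 : (n + k) / 2 = n - m := by omega
  rw [h2, Nat.choose_symm (show m ≤ n by omega)]
  congr 1
  omega
end
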